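/- arXiv:2511.13083 — 13 statements merged into one kernel-verified Lean document; each statement's English description precedes it below -/
import Mathlib

section
/- Let L₁ and L₂ be locally compact Hausdorff spaces and let T : C₀⁺(L₁) → C₀⁺(L₂) be a surjective map satisfying ‖T(f+g)‖ = ‖T(f)+T(g)‖ for all f, g ∈ C₀⁺(L₁). Then T is additive (T(f+g) = T(f) + T(g) for all f, g ∈ C₀⁺(L₁)) and positive homogeneous (T(r·f) = r·T(f) for every real r > 0 and every f ∈ C₀⁺(L₁)). -/
open scoped ZeroAtInfty
open Set

namespace StmtAux

variable {L : Type*} [TopologicalSpace L]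

lemma c0_abs_le_norm (f : C₀(L, ℝ)) (x : L) : |f x| ≤ ‖f‖ :=
  f.toBCF.norm_coe_le_norm x

lemma c0_le_norm (f : C₀(L, ℝ)) (x : L) : f x ≤ ‖f‖ :=
  (abs_le.mp (c0_abs_le_norm f x)).2

lemma c0_norm_le {f : C₀(L, ℝ)} {C : ℝ} (hC : 0 ≤ C) (h : ∀ x, |f x| ≤ C) : ‖f‖ ≤ C := by
  rw [← ZeroAtInftyContinuousMap.norm_toBCF_eq_norm]
  exact (BoundedContinuousFunction.norm_le hC).mpr h

lemma exists_bump [LocallyCompactSpace L] [T2Space L]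
    (y : L) {U : Set L} (hU : IsOpen U) (hy : y ∈ U) :
    ∃ b : C₀(L, ℝ), (∀ x, 0 ≤ b x) ∧ (∀ x, b x ≤ 1) ∧ b y = 1 ∧ tsupport ⇑b ⊆ U := by
  obtain ⟨K, hK, hyK, hKU⟩ := exists_compact_subset hU hy
  obtain ⟨f, hf1, hf0, hfc, hf01⟩ := exists_continuous_one_zero_of_isCompact
    (isCompact_singleton (x := y)) isOpen_interior.isClosed_compl
    (Set.disjoint_left.2 fun x hx hx' => hx' (by
      rw [Set.mem_singleton_iff] at hx; rw [hx]; exact hyK))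
  refine ⟨⟨f, hfc.is_zero_at_infty⟩, fun x => (hf01 x).1, fun x => (hf01 x).2, hf1 rfl, ?_⟩
  have hsupp : Function.support ⇑f ⊆ interior K := by
    intro x hx
    by_contra hxK
    exact hx (hf0 hxK)
  exact (closure_minimal (hsupp.trans interior_subset) hK.isClosed).trans hKU

end StmtAux

open StmtAux

set_option maxHeartbeats 1000000 in
theorem stmt_0 {L₁ L₂ : Type*}
    [TopologicalSpace L₁] [LocallyCompactSpace L₁] [T2Space L₁]
    [TopologicalSpace L₂] [LocallyCompactSpace L₂] [T2Space L₂]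
    (T : C₀(L₁, ℝ) → C₀(L₂, ℝ))
    (hpos : ∀ f : C₀(L₁, ℝ), (∀ x, 0 ≤ f x) → ∀ y, 0 ≤ T f y)
    (hsurj : ∀ h : C₀(L₂, ℝ), (∀ y, 0 ≤ h y) →
      ∃ f : C₀(L₁, ℝ), (∀ x, 0 ≤ f x) ∧ T f = h)
    (hnorm : ∀ f g : C₀(L₁, ℝ), (∀ x, 0 ≤ f x) → (∀ x, 0 ≤ g x) →
      ‖T (f + g)‖ = ‖T f + T g‖) :
    (∀ f g : C₀(L₁, ℝ), (∀ x, 0 ≤ f x) → (∀ x, 0 ≤ g x) →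
      T (f + g) = T f + T g) ∧
    (∀ r : ℝ, 0 < r → ∀ f : C₀(L₁, ℝ), (∀ x, 0 ≤ f x) →
      T (r • f) = r • T f) := by
  have hadd : ∀ f g : C₀(L₁, ℝ), (∀ x, 0 ≤ f x) → (∀ x, 0 ≤ g x) →
      T (f + g) = T f + T g := by
    intro f g hf hg
    have hfg : ∀ x, 0 ≤ (f + g) x := fun x => by
      simpa using add_nonneg (hf x) (hg x)
    ext y
    have key : ∀ ε : ℝ, 0 < ε →
        T (f + g) y ≤ T f y + T g y + 2 * ε ∧
        T f y + T g y ≤ T (f + g) y + 3 * ε := by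
      intro ε hε
      -- the oscillation neighborhood
      have hUopen : IsOpen ({x | |T f x - T f y| < ε} ∩ {x | |T g x - T g y| < ε} ∩
          {x | |T (f + g) x - T (f + g) y| < ε}) := by
        have o : ∀ h : C₀(L₂, ℝ), IsOpen {x | |h x - h y| < ε} := fun h =>
          isOpen_lt (((map_continuous h).sub continuous_const).abs) continuous_const
        exact ((o (T f)).inter (o (T g))).inter (o (T (f + g)))
      have hyU : y ∈ {x | |T f x - T f y| < ε} ∩ {x | |T g x - T g y| < ε} ∩
          {x | |T (f + g) x - T (f + g) y| < ε} := by
        refine ⟨⟨?_, ?_⟩, ?_⟩ <;> simpa using hε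
      obtain ⟨b, hb0, hb1, hby, hbsupp⟩ := exists_bump y hUopen hyU
      set M : ℝ := ‖T f‖ + ‖T g‖ + ‖T (f + g)‖ + ε + 1 with hM
      have hM0 : 0 < M := by positivity
      obtain ⟨u, hu, hTu⟩ := hsurj (M • b)
        (fun x => by simpa using mul_nonneg hM0.le (hb0 x))
      have hgu : ∀ x, 0 ≤ (g + u) x := fun x => by
        simpa using add_nonneg (hg x) (hu x)
      -- off-support estimate
      have hoff : ∀ z, z ∉ tsupport ⇑b → T (g + u) z ≤ ‖T g‖ := by
        intro z hz
        obtain ⟨c, hc0, hc1, hcz, hcsupp⟩ :=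
          exists_bump z (isClosed_tsupport ⇑b).isOpen_compl hz
        obtain ⟨w, hw0, hTw⟩ := hsurj (M • c)
          (fun x => by simpa using mul_nonneg hM0.le (hc0 x))
        have huw : ∀ x, 0 ≤ (u + w) x := fun x => by
          simpa using add_nonneg (hu x) (hw0 x)
        have e1 : ‖T (g + u) + M • c‖ = ‖T g + T (u + w)‖ := by
          rw [← hTw, ← hnorm (g + u) w hgu hw0, add_assoc, hnorm g (u + w) hg huw]
        have e2 : ‖T (u + w)‖ ≤ M := by
          rw [hnorm u w hu hw0, hTu, hTw]
          apply c0_norm_le hM0.le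
          intro x
          have hbx : 0 ≤ b x := hb0 x
          have hcx : 0 ≤ c x := hc0 x
          rw [abs_of_nonneg (by
            simp only [ZeroAtInftyContinuousMap.coe_add, Pi.add_apply,
              ZeroAtInftyContinuousMap.coe_smul, Pi.smul_apply, smul_eq_mul]
            positivity)]
          simp only [ZeroAtInftyContinuousMap.coe_add, Pi.add_apply,
            ZeroAtInftyContinuousMap.coe_smul, Pi.smul_apply, smul_eq_mul]
          by_cases hx : x ∈ tsupport ⇑b
          · have hcx0 : c x = 0 := image_eq_zero_of_notMem_tsupport
              (fun hcm => (hcsupp hcm) hx)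
            rw [hcx0]
            nlinarith [hb1 x]
          · have hbx0 : b x = 0 := image_eq_zero_of_notMem_tsupport hx
            rw [hbx0]
            nlinarith [hc1 x]
        have e3 : T (g + u) z + M ≤ ‖T (g + u) + M • c‖ := by
          have h := c0_le_norm (T (g + u) + M • c) z
          simpa [hcz] using h
        have e4 : ‖T g + T (u + w)‖ ≤ ‖T g‖ + ‖T (u + w)‖ := norm_add_le _ _
        linarith
      -- norm of T (g + u)
      have eqgu : ‖T (g + u)‖ = ‖T g + M • b‖ := by
        rw [← hTu]; exact hnorm g u hg hu
      have hgu_ge : T g y + M ≤ ‖T (g + u)‖ := by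
        rw [eqgu]
        have h := c0_le_norm (T g + M • b) y
        simpa [hby] using h
      have hgu_le : ‖T (g + u)‖ ≤ M + T g y + ε := by
        rw [eqgu]
        apply c0_norm_le (by linarith [hpos g hg y])
        intro x
        have hTgx : 0 ≤ T g x := hpos g hg x
        rw [abs_of_nonneg (by
          simp only [ZeroAtInftyContinuousMap.coe_add, Pi.add_apply,
            ZeroAtInftyContinuousMap.coe_smul, Pi.smul_apply, smul_eq_mul]
          exact add_nonneg hTgx (mul_nonneg hM0.le (hb0 x)))]
        simp only [ZeroAtInftyContinuousMap.coe_add, Pi.add_apply,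
          ZeroAtInftyContinuousMap.coe_smul, Pi.smul_apply, smul_eq_mul]
        by_cases hx : x ∈ tsupport ⇑b
        · have hxU := hbsupp hx
          have h1 : |T g x - T g y| < ε := hxU.1.2
          have h1 := abs_lt.mp h1
          nlinarith [hb1 x, hb0 x]
        · have hbx0 : b x = 0 := image_eq_zero_of_notMem_tsupport hx
          rw [hbx0]
          have := c0_le_norm (T g) x
          have := hpos g hg y
          simp only [mul_zero, add_zero]
          rw [hM]
          linarith [norm_nonneg (T f), norm_nonneg (T (f + g))]
      -- near-maximum point
      obtain ⟨z₀, hz₀⟩ : ∃ z, ‖T (g + u)‖ - ε < T (g + u) z := by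
        by_contra hcon
        push_neg at hcon
        have hC0 : (0:ℝ) ≤ ‖T (g + u)‖ - ε := by
          have := hpos g hg y
          rw [hM] at hgu_ge
          linarith [norm_nonneg (T f), norm_nonneg (T g), norm_nonneg (T (f + g))]
        have : ‖T (g + u)‖ ≤ ‖T (g + u)‖ - ε := by
          apply c0_norm_le hC0
          intro x
          rw [abs_of_nonneg (hpos (g + u) hgu x)]
          exact hcon x
        linarith
      have hz₀supp : z₀ ∈ tsupport ⇑b := by
        by_contra hznot
        have h1 := hoff z₀ hznot
        have h2 := hpos g hg y
        rw [hM] at hgu_ge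
        linarith [norm_nonneg (T f), norm_nonneg (T (f + g))]
      have hz₀U := hbsupp hz₀supp
      -- the central identity
      have eqA : ‖T (f + g) + M • b‖ = ‖T f + T (g + u)‖ := by
        rw [← hTu, ← hnorm (f + g) u hfg hu, add_assoc, hnorm f (g + u) hf hgu]
      have hA_ge : T (f + g) y + M ≤ ‖T (f + g) + M • b‖ := by
        have h := c0_le_norm (T (f + g) + M • b) y
        simpa [hby] using h
      have hA_le : ‖T (f + g) + M • b‖ ≤ M + T (f + g) y + ε := by
        apply c0_norm_le (by nlinarith [hpos (f + g) hfg y])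
        intro x
        have hTx : 0 ≤ T (f + g) x := hpos (f + g) hfg x
        rw [abs_of_nonneg (by
          simp only [ZeroAtInftyContinuousMap.coe_add, Pi.add_apply,
            ZeroAtInftyContinuousMap.coe_smul, Pi.smul_apply, smul_eq_mul]
          exact add_nonneg hTx (mul_nonneg hM0.le (hb0 x)))]
        simp only [ZeroAtInftyContinuousMap.coe_add, Pi.add_apply,
          ZeroAtInftyContinuousMap.coe_smul, Pi.smul_apply, smul_eq_mul]
        by_cases hx : x ∈ tsupport ⇑b
        · have hxU := hbsupp hx
          have h1 : |T (f + g) x - T (f + g) y| < ε := hxU.2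
          have h1 := abs_lt.mp h1
          nlinarith [hb1 x, hb0 x]
        · have hbx0 : b x = 0 := image_eq_zero_of_notMem_tsupport hx
          rw [hbx0]
          have := c0_le_norm (T (f + g)) x
          have := hpos (f + g) hfg y
          simp only [mul_zero, add_zero]
          rw [hM]
          linarith [norm_nonneg (T f), norm_nonneg (T g)]
      have hR_ge : T f y + T g y + M - 2 * ε ≤ ‖T f + T (g + u)‖ := by
        have h := c0_le_norm (T f + T (g + u)) z₀
        simp only [ZeroAtInftyContinuousMap.coe_add, Pi.add_apply] at h
        have h1 : |T f z₀ - T f y| < ε := hz₀U.1.1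
        have h1 := abs_lt.mp h1
        linarith
      have hR_le : ‖T f + T (g + u)‖ ≤ M + T f y + T g y + 2 * ε := by
        apply c0_norm_le (by nlinarith [hpos f hf y, hpos g hg y])
        intro x
        rw [abs_of_nonneg (by
          simp only [ZeroAtInftyContinuousMap.coe_add, Pi.add_apply]
          exact add_nonneg (hpos f hf x) (hpos (g + u) hgu x))]
        simp only [ZeroAtInftyContinuousMap.coe_add, Pi.add_apply]
        by_cases hx : x ∈ tsupport ⇑b
        · have hxU := hbsupp hx
          have h1 : |T f x - T f y| < ε := hxU.1.1
          have h1 := abs_lt.mp h1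
          have h2 := c0_le_norm (T (g + u)) x
          linarith
        · have h1 := c0_le_norm (T f) x
          have h2 := hoff x hx
          have := hpos f hf y
          have := hpos g hg y
          rw [hM]
          linarith [norm_nonneg (T (f + g))]
      constructor
      · linarith
      · linarith
    have h1 : T (f + g) y ≤ T f y + T g y := by
      apply le_of_forall_pos_le_add
      intro ε hε
      have := (key (ε / 2) (by positivity)).1
      linarith
    have h2 : T f y + T g y ≤ T (f + g) y := by
      apply le_of_forall_pos_le_add
      intro ε hε
      have := (key (ε / 3) (by positivity)).2
      linarith
    have : T (f + g) y = T f y + T g y := le_antisymm h1 h2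
    simpa using this
  refine ⟨hadd, ?_⟩
  -- monotonicity
  have hmono : ∀ f g : C₀(L₁, ℝ), (∀ x, 0 ≤ f x) → (∀ x, f x ≤ g x) →
      ∀ y, T f y ≤ T g y := by
    intro f g hf hfg y
    have hd : ∀ x, 0 ≤ (g - f) x := fun x => by
      simpa using sub_nonneg.mpr (hfg x)
    have heq : T g = T f + T (g - f) := by
      have h := hadd f (g - f) hf hd
      have : f + (g - f) = g := by abel
      rwa [this] at h
    rw [heq]
    simpa using hpos (g - f) hd y
  -- natural number homogeneity
  have hnat : ∀ f : C₀(L₁, ℝ), (∀ x, 0 ≤ f x) → ∀ n : ℕ, 0 < n →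
      T ((n : ℝ) • f) = (n : ℝ) • T f := by
    intro f hf n hn
    induction n with
    | zero => exact absurd hn (lt_irrefl 0)
    | succ k ih =>
      rcases Nat.eq_zero_or_pos k with hk | hk
      · subst hk; simp
      · have hkf : ∀ x, 0 ≤ ((k : ℝ) • f) x := fun x => by
          simpa using mul_nonneg (Nat.cast_nonneg k) (hf x)
        have hsplit : ((k + 1 : ℕ) : ℝ) • f = (k : ℝ) • f + f := by
          ext x
          simp
          ring
        have hsplit' : ((k + 1 : ℕ) : ℝ) • T f = (k : ℝ) • T f + T f := by
          ext x
          simp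
          ring
        rw [hsplit, hadd _ f hkf hf, ih hk, hsplit']
  -- rational homogeneity
  have hrat : ∀ q : ℚ, 0 < q → ∀ f : C₀(L₁, ℝ), (∀ x, 0 ≤ f x) →
      T ((q : ℝ) • f) = (q : ℝ) • T f := by
    intro q hq f hf
    have hden : (0 : ℝ) < (q.den : ℝ) := by exact_mod_cast q.pos
    have hnum' : (0 : ℤ) < q.num := Rat.num_pos.mpr hq
    have hmnum : ((q.num.toNat : ℕ) : ℝ) = ((q.num : ℤ) : ℝ) := by
      exact_mod_cast Int.toNat_of_nonneg hnum'.le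
    have hq0 : (0 : ℝ) < (q : ℝ) := by exact_mod_cast hq
    have hqf : ∀ x, 0 ≤ ((q : ℝ) • f) x := fun x => by
      simpa using mul_nonneg hq0.le (hf x)
    have keyq : (q.den : ℝ) • ((q : ℝ) • f) = ((q.num.toNat : ℕ) : ℝ) • f := by
      rw [smul_smul]
      congr 1
      rw [hmnum, Rat.cast_def]
      field_simp
    have h1 : T ((q.den : ℝ) • ((q : ℝ) • f)) = (q.den : ℝ) • T ((q : ℝ) • f) :=
      hnat _ hqf q.den q.pos
    have h2 : T (((q.num.toNat : ℕ) : ℝ) • f) = ((q.num.toNat : ℕ) : ℝ) • T f :=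
      hnat f hf q.num.toNat (by omega)
    rw [keyq, h2] at h1
    have hd0 : (q.den : ℝ) ≠ 0 := ne_of_gt hden
    calc T ((q : ℝ) • f)
        = ((q.den : ℝ)⁻¹ * (q.den : ℝ)) • T ((q : ℝ) • f) := by
          rw [inv_mul_cancel₀ hd0, one_smul]
      _ = (q.den : ℝ)⁻¹ • ((q.den : ℝ) • T ((q : ℝ) • f)) := by rw [smul_smul]
      _ = (q.den : ℝ)⁻¹ • (((q.num.toNat : ℕ) : ℝ) • T f) := by rw [← h1]
      _ = ((q.den : ℝ)⁻¹ * ((q.num.toNat : ℕ) : ℝ)) • T f := by rw [smul_smul]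
      _ = (q : ℝ) • T f := by
          congr 1
          rw [hmnum, Rat.cast_def]
          field_simp
  -- real homogeneity
  intro r hr f hf
  have hrf : ∀ x, 0 ≤ (r • f) x := fun x => by
    simpa using mul_nonneg hr.le (hf x)
  ext y
  have hgoal : (r • T f) y = r * T f y := by simp
  rw [hgoal]
  have ht : 0 ≤ T f y := hpos f hf y
  have ha : 0 ≤ T (r • f) y := hpos _ hrf y
  have hub : ∀ q : ℚ, r ≤ (q : ℝ) → T (r • f) y ≤ (q : ℝ) * T f y := by
    intro q hq
    have hq0 : (0 : ℝ) < (q : ℝ) := lt_of_lt_of_le hr hq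
    have hq0' : 0 < q := by exact_mod_cast hq0
    have hle : ∀ x, (r • f) x ≤ ((q : ℝ) • f) x := fun x => by
      simpa using mul_le_mul_of_nonneg_right hq (hf x)
    calc T (r • f) y ≤ T ((q : ℝ) • f) y := hmono _ _ hrf hle y
      _ = (q : ℝ) * T f y := by rw [hrat q hq0' f hf]; simp
  have hlb : ∀ q : ℚ, 0 < q → (q : ℝ) ≤ r → (q : ℝ) * T f y ≤ T (r • f) y := by
    intro q hq0' hq
    have hqf : ∀ x, 0 ≤ ((q : ℝ) • f) x := fun x => by
      have : (0 : ℝ) < (q : ℝ) := by exact_mod_cast hq0'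
      simpa using mul_nonneg this.le (hf x)
    have hle : ∀ x, ((q : ℝ) • f) x ≤ (r • f) x := fun x => by
      simpa using mul_le_mul_of_nonneg_right hq (hf x)
    have := hmono _ _ hqf hle y
    rwa [hrat q hq0' f hf, (by simp : ((q : ℝ) • T f) y = (q : ℝ) * T f y)] at this
  rcases eq_or_lt_of_le ht with h0 | ht0
  · obtain ⟨q, hq⟩ := exists_rat_gt r
    have h := hub q hq.le
    have h' : T (r • f) y = 0 := le_antisymm (by rw [← h0] at h; simpa using h) ha
    rw [h', ← h0, mul_zero]
  · apply le_antisymm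
    · apply le_of_forall_pos_le_add
      intro ε hε
      have hlt' : r < r + ε / T f y := by
        have h' : 0 < ε / T f y := by positivity
        linarith
      obtain ⟨q, hq1, hq2⟩ := exists_rat_btwn hlt'
      have h := hub q hq1.le
      have h2 : (q : ℝ) * T f y ≤ (r + ε / T f y) * T f y :=
        mul_le_mul_of_nonneg_right hq2.le ht
      rw [add_mul, div_mul_cancel₀ ε (ne_of_gt ht0)] at h2
      linarith
    · apply le_of_forall_pos_le_add
      intro ε hε
      have hδ : 0 < ε / T f y := by positivity
      have hlt : max (r - ε / T f y) (r / 2) < r := max_lt (by linarith) (by linarith)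
      obtain ⟨q, hq1, hq2⟩ := exists_rat_btwn hlt
      have hq0 : (0 : ℝ) < (q : ℝ) := lt_of_le_of_lt (by linarith [le_max_right (r - ε / T f y) (r / 2)]) hq1
      have hq0' : 0 < q := by exact_mod_cast hq0
      have h := hlb q hq0' hq2.le
      have h2 : r - ε / T f y < (q : ℝ) := lt_of_le_of_lt (le_max_left _ _) hq1
      have h3 : (r - ε / T f y) * T f y ≤ (q : ℝ) * T f y :=
        mul_le_mul_of_nonneg_right h2.le ht
      rw [sub_mul, div_mul_cancel₀ ε (ne_of_gt ht0)] at h3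
      linarith
end

section
/- Let K₁ and K₂ be compact Hausdorff spaces and let T : C⁺(K₁) → C⁺(K₂) be a bijective map satisfying ‖T(f+g)‖ = ‖T(f)+T(g)‖ for all f, g ∈ C⁺(K₁). Then there exists a homeomorphism τ : K₂ → K₁ such that T(f)(ξ) = T(1)(ξ)·f(τ(ξ)) for all f ∈ C⁺(K₁) and all ξ ∈ K₂, where 1 denotes the constant function one on K₁. -/
open Set

section Helpers
variable {K : Type*} [TopologicalSpace K] [CompactSpace K]
private lemma SNA.eval_le_norm (f : C(K, ℝ)) (x : K) : f x ≤ ‖f‖ :=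
  le_trans (le_abs_self _) (by simpa [Real.norm_eq_abs] using f.norm_coe_le_norm x)
private lemma SNA.norm_le_of (f : C(K, ℝ)) {c : ℝ} (hc : 0 ≤ c) (h : ∀ x, |f x| ≤ c) : ‖f‖ ≤ c := by
  rw [ContinuousMap.norm_le _ hc]
  simpa [Real.norm_eq_abs] using h
private lemma SNA.norm_le_of' (f : C(K, ℝ)) {c : ℝ} (hpos : ∀ x, 0 ≤ f x) (hc : 0 ≤ c)
    (h : ∀ x, f x ≤ c) : ‖f‖ ≤ c :=
  SNA.norm_le_of f hc fun x => by rw [abs_of_nonneg (hpos x)]; exact h x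
private lemma SNA.exists_bump [T2Space K] {U : Set K} (hU : IsOpen U) {x : K} (hx : x ∈ U) :
    ∃ p : C(K, ℝ), p x = 1 ∧ (∀ z, 0 ≤ p z) ∧ (∀ z, p z ≤ 1) ∧ ∀ z ∉ U, p z = 0 := by
  obtain ⟨p, h0, h1, hI⟩ := exists_continuous_zero_one_of_isClosed hU.isClosed_compl
    (isClosed_singleton (x := x))
    (by
      rw [disjoint_left]
      rintro a ha rfl
      exact ha hx)
  exact ⟨p, h1 rfl, fun z => (hI z).1, fun z => (hI z).2, fun z hz => h0 hz⟩
private lemma SNA.exists_max [Nonempty K] (f : C(K, ℝ)) : ∃ x, ∀ y, f y ≤ f x := by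
  obtain ⟨x, -, hx⟩ := isCompact_univ.exists_isMaxOn univ_nonempty f.continuous.continuousOn
  exact ⟨x, fun y => hx (mem_univ y)⟩
private lemma SNA.exists_min [Nonempty K] (f : C(K, ℝ)) : ∃ x, ∀ y, f x ≤ f y := by
  obtain ⟨x, -, hx⟩ := isCompact_univ.exists_isMinOn univ_nonempty f.continuous.continuousOn
  exact ⟨x, fun y => hx (mem_univ y)⟩
private lemma SNA.norm_eq_max [Nonempty K] (f : C(K, ℝ)) (hpos : ∀ x, 0 ≤ f x) :
    ∃ x, ‖f‖ = f x ∧ ∀ y, f y ≤ f x := by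
  obtain ⟨x, hx⟩ := SNA.exists_max f
  refine ⟨x, le_antisymm (SNA.norm_le_of' f hpos (hpos x) hx) (SNA.eval_le_norm f x), hx⟩
private lemma SNA.norm_const' [Nonempty K] {c : ℝ} (hc : 0 ≤ c) :
    ‖ContinuousMap.const K c‖ = c := by
  apply le_antisymm
  · rw [ContinuousMap.norm_le _ hc]
    intro x
    simpa [Real.norm_eq_abs] using (abs_of_nonneg hc).le
  · have := (ContinuousMap.const K c).norm_coe_le_norm (Classical.arbitrary K)
    simpa [Real.norm_eq_abs, abs_of_nonneg hc] using this
end Helpers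

set_option linter.unusedSectionVars false

section TMaps
variable {K₁ K₂ : Type*}
    [TopologicalSpace K₁] [CompactSpace K₁] [T2Space K₁]
    [TopologicalSpace K₂] [CompactSpace K₂] [T2Space K₂]
    (T : C(K₁, ℝ) → C(K₂, ℝ))

private lemma SNA.T_zero
    (hnorm : ∀ f g : C(K₁, ℝ), (∀ x, 0 ≤ f x) → (∀ x, 0 ≤ g x) →
      ‖T (f + g)‖ = ‖T f + T g‖) : T 0 = 0 := by
  have h := hnorm 0 0 (fun x => by simp) (fun x => by simp)
  rw [add_zero] at h
  have h2 : ‖T 0 + T 0‖ = 2 * ‖T 0‖ := by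
    rw [← two_smul ℝ (T 0), norm_smul]
    simp
  have : ‖T 0‖ = 0 := by linarith [h, h2]
  exact norm_eq_zero.mp this

private lemma SNA.key_C1 [Nonempty K₂]
    (hpos : ∀ f : C(K₁, ℝ), (∀ x, 0 ≤ f x) → ∀ ξ, 0 ≤ T f ξ)
    (hsurj : ∀ h : C(K₂, ℝ), (∀ ξ, 0 ≤ h ξ) →
      ∃ f : C(K₁, ℝ), (∀ x, 0 ≤ f x) ∧ T f = h)
    (hnorm : ∀ f g : C(K₁, ℝ), (∀ x, 0 ≤ f x) → (∀ x, 0 ≤ g x) →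
      ‖T (f + g)‖ = ‖T f + T g‖)
    (a b : C(K₁, ℝ)) (ha : ∀ x, 0 ≤ a x) (hb : ∀ x, 0 ≤ b x) (ζ : K₂) :
    T (a + b) ζ ≤ ‖T a‖ + T b ζ := by
  set m := ‖T b‖ with hm
  set k' : C(K₂, ℝ) := ContinuousMap.const K₂ m - T b with hk'
  have k'pos : ∀ ξ, 0 ≤ k' ξ := by
    intro ξ
    have := SNA.eval_le_norm (T b) ξ
    simp [hk']
    linarith
  obtain ⟨h', h'pos, hTh'⟩ := hsurj k' k'pos
  have posab : ∀ x, 0 ≤ (a + b) x := fun x => by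
    simpa using add_nonneg (ha x) (hb x)
  have posbh : ∀ x, 0 ≤ (b + h') x := fun x => by
    simpa using add_nonneg (hb x) (h'pos x)
  have e1 : ‖T (a + b) + k'‖ = ‖T ((a + b) + h')‖ := by
    rw [← hTh']
    exact (hnorm (a + b) h' posab h'pos).symm
  have e2 : (a + b) + h' = a + (b + h') := add_assoc a b h'
  have e3 : ‖T (a + (b + h'))‖ = ‖T a + T (b + h')‖ := hnorm a (b + h') ha posbh
  have e4 : ‖T (b + h')‖ = ‖T b + k'‖ := by
    rw [← hTh']
    exact hnorm b h' hb h'pos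
  have e5 : T b + k' = ContinuousMap.const K₂ m := by
    ext ξ
    simp [hk']
  have e6 : ‖T (b + h')‖ = m := by
    rw [e4, e5]
    exact SNA.norm_const' (norm_nonneg _)
  have c1 : T (a + b) ζ + k' ζ ≤ ‖T (a + b) + k'‖ := by
    have := SNA.eval_le_norm (T (a + b) + k') ζ
    simpa using this
  have c2 : ‖T a + T (b + h')‖ ≤ ‖T a‖ + m := by
    calc ‖T a + T (b + h')‖ ≤ ‖T a‖ + ‖T (b + h')‖ := norm_add_le _ _
    _ = ‖T a‖ + m := by rw [e6]
  have c3 : k' ζ = m - T b ζ := by simp [hk']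
  have c4 : ‖T (a + b) + k'‖ ≤ ‖T a‖ + m := by
    rw [e1, e2, e3]
    exact c2
  have := c1.trans c4
  linarith

private lemma SNA.subadd [Nonempty K₂]
    (hpos : ∀ f : C(K₁, ℝ), (∀ x, 0 ≤ f x) → ∀ ξ, 0 ≤ T f ξ)
    (hsurj : ∀ h : C(K₂, ℝ), (∀ ξ, 0 ≤ h ξ) →
      ∃ f : C(K₁, ℝ), (∀ x, 0 ≤ f x) ∧ T f = h)
    (hnorm : ∀ f g : C(K₁, ℝ), (∀ x, 0 ≤ f x) → (∀ x, 0 ≤ g x) →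
      ‖T (f + g)‖ = ‖T f + T g‖)
    (a b : C(K₁, ℝ)) (ha : ∀ x, 0 ≤ a x) (hb : ∀ x, 0 ≤ b x) (η : K₂) :
    T (a + b) η ≤ T a η + T b η := by
  have posab : ∀ x, 0 ≤ (a + b) x := fun x => by
    simpa using add_nonneg (ha x) (hb x)
  refine le_of_forall_pos_le_add ?_
  intro ε hε
  set U : Set K₂ := {ζ | T a ζ < T a η + ε / 2} ∩ {ζ | T b ζ < T b η + ε / 2} with hU
  have hUopen : IsOpen U :=
    ((isOpen_lt (T a).continuous continuous_const).inter
      (isOpen_lt (T b).continuous continuous_const))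
  have hηU : η ∈ U := ⟨by simp; linarith, by simp; linarith⟩
  obtain ⟨p, hp1, hppos, hple, hpout⟩ := SNA.exists_bump hUopen hηU
  set n : ℝ := ‖T a‖ + ‖T b‖ + 1 with hn
  have hn0 : 0 < n := by positivity
  set k : C(K₂, ℝ) := n • p with hk
  have kpos : ∀ ξ, 0 ≤ k ξ := fun ξ => by
    simp [hk]
    exact mul_nonneg hn0.le (hppos ξ)
  have kle : ∀ ξ, k ξ ≤ n := fun ξ => by
    simp [hk]
    calc n * p ξ ≤ n * 1 := by
          exact mul_le_mul_of_nonneg_left (hple ξ) hn0.le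
    _ = n := mul_one n
  have kη : k η = n := by simp [hk, hp1]
  have kout : ∀ ξ ∉ U, k ξ = 0 := fun ξ hξ => by simp [hk, hpout ξ hξ]
  obtain ⟨h, hhpos, hTh⟩ := hsurj k kpos
  have posbh : ∀ x, 0 ≤ (b + h) x := fun x => by
    simpa using add_nonneg (hb x) (hhpos x)
  have Tbpos := hpos b hb
  have Tapos := hpos a ha
  have Tbhpos := hpos (b + h) posbh
  have b1 : ∀ ζ, T (b + h) ζ ≤ ‖T b‖ + k ζ := by
    intro ζ
    have := SNA.key_C1 T hpos hsurj hnorm b h hb hhpos ζ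
    rwa [hTh] at this
  have b2 : ‖T (b + h)‖ ≤ T b η + ε / 2 + n := by
    have hc : (0:ℝ) ≤ T b η + ε / 2 + n := by
      have := Tbpos η
      linarith
    rw [hnorm b h hb hhpos, hTh]
    refine SNA.norm_le_of' _ (fun ξ => add_nonneg (Tbpos ξ) (kpos ξ)) hc ?_
    intro ξ
    by_cases hξ : ξ ∈ U
    · have h1 : T b ξ < T b η + ε / 2 := hξ.2
      have := kle ξ
      simp only [ContinuousMap.add_apply]
      linarith
    · have h1 : T b ξ ≤ ‖T b‖ := SNA.eval_le_norm _ ξ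
      have h2 := kout ξ hξ
      have := Tbpos η
      have := norm_nonneg (T a)
      simp only [ContinuousMap.add_apply, h2]
      rw [hn]
      linarith
  have c1 : T (a + b) η + n ≤ ‖T (a + b) + k‖ := by
    have := SNA.eval_le_norm (T (a + b) + k) η
    simpa [kη] using this
  have c2 : ‖T (a + b) + k‖ = ‖T a + T (b + h)‖ := by
    rw [← hTh, ← hnorm (a + b) h posab hhpos, add_assoc,
      hnorm a (b + h) ha posbh]
  have c3 : ‖T a + T (b + h)‖ ≤ T a η + T b η + ε + n := by
    have hc : (0:ℝ) ≤ T a η + T b η + ε + n := by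
      have := Tapos η; have := Tbpos η
      linarith
    refine SNA.norm_le_of' _ (fun ξ => add_nonneg (Tapos ξ) (Tbhpos ξ)) hc ?_
    intro ξ
    simp only [ContinuousMap.add_apply]
    by_cases hξ : ξ ∈ U
    · have h1 : T a ξ < T a η + ε / 2 := hξ.1
      have h2 : T (b + h) ξ ≤ T b η + ε / 2 + n :=
        (SNA.eval_le_norm _ ξ).trans b2
      linarith
    · have h1 : T a ξ ≤ ‖T a‖ := SNA.eval_le_norm _ ξ
      have h2 : T (b + h) ξ ≤ ‖T b‖ + k ξ := b1 ξ
      have h3 := kout ξ hξ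
      have := Tapos η; have := Tbpos η
      rw [hn]
      rw [h3] at h2
      linarith
  have := c1.trans (le_of_eq_of_le c2 c3)
  linarith

private lemma SNA.superadd [Nonempty K₂]
    (hpos : ∀ f : C(K₁, ℝ), (∀ x, 0 ≤ f x) → ∀ ξ, 0 ≤ T f ξ)
    (hsurj : ∀ h : C(K₂, ℝ), (∀ ξ, 0 ≤ h ξ) →
      ∃ f : C(K₁, ℝ), (∀ x, 0 ≤ f x) ∧ T f = h)
    (hnorm : ∀ f g : C(K₁, ℝ), (∀ x, 0 ≤ f x) → (∀ x, 0 ≤ g x) →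
      ‖T (f + g)‖ = ‖T f + T g‖)
    (a b : C(K₁, ℝ)) (ha : ∀ x, 0 ≤ a x) (hb : ∀ x, 0 ≤ b x) (η : K₂) :
    T a η + T b η ≤ T (a + b) η := by
  have posab : ∀ x, 0 ≤ (a + b) x := fun x => by
    simpa using add_nonneg (ha x) (hb x)
  refine le_of_forall_pos_le_add ?_
  intro ε hε
  set U : Set K₂ := {ζ | T a η - ε / 2 < T a ζ} ∩ {ζ | T (a + b) ζ < T (a + b) η + ε / 2} with hU
  have hUopen : IsOpen U :=
    ((isOpen_lt continuous_const (T a).continuous).inter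
      (isOpen_lt (T (a + b)).continuous continuous_const))
  have hηU : η ∈ U := ⟨by simp; linarith, by simp; linarith⟩
  obtain ⟨p, hp1, hppos, hple, hpout⟩ := SNA.exists_bump hUopen hηU
  set n : ℝ := ‖T a‖ + ‖T b‖ + ‖T (a + b)‖ + 1 with hn
  have hn0 : 0 < n := by positivity
  set k : C(K₂, ℝ) := n • p with hk
  have kpos : ∀ ξ, 0 ≤ k ξ := fun ξ => by
    simp [hk]
    exact mul_nonneg hn0.le (hppos ξ)
  have kle : ∀ ξ, k ξ ≤ n := fun ξ => by
    simp [hk]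
    calc n * p ξ ≤ n * 1 := by
          exact mul_le_mul_of_nonneg_left (hple ξ) hn0.le
    _ = n := mul_one n
  have kη : k η = n := by simp [hk, hp1]
  have kout : ∀ ξ ∉ U, k ξ = 0 := fun ξ hξ => by simp [hk, hpout ξ hξ]
  obtain ⟨h, hhpos, hTh⟩ := hsurj k kpos
  have posbh : ∀ x, 0 ≤ (b + h) x := fun x => by
    simpa using add_nonneg (hb x) (hhpos x)
  have Tbpos := hpos b hb
  have Tapos := hpos a ha
  have Tabpos := hpos (a + b) posab
  have Tbhpos := hpos (b + h) posbh
  have b1 : ∀ ζ, T (b + h) ζ ≤ ‖T b‖ + k ζ := by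
    intro ζ
    have := SNA.key_C1 T hpos hsurj hnorm b h hb hhpos ζ
    rwa [hTh] at this
  obtain ⟨ζ', hζeq, hζmax⟩ := SNA.norm_eq_max (T (b + h)) Tbhpos
  have lower : T b η + n ≤ T (b + h) ζ' := by
    have e1 : ‖T (b + h)‖ = ‖T b + k‖ := by rw [hnorm b h hb hhpos, hTh]
    have e2 : (T b + k) η ≤ ‖T b + k‖ := SNA.eval_le_norm _ η
    rw [← hζeq, e1]
    simpa [kη] using e2
  have hζU : ζ' ∈ U := by
    by_contra hc
    have h2 := b1 ζ'
    rw [kout ζ' hc] at h2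
    have h3 : T b η + n ≤ ‖T b‖ := by linarith
    have h4 : ‖T b‖ ≤ n - 1 := by rw [hn]; have := norm_nonneg (T a); have := norm_nonneg (T (a+b)); linarith
    have := Tbpos η
    linarith
  have upper : ‖T (a + b) + k‖ ≤ T (a + b) η + ε / 2 + n := by
    have hc : (0:ℝ) ≤ T (a + b) η + ε / 2 + n := by
      have := Tabpos η
      linarith
    refine SNA.norm_le_of' _ (fun ξ => add_nonneg (Tabpos ξ) (kpos ξ)) hc ?_
    intro ξ
    simp only [ContinuousMap.add_apply]
    by_cases hξ : ξ ∈ U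
    · have h1 : T (a + b) ξ < T (a + b) η + ε / 2 := hξ.2
      have := kle ξ
      linarith
    · have h1 : T (a + b) ξ ≤ ‖T (a + b)‖ := SNA.eval_le_norm _ ξ
      have h2 := kout ξ hξ
      have := Tabpos η
      have := norm_nonneg (T a)
      have := norm_nonneg (T b)
      rw [h2, hn]
      linarith
  have c2 : ‖T (a + b) + k‖ = ‖T a + T (b + h)‖ := by
    rw [← hTh, ← hnorm (a + b) h posab hhpos, add_assoc,
      hnorm a (b + h) ha posbh]
  have c3 : (T a η - ε / 2) + (T b η + n) ≤ ‖T a + T (b + h)‖ := by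
    have e2 : (T a + T (b + h)) ζ' ≤ ‖T a + T (b + h)‖ := SNA.eval_le_norm _ ζ'
    have h1 : T a η - ε / 2 < T a ζ' := hζU.1
    simp only [ContinuousMap.add_apply] at e2
    linarith
  rw [← c2] at c3
  have := c3.trans upper
  linarith

private lemma SNA.Tadd [Nonempty K₂]
    (hpos : ∀ f : C(K₁, ℝ), (∀ x, 0 ≤ f x) → ∀ ξ, 0 ≤ T f ξ)
    (hsurj : ∀ h : C(K₂, ℝ), (∀ ξ, 0 ≤ h ξ) →
      ∃ f : C(K₁, ℝ), (∀ x, 0 ≤ f x) ∧ T f = h)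
    (hnorm : ∀ f g : C(K₁, ℝ), (∀ x, 0 ≤ f x) → (∀ x, 0 ≤ g x) →
      ‖T (f + g)‖ = ‖T f + T g‖)
    (a b : C(K₁, ℝ)) (ha : ∀ x, 0 ≤ a x) (hb : ∀ x, 0 ≤ b x) :
    T (a + b) = T a + T b := by
  ext η
  simp only [ContinuousMap.add_apply]
  exact le_antisymm (SNA.subadd T hpos hsurj hnorm a b ha hb η)
    (SNA.superadd T hpos hsurj hnorm a b ha hb η)

private lemma SNA.Tmono [Nonempty K₂]
    (hpos : ∀ f : C(K₁, ℝ), (∀ x, 0 ≤ f x) → ∀ ξ, 0 ≤ T f ξ)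
    (hsurj : ∀ h : C(K₂, ℝ), (∀ ξ, 0 ≤ h ξ) →
      ∃ f : C(K₁, ℝ), (∀ x, 0 ≤ f x) ∧ T f = h)
    (hnorm : ∀ f g : C(K₁, ℝ), (∀ x, 0 ≤ f x) → (∀ x, 0 ≤ g x) →
      ‖T (f + g)‖ = ‖T f + T g‖)
    (a b : C(K₁, ℝ)) (ha : ∀ x, 0 ≤ a x) (hab : ∀ x, a x ≤ b x) (ξ : K₂) :
    T a ξ ≤ T b ξ := by
  set d : C(K₁, ℝ) := b - a with hd
  have hdpos : ∀ x, 0 ≤ d x := fun x => by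
    simp [hd]
    exact hab x
  have hbd : a + d = b := by ext x; simp [hd]
  have := SNA.Tadd T hpos hsurj hnorm a d ha hdpos
  rw [hbd] at this
  rw [this]
  simp only [ContinuousMap.add_apply]
  have := hpos d hdpos ξ
  linarith

private lemma SNA.Tinvmono [Nonempty K₂]
    (hpos : ∀ f : C(K₁, ℝ), (∀ x, 0 ≤ f x) → ∀ ξ, 0 ≤ T f ξ)
    (hinj : ∀ f g : C(K₁, ℝ), (∀ x, 0 ≤ f x) → (∀ x, 0 ≤ g x) →
      T f = T g → f = g)
    (hsurj : ∀ h : C(K₂, ℝ), (∀ ξ, 0 ≤ h ξ) →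
      ∃ f : C(K₁, ℝ), (∀ x, 0 ≤ f x) ∧ T f = h)
    (hnorm : ∀ f g : C(K₁, ℝ), (∀ x, 0 ≤ f x) → (∀ x, 0 ≤ g x) →
      ‖T (f + g)‖ = ‖T f + T g‖)
    (a b : C(K₁, ℝ)) (ha : ∀ x, 0 ≤ a x) (hb : ∀ x, 0 ≤ b x)
    (hab : ∀ ξ, T a ξ ≤ T b ξ) (x : K₁) : a x ≤ b x := by
  set u : C(K₂, ℝ) := T b - T a with hu
  have hupos : ∀ ξ, 0 ≤ u ξ := fun ξ => by
    simp [hu]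
    exact hab ξ
  obtain ⟨d, hdpos, hTd⟩ := hsurj u hupos
  have posad : ∀ y, 0 ≤ (a + d) y := fun y => by
    simpa using add_nonneg (ha y) (hdpos y)
  have : T (a + d) = T b := by
    rw [SNA.Tadd T hpos hsurj hnorm a d ha hdpos, hTd]
    ext ξ
    simp [hu]
  have heq := hinj (a + d) b posad hb this
  have := hdpos x
  calc a x ≤ a x + d x := by linarith
  _ = (a + d) x := by simp
  _ = b x := by rw [heq]

private lemma SNA.Tmin [Nonempty K₂]
    (hpos : ∀ f : C(K₁, ℝ), (∀ x, 0 ≤ f x) → ∀ ξ, 0 ≤ T f ξ)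
    (hinj : ∀ f g : C(K₁, ℝ), (∀ x, 0 ≤ f x) → (∀ x, 0 ≤ g x) →
      T f = T g → f = g)
    (hsurj : ∀ h : C(K₂, ℝ), (∀ ξ, 0 ≤ h ξ) →
      ∃ f : C(K₁, ℝ), (∀ x, 0 ≤ f x) ∧ T f = h)
    (hnorm : ∀ f g : C(K₁, ℝ), (∀ x, 0 ≤ f x) → (∀ x, 0 ≤ g x) →
      ‖T (f + g)‖ = ‖T f + T g‖)
    (a b : C(K₁, ℝ)) (ha : ∀ x, 0 ≤ a x) (hb : ∀ x, 0 ≤ b x) :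
    T (a ⊓ b) = T a ⊓ T b := by
  have hipos : ∀ x, 0 ≤ (a ⊓ b) x := fun x => by
    simp only [ContinuousMap.inf_apply, le_min_iff]
    exact ⟨ha x, hb x⟩
  have le1 : ∀ ξ, T (a ⊓ b) ξ ≤ T a ξ :=
    SNA.Tmono T hpos hsurj hnorm (a ⊓ b) a hipos (fun x => by
      simp only [ContinuousMap.inf_apply]
      exact min_le_left _ _)
  have le2 : ∀ ξ, T (a ⊓ b) ξ ≤ T b ξ :=
    SNA.Tmono T hpos hsurj hnorm (a ⊓ b) b hipos (fun x => by
      simp only [ContinuousMap.inf_apply]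
      exact min_le_right _ _)
  have hvpos : ∀ ξ, 0 ≤ (T a ⊓ T b) ξ := fun ξ => by
    simp only [ContinuousMap.inf_apply, le_min_iff]
    exact ⟨hpos a ha ξ, hpos b hb ξ⟩
  obtain ⟨d, hdpos, hTd⟩ := hsurj (T a ⊓ T b) hvpos
  have hda : ∀ x, d x ≤ a x :=
    SNA.Tinvmono T hpos hinj hsurj hnorm d a hdpos ha (fun ξ => by
      rw [hTd]
      simp only [ContinuousMap.inf_apply]
      exact min_le_left _ _)
  have hdb : ∀ x, d x ≤ b x :=
    SNA.Tinvmono T hpos hinj hsurj hnorm d b hdpos hb (fun ξ => by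
      rw [hTd]
      simp only [ContinuousMap.inf_apply]
      exact min_le_right _ _)
  have hdi : ∀ x, d x ≤ (a ⊓ b) x := fun x => by
    simp only [ContinuousMap.inf_apply, le_min_iff]
    exact ⟨hda x, hdb x⟩
  have le3 : ∀ ξ, (T a ⊓ T b) ξ ≤ T (a ⊓ b) ξ := fun ξ => by
    rw [← hTd]
    exact SNA.Tmono T hpos hsurj hnorm d (a ⊓ b) hdpos hdi ξ
  ext ξ
  simp only [ContinuousMap.inf_apply]
  refine le_antisymm (le_min (le1 ξ) (le2 ξ)) ?_
  have := le3 ξ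
  simpa using this

private lemma SNA.TsmulNat [Nonempty K₂]
    (hpos : ∀ f : C(K₁, ℝ), (∀ x, 0 ≤ f x) → ∀ ξ, 0 ≤ T f ξ)
    (hsurj : ∀ h : C(K₂, ℝ), (∀ ξ, 0 ≤ h ξ) →
      ∃ f : C(K₁, ℝ), (∀ x, 0 ≤ f x) ∧ T f = h)
    (hnorm : ∀ f g : C(K₁, ℝ), (∀ x, 0 ≤ f x) → (∀ x, 0 ≤ g x) →
      ‖T (f + g)‖ = ‖T f + T g‖)
    (m : ℕ) (f : C(K₁, ℝ)) (hf : ∀ x, 0 ≤ f x) :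
    T ((m : ℝ) • f) = (m : ℝ) • T f := by
  induction m with
  | zero => simp [SNA.T_zero T hnorm]
  | succ i ih =>
    have hsm : ∀ x, 0 ≤ ((i : ℝ) • f) x := fun x => by
      simp only [ContinuousMap.smul_apply, smul_eq_mul]
      exact mul_nonneg (by positivity) (hf x)
    have e1 : ((i + 1 : ℕ) : ℝ) • f = (i : ℝ) • f + f := by
      ext x
      push_cast
      simp [add_mul]
    rw [e1, SNA.Tadd T hpos hsurj hnorm _ f hsm hf, ih]
    ext ξ
    push_cast
    simp [add_mul]

private lemma SNA.wpos [Nonempty K₁] [Nonempty K₂]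
    (hpos : ∀ f : C(K₁, ℝ), (∀ x, 0 ≤ f x) → ∀ ξ, 0 ≤ T f ξ)
    (hsurj : ∀ h : C(K₂, ℝ), (∀ ξ, 0 ≤ h ξ) →
      ∃ f : C(K₁, ℝ), (∀ x, 0 ≤ f x) ∧ T f = h)
    (hnorm : ∀ f g : C(K₁, ℝ), (∀ x, 0 ≤ f x) → (∀ x, 0 ≤ g x) →
      ‖T (f + g)‖ = ‖T f + T g‖)
    (η : K₂) : 0 < T 1 η := by
  have pos1 : ∀ x, 0 ≤ (1 : C(K₁, ℝ)) x := fun x => by simp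
  rcases (hpos 1 pos1 η).lt_or_eq with h | h
  · exact h
  exfalso
  obtain ⟨f, hfpos, hTf⟩ := hsurj (ContinuousMap.const K₂ 1) (fun ξ => by simp)
  set m : ℕ := ⌈‖f‖⌉₊ with hm
  have hfle : ∀ x, f x ≤ ((m : ℝ) • (1 : C(K₁, ℝ))) x := fun x => by
    simp only [ContinuousMap.smul_apply, ContinuousMap.one_apply, smul_eq_mul, mul_one]
    exact (SNA.eval_le_norm f x).trans (Nat.le_ceil _)
  have hle := SNA.Tmono T hpos hsurj hnorm f ((m : ℝ) • 1) hfpos hfle η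
  rw [SNA.TsmulNat T hpos hsurj hnorm m 1 pos1] at hle
  have h1 : T f η = 1 := by rw [hTf]; rfl
  simp only [ContinuousMap.smul_apply, smul_eq_mul] at hle
  rw [← h, mul_zero, h1] at hle
  linarith

private lemma SNA.Tconst [Nonempty K₁] [Nonempty K₂]
    (hpos : ∀ f : C(K₁, ℝ), (∀ x, 0 ≤ f x) → ∀ ξ, 0 ≤ T f ξ)
    (hsurj : ∀ h : C(K₂, ℝ), (∀ ξ, 0 ≤ h ξ) →
      ∃ f : C(K₁, ℝ), (∀ x, 0 ≤ f x) ∧ T f = h)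
    (hnorm : ∀ f g : C(K₁, ℝ), (∀ x, 0 ≤ f x) → (∀ x, 0 ≤ g x) →
      ‖T (f + g)‖ = ‖T f + T g‖)
    (t : ℝ) (ht : 0 ≤ t) (η : K₂) :
    T (t • (1 : C(K₁, ℝ))) η = t * T 1 η := by
  have pos1 : ∀ x, 0 ≤ (1 : C(K₁, ℝ)) x := fun x => by simp
  have possm : ∀ s : ℝ, 0 ≤ s → ∀ x, 0 ≤ (s • (1 : C(K₁, ℝ))) x := fun s hs x => by
    simp only [ContinuousMap.smul_apply, ContinuousMap.one_apply, smul_eq_mul, mul_one]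
    exact hs
  have hfrac : ∀ m k : ℕ, 0 < k →
      T (((m : ℝ) / (k : ℝ)) • (1 : C(K₁, ℝ))) η = ((m : ℝ) / (k : ℝ)) * T 1 η := by
    intro m k hk
    have hk0 : ((k : ℝ)) ≠ 0 := Nat.cast_ne_zero.2 hk.ne'
    have hk0' : (0:ℝ) < (k : ℝ) := Nat.cast_pos.2 hk
    set X : C(K₁, ℝ) := ((k : ℝ))⁻¹ • 1 with hX
    have hXpos : ∀ x, 0 ≤ X x := fun x => by
      simp only [hX, ContinuousMap.smul_apply, ContinuousMap.one_apply, smul_eq_mul, mul_one]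
      positivity
    have e1 := SNA.TsmulNat T hpos hsurj hnorm k X hXpos
    have e2 : (k : ℝ) • X = 1 := by
      ext x
      simp only [hX, ContinuousMap.smul_apply, ContinuousMap.one_apply, smul_eq_mul, mul_one]
      field_simp
    have e3 := SNA.TsmulNat T hpos hsurj hnorm m X hXpos
    have e4 : ((m : ℝ) / (k : ℝ)) • (1 : C(K₁, ℝ)) = (m : ℝ) • X := by
      ext x
      simp only [hX, ContinuousMap.smul_apply, ContinuousMap.one_apply, smul_eq_mul, mul_one]
      field_simp
    have e5 : T 1 η = (k : ℝ) * T X η := by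
      conv_lhs => rw [← e2, e1]
      simp
    rw [e4, e3]
    simp only [ContinuousMap.smul_apply, smul_eq_mul]
    rw [e5]
    field_simp
  have hwp := SNA.wpos T hpos hsurj hnorm η
  have bound : ∀ k : ℕ, 0 < k →
      (t - 1 / k) * T 1 η ≤ T (t • (1 : C(K₁, ℝ))) η ∧
      T (t • (1 : C(K₁, ℝ))) η ≤ (t + 1 / k) * T 1 η := by
    intro k hk
    have hk0' : (0:ℝ) < (k : ℝ) := Nat.cast_pos.2 hk
    set m : ℕ := ⌊t * k⌋₊ with hm
    have hm1 : (m : ℝ) ≤ t * k := Nat.floor_le (by positivity)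
    have hm2 : t * k < (m : ℝ) + 1 := Nat.lt_floor_add_one _
    have hle1 : (m : ℝ) / k ≤ t := by rw [div_le_iff₀ hk0']; linarith
    have hle2 : t ≤ ((m : ℝ) + 1) / k := by rw [le_div_iff₀ hk0']; linarith
    constructor
    · have := SNA.Tmono T hpos hsurj hnorm (((m : ℝ) / k) • 1) (t • 1)
        (possm _ (by positivity)) (fun x => by
          simp only [ContinuousMap.smul_apply, ContinuousMap.one_apply, smul_eq_mul, mul_one]
          exact hle1) η
      rw [hfrac m k hk] at this
      have h2 : (t - 1 / k) * T 1 η ≤ ((m : ℝ) / k) * T 1 η := by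
        apply mul_le_mul_of_nonneg_right _ hwp.le
        have h3 : t ≤ ((m : ℝ) + 1) / k := hle2
        rw [add_div] at h3
        linarith
      exact h2.trans this
    · have := SNA.Tmono T hpos hsurj hnorm (t • 1) ((((m : ℝ) + 1) / k) • 1)
        (possm _ ht) (fun x => by
          simp only [ContinuousMap.smul_apply, ContinuousMap.one_apply, smul_eq_mul, mul_one]
          exact hle2) η
      have e6 : ((m : ℝ) + 1) = ((m + 1 : ℕ) : ℝ) := by push_cast; ring
      rw [e6, hfrac (m + 1) k hk] at this
      refine this.trans ?_
      apply mul_le_mul_of_nonneg_right _ hwp.le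
      rw [← e6]
      rw [div_le_iff₀ hk0']
      rw [add_mul]
      rw [div_mul_cancel₀ _ hk0'.ne']
      linarith
  apply le_antisymm
  · refine le_of_forall_pos_le_add ?_
    intro ε hε
    obtain ⟨k, hk⟩ := exists_nat_gt (T 1 η / ε)
    have hk0 : 0 < k := by
      by_contra hc
      push_neg at hc
      interval_cases k
      have : 0 ≤ T 1 η / ε := by positivity
      simp at hk
      linarith
    have hkR : (0:ℝ) < (k:ℝ) := by exact_mod_cast hk0
    have h1 := (bound k hk0).2
    have h2 : (1 / (k:ℝ)) * T 1 η < ε := by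
      rw [div_lt_iff₀ hε] at hk
      rw [one_div, inv_mul_eq_div, div_lt_iff₀ hkR]
      nlinarith
    nlinarith [h1, h2]
  · refine le_of_forall_pos_le_add ?_
    intro ε hε
    obtain ⟨k, hk⟩ := exists_nat_gt (T 1 η / ε)
    have hk0 : 0 < k := by
      by_contra hc
      push_neg at hc
      interval_cases k
      have : 0 ≤ T 1 η / ε := by positivity
      simp at hk
      linarith
    have hkR : (0:ℝ) < (k:ℝ) := by exact_mod_cast hk0
    have h1 := (bound k hk0).1
    have h2 : (1 / (k:ℝ)) * T 1 η < ε := by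
      rw [div_lt_iff₀ hε] at hk
      rw [one_div, inv_mul_eq_div, div_lt_iff₀ hkR]
      nlinarith
    nlinarith [h1, h2]

private lemma SNA.keyExists [Nonempty K₁] [Nonempty K₂]
    (hpos : ∀ f : C(K₁, ℝ), (∀ x, 0 ≤ f x) → ∀ ξ, 0 ≤ T f ξ)
    (hinj : ∀ f g : C(K₁, ℝ), (∀ x, 0 ≤ f x) → (∀ x, 0 ≤ g x) →
      T f = T g → f = g)
    (hsurj : ∀ h : C(K₂, ℝ), (∀ ξ, 0 ≤ h ξ) →
      ∃ f : C(K₁, ℝ), (∀ x, 0 ≤ f x) ∧ T f = h)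
    (hnorm : ∀ f g : C(K₁, ℝ), (∀ x, 0 ≤ f x) → (∀ x, 0 ≤ g x) →
      ‖T (f + g)‖ = ‖T f + T g‖)
    (η : K₂) :
    ∃ x : K₁, ∀ f : C(K₁, ℝ), (∀ y, 0 ≤ f y) → T f η = T 1 η * f x := by
  have pos1 : ∀ x, 0 ≤ (1 : C(K₁, ℝ)) x := fun x => by simp
  have possm : ∀ s : ℝ, 0 ≤ s → ∀ x, 0 ≤ (s • (1 : C(K₁, ℝ))) x := fun s hs x => by
    simp only [ContinuousMap.smul_apply, ContinuousMap.one_apply, smul_eq_mul, mul_one]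
    exact hs
  have hwp := SNA.wpos T hpos hsurj hnorm η
  have stepA : ∃ x : K₁, ∀ f : C(K₁, ℝ), (∀ y, 0 ≤ f y) → T f η = 0 → f x = 0 := by
    by_contra hcon
    push_neg at hcon
    choose F hF1 hF2 hF3 using hcon
    obtain ⟨s, hs⟩ := isCompact_univ.elim_finite_subcover
      (fun x : K₁ => {z | 0 < F x z})
      (fun x => isOpen_lt continuous_const (F x).continuous)
      (fun z _ => mem_iUnion.2 ⟨z, (hF1 z z).lt_of_ne (Ne.symm (hF3 z))⟩)
    classical
    have key : ∀ u : Finset K₁, T (∑ y ∈ u, F y) = ∑ y ∈ u, T (F y) := by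
      intro u
      induction u using Finset.cons_induction with
      | empty => simp [SNA.T_zero T hnorm]
      | cons a u hau ih =>
        have hsumpos : ∀ y, 0 ≤ (∑ z ∈ u, F z) y := fun y => by
          rw [ContinuousMap.sum_apply]
          exact Finset.sum_nonneg fun z _ => hF1 z y
        rw [Finset.sum_cons, Finset.sum_cons,
          SNA.Tadd T hpos hsurj hnorm (F a) _ (hF1 a) hsumpos, ih]
    set g : C(K₁, ℝ) := ∑ y ∈ s, F y with hg
    have hgpos : ∀ z, 0 ≤ g z := fun z => by
      rw [hg, ContinuousMap.sum_apply]
      exact Finset.sum_nonneg fun y _ => hF1 y z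
    have hTgη : T g η = 0 := by
      rw [hg, key s, ContinuousMap.sum_apply]
      exact Finset.sum_eq_zero fun y _ => hF2 y
    obtain ⟨z₀, hz₀⟩ := SNA.exists_min g
    have hδ : 0 < g z₀ := by
      have hz := hs (mem_univ z₀)
      rw [mem_iUnion₂] at hz
      obtain ⟨y, hys, hyz⟩ := hz
      have h1 : F y z₀ ≤ g z₀ := by
        rw [hg, ContinuousMap.sum_apply]
        exact Finset.single_le_sum (fun z _ => hF1 z z₀) hys
      exact lt_of_lt_of_le hyz h1
    set δ := g z₀ with hδdef
    have hconstle : ∀ y, (δ • (1 : C(K₁, ℝ))) y ≤ g y := fun y => by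
      simp only [ContinuousMap.smul_apply, ContinuousMap.one_apply, smul_eq_mul, mul_one]
      exact hz₀ y
    have h1 : T (δ • (1 : C(K₁, ℝ))) η ≤ 0 := by
      rw [← hTgη]
      exact SNA.Tmono T hpos hsurj hnorm _ g (possm δ hδ.le) hconstle η
    rw [SNA.Tconst T hpos hsurj hnorm δ hδ.le η] at h1
    nlinarith
  obtain ⟨x, hxA⟩ := stepA
  have B1 : ∀ W : Set K₁, IsOpen W → x ∈ W → ∀ g : C(K₁, ℝ), (∀ y, 0 ≤ g y) →
      (∀ z ∈ W, g z = 0) → T g η = 0 := by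
    intro W hWopen hxW g hgpos hgW
    have hex : ∃ h' : C(K₁, ℝ), (∀ y, 0 ≤ h' y) ∧ (∀ z, z ∉ W → h' z = 0) ∧ 0 < T h' η := by
      by_contra hno
      push_neg at hno
      obtain ⟨p, hp1, hppos, hple, hpout⟩ := SNA.exists_bump hWopen hxW
      have hTp : T p η = 0 := le_antisymm (hno p hppos hpout) (hpos p hppos η)
      have := hxA p hppos hTp
      rw [hp1] at this
      exact one_ne_zero this
    obtain ⟨h', h'pos, h'supp, h'ne⟩ := hex
    have hmin : g ⊓ h' = 0 := by
      ext z
      simp only [ContinuousMap.inf_apply, ContinuousMap.zero_apply]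
      by_cases hz : z ∈ W
      · rw [hgW z hz]
        exact min_eq_left (h'pos z)
      · rw [h'supp z hz]
        exact min_eq_right (hgpos z)
    have hTmin := SNA.Tmin T hpos hinj hsurj hnorm g h' hgpos h'pos
    rw [hmin, SNA.T_zero T hnorm] at hTmin
    have h0 : 0 = min (T g η) (T h' η) := by
      have := congrArg (fun u : C(K₂, ℝ) => u η) hTmin
      simpa using this
    rcases le_total (T g η) (T h' η) with hle | hle
    · rw [min_eq_left hle] at h0
      exact h0.symm
    · rw [min_eq_right hle] at h0
      exact absurd h0.symm h'ne.ne'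
  refine ⟨x, ?_⟩
  intro f hfpos
  have hT1ne : T 1 η ≠ 0 := hwp.ne'
  have upper : T f η ≤ T 1 η * f x := by
    refine le_of_forall_pos_le_add ?_
    intro ε' hε'
    set ε : ℝ := ε' / T 1 η with hεdef
    have hε : 0 < ε := div_pos hε' hwp
    set c : ℝ := f x + ε with hcdef
    have hc0 : 0 < c := add_pos_of_nonneg_of_pos (hfpos x) hε
    set g : C(K₁, ℝ) := (f - c • 1) ⊔ 0 with hg
    have hgpos : ∀ y, 0 ≤ g y := fun y => by
      simp only [hg, ContinuousMap.sup_apply, ContinuousMap.zero_apply]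
      exact le_max_right _ _
    have hgW : ∀ z ∈ {z : K₁ | f z < c}, g z = 0 := fun z hz => by
      simp only [hg, ContinuousMap.sup_apply, ContinuousMap.zero_apply,
        ContinuousMap.sub_apply, ContinuousMap.smul_apply, ContinuousMap.one_apply,
        smul_eq_mul, mul_one]
      have : f z < c := hz
      exact max_eq_right (by linarith)
    have hTg : T g η = 0 := B1 {z | f z < c}
      (isOpen_lt f.continuous continuous_const) (by simp [hcdef]; linarith) g hgpos hgW
    have hle : ∀ y, f y ≤ (c • (1 : C(K₁, ℝ)) + g) y := fun y => by
      simp only [hg, ContinuousMap.add_apply, ContinuousMap.sup_apply,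
        ContinuousMap.zero_apply, ContinuousMap.sub_apply, ContinuousMap.smul_apply,
        ContinuousMap.one_apply, smul_eq_mul, mul_one]
      have := le_max_left (f y - c) 0
      linarith
    have hmono := SNA.Tmono T hpos hsurj hnorm f (c • 1 + g) hfpos hle η
    rw [SNA.Tadd T hpos hsurj hnorm (c • 1) g (possm c hc0.le) hgpos] at hmono
    simp only [ContinuousMap.add_apply] at hmono
    rw [hTg, SNA.Tconst T hpos hsurj hnorm c hc0.le η] at hmono
    have : c * T 1 η = T 1 η * f x + ε' := by
      rw [hcdef, hεdef]
      field_simp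
    linarith
  have lower : T 1 η * f x ≤ T f η := by
    refine le_of_forall_pos_le_add ?_
    intro ε' hε'
    set ε : ℝ := ε' / T 1 η with hεdef
    have hε : 0 < ε := div_pos hε' hwp
    set c : ℝ := f x - ε with hcdef
    have hεT : ε * T 1 η = ε' := by
      rw [hεdef]
      field_simp
    by_cases hc : c ≤ 0
    · have h1 : T 1 η * f x ≤ ε' := by
        have : f x ≤ ε := by rw [hcdef] at hc; linarith
        calc T 1 η * f x ≤ T 1 η * ε := mul_le_mul_of_nonneg_left this hwp.le
        _ = ε' := by rw [mul_comm]; exact hεT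
      have := hpos f hfpos η
      linarith
    · push_neg at hc
      set g : C(K₁, ℝ) := (c • 1 - f) ⊔ 0 with hg
      have hgpos : ∀ y, 0 ≤ g y := fun y => by
        simp only [hg, ContinuousMap.sup_apply, ContinuousMap.zero_apply]
        exact le_max_right _ _
      have hgW : ∀ z ∈ {z : K₁ | c < f z}, g z = 0 := fun z hz => by
        simp only [hg, ContinuousMap.sup_apply, ContinuousMap.zero_apply,
          ContinuousMap.sub_apply, ContinuousMap.smul_apply, ContinuousMap.one_apply,
          smul_eq_mul, mul_one]
        have : c < f z := hz
        exact max_eq_right (by linarith)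
      have hTg : T g η = 0 := B1 {z | c < f z}
        (isOpen_lt continuous_const f.continuous) (by simp [hcdef]; linarith) g hgpos hgW
      have hle : ∀ y, (c • (1 : C(K₁, ℝ))) y ≤ (f + g) y := fun y => by
        simp only [hg, ContinuousMap.add_apply, ContinuousMap.sup_apply,
          ContinuousMap.zero_apply, ContinuousMap.sub_apply, ContinuousMap.smul_apply,
          ContinuousMap.one_apply, smul_eq_mul, mul_one]
        have := le_max_left (c - f y) 0
        linarith
      have hmono := SNA.Tmono T hpos hsurj hnorm (c • 1) (f + g) (possm c hc.le) hle η
      rw [SNA.Tadd T hpos hsurj hnorm f g hfpos hgpos] at hmono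
      simp only [ContinuousMap.add_apply] at hmono
      rw [hTg, SNA.Tconst T hpos hsurj hnorm c hc.le η] at hmono
      have : c * T 1 η = T 1 η * f x - ε' := by
        rw [hcdef, hεdef]
        field_simp
      linarith
  exact le_antisymm upper lower

end TMaps

theorem stmt_1 {K₁ K₂ : Type*}
    [TopologicalSpace K₁] [CompactSpace K₁] [T2Space K₁]
    [TopologicalSpace K₂] [CompactSpace K₂] [T2Space K₂]
    (T : C(K₁, ℝ) → C(K₂, ℝ))
    (hpos : ∀ f : C(K₁, ℝ), (∀ x, 0 ≤ f x) → ∀ ξ, 0 ≤ T f ξ)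
    (hinj : ∀ f g : C(K₁, ℝ), (∀ x, 0 ≤ f x) → (∀ x, 0 ≤ g x) →
      T f = T g → f = g)
    (hsurj : ∀ h : C(K₂, ℝ), (∀ ξ, 0 ≤ h ξ) →
      ∃ f : C(K₁, ℝ), (∀ x, 0 ≤ f x) ∧ T f = h)
    (hnorm : ∀ f g : C(K₁, ℝ), (∀ x, 0 ≤ f x) → (∀ x, 0 ≤ g x) →
      ‖T (f + g)‖ = ‖T f + T g‖) :
    ∃ τ : K₂ ≃ₜ K₁, ∀ f : C(K₁, ℝ), (∀ x, 0 ≤ f x) →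
      ∀ ξ : K₂, T f ξ = T 1 ξ * f (τ ξ) := by
  rcases isEmpty_or_nonempty K₂ with hK₂ | hK₂
  · have hT01 : T 0 = T 1 := by
      ext ξ
      exact isEmptyElim ξ
    have h01 : (0 : C(K₁, ℝ)) = 1 := hinj 0 1 (fun x => by simp) (fun x => by simp) hT01
    have hK₁ : IsEmpty K₁ := by
      by_contra hne
      rw [not_isEmpty_iff] at hne
      obtain ⟨x⟩ := hne
      have := congrArg (fun f : C(K₁, ℝ) => f x) h01
      simpa using this
    refine ⟨⟨Equiv.equivOfIsEmpty K₂ K₁, ?_, ?_⟩, fun f hf ξ => isEmptyElim ξ⟩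
    · rw [continuous_iff_continuousAt]
      exact fun ξ => isEmptyElim ξ
    · rw [continuous_iff_continuousAt]
      exact fun x => isEmptyElim x
  · have hK₁ : Nonempty K₁ := by
      rcases isEmpty_or_nonempty K₁ with h1 | h1
      · exfalso
        obtain ⟨f, hfpos, hTf⟩ := hsurj (ContinuousMap.const K₂ 1) (fun ξ => by simp)
        have hf0 : f = 0 := by
          ext x
          exact isEmptyElim x
        rw [hf0, SNA.T_zero T hnorm] at hTf
        have := congrArg (fun u : C(K₂, ℝ) => u (Classical.arbitrary K₂)) hTf
        simpa using this
      · exact h1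
    choose τ0 hτ0 using fun η => SNA.keyExists T hpos hinj hsurj hnorm η
    have hcont : Continuous τ0 := by
      rw [continuous_def]
      intro U hUopen
      rw [isOpen_iff_forall_mem_open]
      intro η hη
      obtain ⟨p, hp1, hppos, hple, hpout⟩ := SNA.exists_bump hUopen hη
      refine ⟨{ζ | 0 < T p ζ}, ?_, isOpen_lt continuous_const (T p).continuous, ?_⟩
      · intro ζ hζ
        by_contra hcu
        have h1 := hpout _ hcu
        have h2 := hτ0 ζ p hppos
        rw [h1, mul_zero] at h2
        exact absurd h2 (ne_of_gt hζ)
      · have h3 := hτ0 η p hppos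
        rw [hp1, mul_one] at h3
        have := SNA.wpos T hpos hsurj hnorm η
        show 0 < T p η
        rw [h3]
        exact this
    have hinjτ : Function.Injective τ0 := by
      intro η₁ η₂ heq
      by_contra hne
      obtain ⟨p, hp1, hppos, hple, hpout⟩ := SNA.exists_bump
        (isClosed_singleton (x := η₂)).isOpen_compl (by simpa using hne)
      obtain ⟨f, hfpos, hTf⟩ := hsurj p hppos
      have h1 := hτ0 η₁ f hfpos
      have h2 := hτ0 η₂ f hfpos
      rw [hTf] at h1 h2
      rw [heq] at h1
      have w2 := SNA.wpos T hpos hsurj hnorm η₂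
      have hpη₂ : p η₂ = 0 := hpout η₂ (by simp)
      rw [hpη₂] at h2
      have hf2 : f (τ0 η₂) = 0 := (mul_eq_zero.mp h2.symm).resolve_left w2.ne'
      rw [hf2, mul_zero, hp1] at h1
      exact one_ne_zero h1
    have hsurjτ : Function.Surjective τ0 := by
      intro x
      by_contra hx
      push_neg at hx
      have hclosed : IsClosed (Set.range τ0) := (isCompact_range hcont).isClosed
      have hxU : x ∈ (Set.range τ0)ᶜ := by
        simp only [Set.mem_compl_iff, Set.mem_range, not_exists]
        exact fun η h => hx η h
      obtain ⟨p, hp1, hppos, hple, hpout⟩ := SNA.exists_bump hclosed.isOpen_compl hxU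
      have hTp : T p = T 0 := by
        rw [SNA.T_zero T hnorm]
        ext ζ
        rw [hτ0 ζ p hppos]
        have hz : p (τ0 ζ) = 0 := hpout _ (by simp)
        rw [hz, mul_zero, ContinuousMap.zero_apply]
      have hp0 := hinj p 0 hppos (fun y => by simp) (by rw [hTp, SNA.T_zero T hnorm])
      rw [hp0] at hp1
      simpa using hp1
    have hce : Continuous (Equiv.ofBijective τ0 ⟨hinjτ, hsurjτ⟩) := hcont
    refine ⟨hce.homeoOfEquivCompactToT2, ?_⟩
    intro f hf ξ
    exact hτ0 ξ f hf
end

section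
/- Let L₁ and L₂ be locally compact Hausdorff spaces and let T : C₀⁺(L₁) → C₀⁺(L₂) be a surjective map satisfying ‖T(f+g)‖ = ‖T(f)+T(g)‖ for all f, g ∈ C₀⁺(L₁). Let f ∈ C₀⁺(L₁) and y₀ ∈ L₂ with y₀ ∉ M_{T(f)}. Then there exists g ∈ C₀⁺(L₁) such that T(g)(y₀) = ‖T(g)‖ and ‖T(f) + T(g)‖ < ‖T(f)‖ + ‖T(g)‖. -/
open scoped ZeroAtInfty

open Set Filter

theorem stmt_3 {L₁ L₂ : Type*}
    [TopologicalSpace L₁] [LocallyCompactSpace L₁] [T2Space L₁]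
    [TopologicalSpace L₂] [LocallyCompactSpace L₂] [T2Space L₂]
    (T : C₀(L₁, ℝ) → C₀(L₂, ℝ))
    (hpos : ∀ f : C₀(L₁, ℝ), (∀ x, 0 ≤ f x) → ∀ y, 0 ≤ T f y)
    (hsurj : ∀ h : C₀(L₂, ℝ), (∀ y, 0 ≤ h y) →
      ∃ f : C₀(L₁, ℝ), (∀ x, 0 ≤ f x) ∧ T f = h)
    (hnorm : ∀ f g : C₀(L₁, ℝ), (∀ x, 0 ≤ f x) → (∀ x, 0 ≤ g x) →
      ‖T (f + g)‖ = ‖T f + T g‖)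
    (f : C₀(L₁, ℝ)) (hf : ∀ x, 0 ≤ f x) (y₀ : L₂)
    (hy₀ : y₀ ∉ {y : L₂ | T f y = ‖T f‖}) :
    ∃ g : C₀(L₁, ℝ), (∀ x, 0 ≤ g x) ∧ T g y₀ = ‖T g‖ ∧
      ‖T f + T g‖ < ‖T f‖ + ‖T g‖ := by
  -- T f y₀ < ‖T f‖
  have hTf0 : ∀ y, 0 ≤ T f y := hpos f hf
  have habs : ∀ y, T f y ≤ ‖T f‖ := fun y => by
    have := (T f).toBCF.norm_coe_le_norm y
    rw [ZeroAtInftyContinuousMap.norm_toBCF_eq_norm] at this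
    calc T f y ≤ |T f y| := le_abs_self _
    _ ≤ ‖T f‖ := by simpa [Real.norm_eq_abs] using this
  have hlt : T f y₀ < ‖T f‖ := lt_of_le_of_ne (habs y₀) hy₀
  set m : ℝ := (T f y₀ + ‖T f‖) / 2 with hm
  have hm1 : T f y₀ < m := by rw [hm]; linarith
  have hm2 : m < ‖T f‖ := by rw [hm]; linarith
  -- Urysohn function
  set U : Set L₂ := {y | T f y < m} with hU
  have hUopen : IsOpen U := isOpen_lt (map_continuous (T f)) continuous_const
  have hy₀U : y₀ ∈ U := hm1
  obtain ⟨h, h1, h0, hcs, hball⟩ :=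
    exists_continuous_one_zero_of_isCompact (isCompact_singleton (x := y₀))
      hUopen.isClosed_compl (disjoint_compl_right_iff_subset.mpr (singleton_subset_iff.mpr hy₀U))
  set h₀ : C₀(L₂, ℝ) := ⟨h, hcs.is_zero_at_infty⟩ with hh₀
  have hh₀nn : ∀ y, 0 ≤ h₀ y := fun y => (hball y).1
  have hh₀le : ∀ y, h₀ y ≤ 1 := fun y => (hball y).2
  have hh₀y₀ : h₀ y₀ = 1 := h1 rfl
  have hnormh : ‖h₀‖ = 1 := by
    apply le_antisymm
    · rw [← ZeroAtInftyContinuousMap.norm_toBCF_eq_norm]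
      apply (BoundedContinuousFunction.norm_le (by norm_num)).mpr
      intro y
      simpa [Real.norm_eq_abs, abs_le] using ⟨by linarith [hh₀nn y], hh₀le y⟩
    · rw [← ZeroAtInftyContinuousMap.norm_toBCF_eq_norm]
      have := (h₀.toBCF).norm_coe_le_norm y₀
      simpa [hh₀y₀] using this.trans_eq rfl |>.trans_eq' (by simp [hh₀y₀])
  obtain ⟨g, hgnn, hgT⟩ := hsurj h₀ hh₀nn
  refine ⟨g, hgnn, ?_, ?_⟩
  · rw [hgT, hnormh, hh₀y₀]
  · rw [hgT, hnormh]
    have hkey : ∀ y, T f y + h₀ y ≤ max (m + 1) ‖T f‖ := by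
      intro y
      by_cases hy : y ∈ U
      · exact le_max_of_le_left (by linarith [hh₀le y, (show T f y < m from hy)])
      · have : h₀ y = 0 := h0 hy
        rw [this, add_zero]
        exact le_max_of_le_right (habs y)
    have hle : ‖T f + T g‖ ≤ max (m + 1) ‖T f‖ := by
      rw [hgT, ← ZeroAtInftyContinuousMap.norm_toBCF_eq_norm]
      apply (BoundedContinuousFunction.norm_le (le_max_of_le_right (norm_nonneg _))).mpr
      intro y
      have h1 : 0 ≤ T f y + h₀ y := add_nonneg (hTf0 y) (hh₀nn y)
      have h2 : (T f + h₀) y = T f y + h₀ y := rfl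
      simp only [Real.norm_eq_abs, ZeroAtInftyContinuousMap.toBCF_apply] at *
      rw [h2, abs_of_nonneg h1]
      exact hkey y
    calc ‖T f + h₀‖ = ‖T f + T g‖ := by rw [hgT]
    _ ≤ max (m + 1) ‖T f‖ := hle
    _ < ‖T f‖ + 1 := by
        apply max_lt <;> linarith [hlt, hm2, habs y₀, hTf0 y₀]
end

section
/- Let L₁ and L₂ be locally compact Hausdorff spaces and let T : C₀⁺(L₁) → C₀⁺(L₂) be a surjective map satisfying ‖T(f+g)‖ = ‖T(f)+T(g)‖ for all f, g ∈ C₀⁺(L₁). Let f, g ∈ C₀⁺(L₁). If M_{T(f)} ∩ M_{T(g)} is non-empty, then M_{T(f+g)} ⊆ M_{T(f)}. -/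
open scoped ZeroAtInfty

lemma aux_le_norm {L : Type*} [TopologicalSpace L] (F : C₀(L, ℝ)) (z : L) :
    F z ≤ ‖F‖ := by
  have h := F.toBCF.norm_coe_le_norm z
  rw [ZeroAtInftyContinuousMap.norm_toBCF_eq_norm] at h
  exact (le_abs_self _).trans h

lemma aux_norm_le {L : Type*} [TopologicalSpace L] (F : C₀(L, ℝ)) {C : ℝ}
    (h0 : 0 ≤ C) (h : ∀ z, |F z| ≤ C) : ‖F‖ ≤ C := by
  rw [← ZeroAtInftyContinuousMap.norm_toBCF_eq_norm]
  exact (BoundedContinuousFunction.norm_le h0).mpr h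

theorem stmt_5 {L₁ L₂ : Type*}
    [TopologicalSpace L₁] [LocallyCompactSpace L₁] [T2Space L₁]
    [TopologicalSpace L₂] [LocallyCompactSpace L₂] [T2Space L₂]
    (T : C₀(L₁, ℝ) → C₀(L₂, ℝ))
    (hpos : ∀ f : C₀(L₁, ℝ), (∀ x, 0 ≤ f x) → ∀ y, 0 ≤ T f y)
    (hsurj : ∀ h : C₀(L₂, ℝ), (∀ y, 0 ≤ h y) →
      ∃ f : C₀(L₁, ℝ), (∀ x, 0 ≤ f x) ∧ T f = h)
    (hnorm : ∀ f g : C₀(L₁, ℝ), (∀ x, 0 ≤ f x) → (∀ x, 0 ≤ g x) →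
      ‖T (f + g)‖ = ‖T f + T g‖)
    (f g : C₀(L₁, ℝ)) (hf : ∀ x, 0 ≤ f x) (hg : ∀ x, 0 ≤ g x)
    (hne : ({y : L₂ | T f y = ‖T f‖} ∩ {y : L₂ | T g y = ‖T g‖}).Nonempty) :
    {y : L₂ | T (f + g) y = ‖T (f + g)‖} ⊆ {y : L₂ | T f y = ‖T f‖} := by
  obtain ⟨y₀, hy₀f, hy₀g⟩ := hne
  simp only [Set.mem_setOf_eq] at hy₀f hy₀g
  intro y hy
  simp only [Set.mem_setOf_eq] at hy ⊢
  set F := T f with hFdef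
  set G := T g with hGdef
  set S := T (f + g) with hSdef
  have hFpos : ∀ z, 0 ≤ F z := hpos f hf
  -- ‖S‖ = ‖F‖ + ‖G‖
  have hSFG : ‖S‖ = ‖F‖ + ‖G‖ := by
    have h1 : ‖S‖ = ‖F + G‖ := hnorm f g hf hg
    have h2 : ‖F + G‖ ≤ ‖F‖ + ‖G‖ := norm_add_le F G
    have h3 : ‖F‖ + ‖G‖ ≤ ‖F + G‖ := by
      have := aux_le_norm (F + G) y₀
      simp only [ZeroAtInftyContinuousMap.coe_add, Pi.add_apply] at this
      rw [hy₀f, hy₀g] at this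
      exact this
    linarith
  by_contra hFy
  have hFylt : F y < ‖F‖ := lt_of_le_of_ne (aux_le_norm F y) hFy
  set ε : ℝ := ‖F‖ - F y with hεdef
  have hε : 0 < ε := by simp [hεdef]; linarith
  -- build a bump function at y supported where F < ‖F‖ - ε/2
  have htcl : IsClosed {z : L₂ | ‖F‖ - ε / 2 ≤ F z} :=
    isClosed_le continuous_const (map_continuous F)
  have hdisj : Disjoint ({y} : Set L₂) {z : L₂ | ‖F‖ - ε / 2 ≤ F z} := by
    rw [Set.disjoint_singleton_left]
    simp only [Set.mem_setOf_eq, not_le]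
    linarith
  obtain ⟨φ, hφ1, hφ0, hφc, hφicc⟩ :=
    exists_continuous_one_zero_of_isCompact (isCompact_singleton : IsCompact ({y} : Set L₂))
      htcl hdisj
  -- the C₀ function h = ε • φ
  set h : C₀(L₂, ℝ) :=
    ⟨⟨fun z => ε * φ z, continuous_const.mul (map_continuous φ)⟩, by
      simpa using (hφc.is_zero_at_infty.const_mul ε)⟩ with hhdef
  have hhy : h y = ε := by
    have : φ y = 1 := hφ1 rfl
    simp [hhdef, this]
  have hhnonneg : ∀ z, 0 ≤ h z := fun z => mul_nonneg hε.le (hφicc z).1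
  have hhle : ∀ z, h z ≤ ε := fun z => by
    have := (hφicc z).2
    calc ε * φ z ≤ ε * 1 := by nlinarith
    _ = ε := mul_one ε
  have hsupp : ∀ z, h z ≠ 0 → F z < ‖F‖ - ε / 2 := by
    intro z hz
    by_contra hc
    push_neg at hc
    have : φ z = 0 := hφ0 hc
    exact hz (by simp [hhdef, this])
  obtain ⟨k, hk, hTk⟩ := hsurj h hhnonneg
  -- lower bound for ‖F + h‖
  have hfgk : ∀ x, 0 ≤ (f + g) x := fun x => add_nonneg (hf x) (hg x)
  have hfk : ∀ x, 0 ≤ (f + k) x := fun x => add_nonneg (hf x) (hk x)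
  have e1 : ‖T ((f + g) + k)‖ = ‖S + h‖ := by
    rw [hnorm (f + g) k hfgk hk, ← hSdef, hTk]
  have e2 : ‖S‖ + ε ≤ ‖S + h‖ := by
    have := aux_le_norm (S + h) y
    simp only [ZeroAtInftyContinuousMap.coe_add, Pi.add_apply] at this
    rw [hy, hhy] at this
    exact this
  have e3 : (f + g) + k = g + (f + k) := by
    rw [add_comm f g, add_assoc]
  have e4 : ‖T ((f + g) + k)‖ ≤ ‖G‖ + ‖F + h‖ := by
    rw [e3, hnorm g (f + k) hg hfk]
    have : ‖T g + T (f + k)‖ ≤ ‖T g‖ + ‖T (f + k)‖ := norm_add_le _ _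
    rw [hnorm f k hf hk, hTk] at this
    exact this
  have hlow : ‖F‖ + ε ≤ ‖F + h‖ := by
    have := e2.trans (e1 ▸ e4)
    rw [hSFG] at this
    linarith
  -- upper bound for ‖F + h‖
  have hup : ‖F + h‖ ≤ ‖F‖ + ε / 2 := by
    apply aux_norm_le
    · have := norm_nonneg F; linarith
    · intro z
      simp only [ZeroAtInftyContinuousMap.coe_add, Pi.add_apply]
      rw [abs_of_nonneg (add_nonneg (hFpos z) (hhnonneg z))]
      rcases eq_or_ne (h z) 0 with h0 | h0
      · rw [h0, add_zero]
        have := aux_le_norm F z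
        linarith
      · have h1 := hsupp z h0
        have h2 := hhle z
        linarith
  linarith
end

section
/- Let L₁ and L₂ be locally compact Hausdorff spaces and let T : C₀⁺(L₁) → C₀⁺(L₂) be a surjective map satisfying ‖T(f+g)‖ = ‖T(f)+T(g)‖ for all f, g ∈ C₀⁺(L₁). Then for every natural number n ≥ 1 and every f ∈ C₀⁺(L₁), the inclusion M_{T(n·f)} ⊆ M_{T(f)} holds. -/
open scoped ZeroAtInfty

section aux
variable {L : Type*} [TopologicalSpace L]

lemma abs_le_norm_c0 (h : C₀(L, ℝ)) (x : L) : |h x| ≤ ‖h‖ := by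
  rw [← ZeroAtInftyContinuousMap.norm_toBCF_eq_norm]
  exact h.toBCF.norm_coe_le_norm x

lemma norm_le_c0 (h : C₀(L, ℝ)) {C : ℝ} (hC : 0 ≤ C) (hb : ∀ x, |h x| ≤ C) : ‖h‖ ≤ C := by
  rw [← ZeroAtInftyContinuousMap.norm_toBCF_eq_norm]
  exact (BoundedContinuousFunction.norm_le hC).mpr hb

lemma exists_attain (h : C₀(L, ℝ)) (hpos : ∀ x, 0 ≤ h x) (hn : 0 < ‖h‖) :
    ∃ z, h z = ‖h‖ := by
  obtain ⟨x₀, hx₀⟩ : ∃ x₀, ‖h‖ / 2 < h x₀ := by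
    by_contra hcon
    push_neg at hcon
    have : ‖h‖ ≤ ‖h‖ / 2 :=
      norm_le_c0 h (by linarith) fun x => by
        rw [abs_of_nonneg (hpos x)]; exact hcon x
    linarith
  obtain ⟨z, hz⟩ : ∃ z, ∀ y, h y ≤ h z := by
    apply h.continuous.exists_forall_ge' x₀
    have hev : ∀ᶠ x in Filter.cocompact L, h x < ‖h‖ / 2 :=
      (zero_at_infty h).eventually (Filter.tendsto_id.eventually_lt_const (by linarith)) |>.mono fun x hx => hx
    exact hev.mono fun x hx => (hx.trans hx₀).le
  refine ⟨z, le_antisymm ((le_abs_self _).trans (abs_le_norm_c0 h z)) ?_⟩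
  exact norm_le_c0 h (hpos z) fun x => by rw [abs_of_nonneg (hpos x)]; exact hz x

end aux

theorem stmt_6 {L₁ L₂ : Type*}
    [TopologicalSpace L₁] [LocallyCompactSpace L₁] [T2Space L₁]
    [TopologicalSpace L₂] [LocallyCompactSpace L₂] [T2Space L₂]
    (T : C₀(L₁, ℝ) → C₀(L₂, ℝ))
    (hpos : ∀ f : C₀(L₁, ℝ), (∀ x, 0 ≤ f x) → ∀ y, 0 ≤ T f y)
    (hsurj : ∀ h : C₀(L₂, ℝ), (∀ y, 0 ≤ h y) →
      ∃ f : C₀(L₁, ℝ), (∀ x, 0 ≤ f x) ∧ T f = h)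
    (hnorm : ∀ f g : C₀(L₁, ℝ), (∀ x, 0 ≤ f x) → (∀ x, 0 ≤ g x) →
      ‖T (f + g)‖ = ‖T f + T g‖) :
    ∀ n : ℕ, 1 ≤ n → ∀ f : C₀(L₁, ℝ), (∀ x, 0 ≤ f x) →
      {y : L₂ | T (n • f) y = ‖T (n • f)‖} ⊆ {y : L₂ | T f y = ‖T f‖} := by
  -- nonnegativity of natural multiples
  have hsmul_nonneg : ∀ (g : C₀(L₁, ℝ)), (∀ x, 0 ≤ g x) → ∀ (m : ℕ) (x : L₁),
      0 ≤ (m • g) x := by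
    intro g hg m x
    have : (m • g) x = (m : ℝ) * g x := by
      simp [← Nat.cast_smul_eq_nsmul ℝ]
    rw [this]
    exact mul_nonneg (Nat.cast_nonneg m) (hg x)
  -- T 0 has norm zero
  have hT0 : ‖T 0‖ = 0 := by
    have h := hnorm 0 0 (fun x => le_refl 0) (fun x => le_refl 0)
    rw [add_zero] at h
    have h2 : ‖T 0 + T 0‖ = 2 * ‖T 0‖ := by
      rw [← two_smul ℝ (T 0), norm_smul]
      simp
    rw [h2] at h
    nlinarith [norm_nonneg (T 0)]
  -- upper bound
  have hub : ∀ (g : C₀(L₁, ℝ)), (∀ x, 0 ≤ g x) → ∀ m : ℕ,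
      ‖T (m • g)‖ ≤ (m : ℝ) * ‖T g‖ := by
    intro g hg m
    induction m with
    | zero => simpa using le_of_eq hT0
    | succ m ih =>
      have hsum : (m + 1) • g = m • g + g := by
        rw [add_smul, one_smul]
      calc ‖T ((m + 1) • g)‖ = ‖T (m • g) + T g‖ := by
            rw [hsum]; exact hnorm _ _ (hsmul_nonneg g hg m) hg
        _ ≤ ‖T (m • g)‖ + ‖T g‖ := norm_add_le _ _
        _ ≤ (m : ℝ) * ‖T g‖ + ‖T g‖ := by linarith
        _ = ((m : ℕ) + 1 : ℝ) * ‖T g‖ := by ring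
        _ = ((m + 1 : ℕ) : ℝ) * ‖T g‖ := by push_cast; ring
  -- doubling
  have hdouble : ∀ (g : C₀(L₁, ℝ)), (∀ x, 0 ≤ g x) → ∀ k : ℕ,
      ‖T (2 ^ k • g)‖ = (2 ^ k : ℝ) * ‖T g‖ := by
    intro g hg k
    induction k with
    | zero => simp
    | succ k ih =>
      have hsum : 2 ^ (k + 1) • g = 2 ^ k • g + 2 ^ k • g := by
        rw [← add_smul]; ring_nf
      calc ‖T (2 ^ (k + 1) • g)‖ = ‖T (2 ^ k • g) + T (2 ^ k • g)‖ := by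
            rw [hsum]; exact hnorm _ _ (hsmul_nonneg g hg _) (hsmul_nonneg g hg _)
        _ = 2 * ‖T (2 ^ k • g)‖ := by rw [← two_smul ℝ, norm_smul]; simp
        _ = (2 ^ (k + 1) : ℝ) * ‖T g‖ := by rw [ih]; ring
  -- lower bound
  have hlb : ∀ (g : C₀(L₁, ℝ)), (∀ x, 0 ≤ g x) → ∀ m : ℕ,
      (m : ℝ) * ‖T g‖ ≤ ‖T (m • g)‖ := by
    intro g hg m
    have hm : m ≤ 2 ^ m := Nat.le_of_lt (Nat.lt_two_pow_self)
    have hsum : (2 ^ m) • g = m • g + (2 ^ m - m) • g := by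
      rw [← add_smul, Nat.add_sub_cancel' hm]
    have h1 : ‖T (2 ^ m • g)‖ ≤ ‖T (m • g)‖ + ((2 ^ m - m : ℕ) : ℝ) * ‖T g‖ := by
      calc ‖T (2 ^ m • g)‖ = ‖T (m • g) + T ((2 ^ m - m) • g)‖ := by
            rw [hsum]; exact hnorm _ _ (hsmul_nonneg g hg _) (hsmul_nonneg g hg _)
        _ ≤ ‖T (m • g)‖ + ‖T ((2 ^ m - m) • g)‖ := norm_add_le _ _
        _ ≤ ‖T (m • g)‖ + ((2 ^ m - m : ℕ) : ℝ) * ‖T g‖ := by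
            linarith [hub g hg (2 ^ m - m)]
    rw [hdouble g hg m] at h1
    have hcast : ((2 ^ m - m : ℕ) : ℝ) = (2 ^ m : ℝ) - (m : ℝ) := by
      rw [Nat.cast_sub hm]; push_cast; ring
    rw [hcast] at h1
    linarith
  -- main argument
  intro n hn f hf y₀ hy₀
  simp only [Set.mem_setOf_eq] at hy₀ ⊢
  have hTf_nonneg := hpos f hf
  have hc : ‖T (n • f)‖ = (n : ℝ) * ‖T f‖ :=
    le_antisymm (hub f hf n) (hlb f hf n)
  -- the target set is closed
  have hSclosed : IsClosed {y : L₂ | T f y = ‖T f‖} :=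
    isClosed_eq (map_continuous (T f)) continuous_const
  have : y₀ ∈ closure {y : L₂ | T f y = ‖T f‖} := by
    rw [mem_closure_iff]
    intro V hVopen hyV
    -- Urysohn bump
    obtain ⟨u, hu1, hu0, hucs, huIcc⟩ :=
      exists_continuous_one_zero_of_isCompact (X := L₂) (s := {y₀}) (t := Vᶜ)
        isCompact_singleton hVopen.isClosed_compl
        (Set.disjoint_left.mpr fun a ha hac =>
          hac (by rw [Set.mem_singleton_iff] at ha; exact ha ▸ hyV))
    set u₀ : C₀(L₂, ℝ) := ⟨u, hucs.is_zero_at_infty⟩ with hu₀def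
    have hu₀app : ∀ y, u₀ y = u y := fun y => rfl
    have hu₀nonneg : ∀ y, 0 ≤ u₀ y := fun y => (huIcc y).1
    have hu₀le : ∀ y, u₀ y ≤ 1 := fun y => (huIcc y).2
    have hu₀norm : ‖u₀‖ ≤ 1 :=
      norm_le_c0 u₀ zero_le_one fun y => abs_le.mpr ⟨by linarith [hu₀nonneg y], hu₀le y⟩
    have hu₀y₀ : u₀ y₀ = 1 := hu1 (Set.mem_singleton y₀)
    obtain ⟨g, hgpos, hgT⟩ := hsurj u₀ hu₀nonneg
    -- A : ‖T (n•f) + u₀‖ = ‖T(n•f)‖ + 1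
    have hA : ‖T (n • f) + u₀‖ = ‖T (n • f)‖ + 1 := by
      refine le_antisymm (le_trans (norm_add_le _ _) (by linarith)) ?_
      have hval : (T (n • f) + u₀) y₀ = ‖T (n • f)‖ + 1 := by
        simp [hy₀, hu₀y₀]
      calc ‖T (n • f)‖ + 1 = (T (n • f) + u₀) y₀ := hval.symm
        _ ≤ |(T (n • f) + u₀) y₀| := le_abs_self _
        _ ≤ ‖T (n • f) + u₀‖ := abs_le_norm_c0 _ _
    -- B : norm of T (n•f + g)
    have hB : ‖T (n • f + g)‖ = ‖T (n • f)‖ + 1 := by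
      rw [hnorm _ _ (hsmul_nonneg f hf n) hgpos, hgT, hA]
    -- D : ‖T f + u₀‖ = ‖T f‖ + 1
    have hD : ‖T f + u₀‖ = ‖T f‖ + 1 := by
      refine le_antisymm (le_trans (norm_add_le _ _) (by linarith)) ?_
      have hdecomp : (n - 1) • f + (f + g) = n • f + g := by
        rw [← add_assoc, ← succ_nsmul, Nat.sub_add_cancel hn]
      have h1 : ‖T (n • f + g)‖ ≤ ‖T ((n - 1) • f)‖ + ‖T (f + g)‖ := by
        rw [← hdecomp, hnorm _ _ (hsmul_nonneg f hf _)
          (fun x => add_nonneg (hf x) (hgpos x))]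
        exact norm_add_le _ _
      have h2 : ‖T ((n - 1) • f)‖ ≤ ((n - 1 : ℕ) : ℝ) * ‖T f‖ := hub f hf _
      have h3 : ‖T (f + g)‖ = ‖T f + u₀‖ := by
        rw [hnorm _ _ hf hgpos, hgT]
      have hcast : ((n - 1 : ℕ) : ℝ) = (n : ℝ) - 1 := by
        rw [Nat.cast_sub hn]; push_cast; ring
      rw [hB, hc] at h1
      rw [h3] at h1
      rw [hcast] at h2
      linarith
    -- attainment
    have hsum_nonneg : ∀ y, 0 ≤ (T f + u₀) y := by
      intro y
      have : (T f + u₀) y = T f y + u₀ y := rfl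
      rw [this]
      exact add_nonneg (hTf_nonneg y) (hu₀nonneg y)
    have hpos' : 0 < ‖T f + u₀‖ := by
      rw [hD]; linarith [norm_nonneg (T f)]
    obtain ⟨z, hz⟩ := exists_attain (T f + u₀) hsum_nonneg hpos'
    rw [hD] at hz
    have hzval : T f z + u₀ z = ‖T f‖ + 1 := hz
    have hTfz_le : T f z ≤ ‖T f‖ := (le_abs_self _).trans (abs_le_norm_c0 _ _)
    have hu₀z : u₀ z = 1 := by linarith [hu₀le z]
    have hTfz : T f z = ‖T f‖ := by linarith
    refine ⟨z, ?_, hTfz⟩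
    by_contra hzV
    have : u z = 0 := hu0 hzV
    rw [hu₀app z, this] at hu₀z
    exact one_ne_zero hu₀z.symm
  rwa [hSclosed.closure_eq] at this
end

section
/- Let L₁ and L₂ be locally compact Hausdorff spaces and let T : C₀⁺(L₁) → C₀⁺(L₂) be a surjective map satisfying ‖T(f+g)‖ = ‖T(f)+T(g)‖ for all f, g ∈ C₀⁺(L₁). Then for every natural number n ≥ 1 and every f ∈ C₀⁺(L₁), one has ‖T(n·f)‖ = n·‖T(f)‖. -/
open scoped ZeroAtInfty

theorem stmt_7 {L₁ L₂ : Type*}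
    [TopologicalSpace L₁] [LocallyCompactSpace L₁] [T2Space L₁]
    [TopologicalSpace L₂] [LocallyCompactSpace L₂] [T2Space L₂]
    (T : C₀(L₁, ℝ) → C₀(L₂, ℝ))
    (hpos : ∀ f : C₀(L₁, ℝ), (∀ x, 0 ≤ f x) → ∀ y, 0 ≤ T f y)
    (hsurj : ∀ h : C₀(L₂, ℝ), (∀ y, 0 ≤ h y) →
      ∃ f : C₀(L₁, ℝ), (∀ x, 0 ≤ f x) ∧ T f = h)
    (hnorm : ∀ f g : C₀(L₁, ℝ), (∀ x, 0 ≤ f x) → (∀ x, 0 ≤ g x) →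
      ‖T (f + g)‖ = ‖T f + T g‖) :
    ∀ n : ℕ, 1 ≤ n → ∀ f : C₀(L₁, ℝ), (∀ x, 0 ≤ f x) →
      ‖T (n • f)‖ = n * ‖T f‖ := by
  intro n hn f hf
  have hnn : ∀ k : ℕ, ∀ x, 0 ≤ (k • f) x := by
    intro k x
    have : (k • f) x = k • (f x) := rfl
    rw [this, nsmul_eq_mul]
    exact mul_nonneg (by positivity) (hf x)
  have key1 : ∀ a b : ℕ, ‖T ((a + b) • f)‖ ≤ ‖T (a • f)‖ + ‖T (b • f)‖ := by
    intro a b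
    rw [add_nsmul, hnorm _ _ (hnn a) (hnn b)]
    exact norm_add_le _ _
  have key2 : ∀ a : ℕ, ‖T ((2 * a) • f)‖ = 2 * ‖T (a • f)‖ := by
    intro a
    have h1 : (2 * a) • f = a • f + a • f := by rw [two_mul, add_nsmul]
    rw [h1, hnorm _ _ (hnn a) (hnn a), ← two_smul ℝ (T (a • f)), norm_smul]
    norm_num
  have h1f : (1 : ℕ) • f = f := one_smul _ _
  have main : ∀ m : ℕ, 1 ≤ m → ‖T (m • f)‖ = m * ‖T f‖ := by
    intro m
    induction m using Nat.strong_induction_on with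
    | _ m ih =>
      intro hm
      rcases Nat.even_or_odd m with ⟨k, hk⟩ | ⟨k, hk⟩
      · have hk1 : 1 ≤ k := by omega
        have hmk : m = 2 * k := by omega
        rw [hmk, key2 k, ih k (by omega) hk1]
        push_cast; ring
      · by_cases hk0 : k = 0
        · have : m = 1 := by omega
          rw [this, h1f]; norm_num
        · have hk1 : 1 ≤ k := Nat.one_le_iff_ne_zero.mpr hk0
          have h2k : ‖T ((2 * k) • f)‖ = (2 * k : ℕ) * ‖T f‖ :=
            ih (2 * k) (by omega) (by omega)
          have hk1' : ‖T ((k + 1) • f)‖ = (k + 1 : ℕ) * ‖T f‖ :=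
            ih (k + 1) (by omega) (by omega)
          have hup : ‖T (m • f)‖ ≤ ‖T ((2 * k) • f)‖ + ‖T f‖ := by
            have := key1 (2 * k) 1
            rw [h1f] at this
            rw [hk]
            exact this
          have hlow : ‖T ((2 * k + 2) • f)‖ ≤ ‖T (m • f)‖ + ‖T f‖ := by
            have := key1 (2 * k + 1) 1
            rw [h1f] at this
            rw [hk]
            have e : 2 * k + 2 = 2 * k + 1 + 1 := by omega
            rw [e]
            exact this
          have hdb : ‖T ((2 * k + 2) • f)‖ = 2 * ‖T ((k + 1) • f)‖ := by
            have := key2 (k + 1)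
            have e : 2 * k + 2 = 2 * (k + 1) := by omega
            rw [e]
            exact this
          rw [hk1'] at hdb
          rw [h2k] at hup
          rw [hdb] at hlow
          have : ‖T (m • f)‖ = (2 * k + 1 : ℝ) * ‖T f‖ := by
            push_cast at hup hlow ⊢
            linarith
          rw [this, hk]
          push_cast; ring
  exact main n hn
end

section
/- Let L₁ and L₂ be locally compact Hausdorff spaces and let T : C₀⁺(L₁) → C₀⁺(L₂) be a surjective map satisfying ‖T(f+g)‖ = ‖T(f)+T(g)‖ for all f, g ∈ C₀⁺(L₁). Then for every f ∈ C₀⁺(L₁) and every natural number n ≥ 2, one has M_{T(n·f)} = M_{T(f)}. -/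
open scoped ZeroAtInfty
open ZeroAtInftyContinuousMap Set

namespace Stmt9Aux

variable {L : Type*} [TopologicalSpace L]

lemma apply_le_norm (w : C₀(L, ℝ)) (y : L) : w y ≤ ‖w‖ :=
  (le_abs_self _).trans (by simpa [Real.norm_eq_abs] using w.toBCF.norm_coe_le_norm y)

lemma norm_le_of (w : C₀(L, ℝ)) {C : ℝ} (hC : 0 ≤ C) (h : ∀ z, |w z| ≤ C) : ‖w‖ ≤ C := by
  rw [← norm_toBCF_eq_norm]
  exact (BoundedContinuousFunction.norm_le hC).mpr fun z => by
    simpa [Real.norm_eq_abs] using h z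

lemma double_norm (w : C₀(L, ℝ)) : ‖w + w‖ = 2 * ‖w‖ := by
  rw [← two_smul ℝ w, norm_smul]
  simp

lemma bump [LocallyCompactSpace L] [T2Space L]
    {U : Set L} (hU : IsOpen U) {y : L} (hy : y ∈ U) {ε : ℝ} (hε : 0 < ε) :
    ∃ h : C₀(L, ℝ), (∀ z, 0 ≤ h z) ∧ (∀ z, h z ≤ ε) ∧ h y = ε ∧ ∀ z, z ∉ U → h z = 0 := by
  obtain ⟨φ, hφ1, hφ0, hφc, hφmem⟩ := exists_continuous_one_zero_of_isCompact
    (isCompact_singleton (x := y)) hU.isClosed_compl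
    (Set.disjoint_singleton_left.mpr (by simpa using hy))
  have hten : Filter.Tendsto (fun z => ε * φ z) (Filter.cocompact L) (nhds 0) := by
    simpa using (hφc.is_zero_at_infty.const_mul ε)
  refine ⟨⟨⟨fun z => ε * φ z, continuous_const.mul φ.continuous⟩, hten⟩, ?_, ?_, ?_, ?_⟩
  · exact fun z => mul_nonneg hε.le (hφmem z).1
  · exact fun z => by
      have := (hφmem z).2
      calc ε * φ z ≤ ε * 1 := by nlinarith
        _ = ε := mul_one ε
  · have : φ y = 1 := hφ1 rfl
    simp [ZeroAtInftyContinuousMap.coe_mk, this]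
  · intro z hz
    have : φ z = 0 := hφ0 hz
    simp [ZeroAtInftyContinuousMap.coe_mk, this]

end Stmt9Aux

open Stmt9Aux

lemma normA {L₁ L₂ : Type*}
    [TopologicalSpace L₁] [TopologicalSpace L₂]
    (T : C₀(L₁, ℝ) → C₀(L₂, ℝ))
    (hnorm : ∀ f g : C₀(L₁, ℝ), (∀ x, 0 ≤ f x) → (∀ x, 0 ≤ g x) →
      ‖T (f + g)‖ = ‖T f + T g‖)
    (f : C₀(L₁, ℝ)) (hf : ∀ x, 0 ≤ f x) (k : ℕ) : ‖T (k • f)‖ = k * ‖T f‖ := by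
  have hks : ∀ k : ℕ, ∀ x, 0 ≤ (k • f) x := by
    intro k x
    have : (k • f) x = k • (f x) := rfl
    rw [this]
    exact nsmul_nonneg (hf x) k
  have key : ∀ a b : ℕ, ‖T ((a + b) • f)‖ = ‖T (a • f) + T (b • f)‖ := by
    intro a b
    rw [add_nsmul]
    exact hnorm _ _ (hks a) (hks b)
  set c : ℕ → ℝ := fun k => ‖T (k • f)‖ with hc
  have h0 : c 0 = 0 := by
    have h00 := key 0 0
    rw [double_norm] at h00
    simp only [Nat.add_zero] at h00
    have : c 0 = 2 * c 0 := h00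
    linarith
  have hsub : ∀ a b : ℕ, c (a + b) ≤ c a + c b := by
    intro a b
    rw [hc]
    simp only []
    rw [key a b]
    exact norm_add_le _ _
  have hdouble : ∀ k, c (2 * k) = 2 * c k := by
    intro k
    rw [two_mul]
    show ‖T ((k + k) • f)‖ = 2 * ‖T (k • f)‖
    rw [key k k, double_norm]
  have hle : ∀ k : ℕ, c k ≤ k * c 1 := by
    intro k
    induction k with
    | zero => simp [h0]
    | succ m ih =>
      have := hsub m 1
      push_cast
      linarith
  have hpow : ∀ j : ℕ, c (2 ^ j) = (2 ^ j : ℕ) * c 1 := by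
    intro j
    induction j with
    | zero => simp
    | succ m ih =>
      have : (2 : ℕ) ^ (m + 1) = 2 * 2 ^ m := by ring
      rw [this, hdouble, ih]
      push_cast
      ring
  have hge : ∀ k : ℕ, (k : ℝ) * c 1 ≤ c k := by
    intro k
    have hk2 : k ≤ 2 ^ k := Nat.le_of_lt Nat.lt_two_pow_self
    set m := 2 ^ k - k with hm
    have hkm : k + m = 2 ^ k := by omega
    have h1 : c (k + m) ≤ c k + c m := hsub k m
    have h2 : c m ≤ m * c 1 := hle m
    have h3 : c (k + m) = ((k + m : ℕ) : ℝ) * c 1 := by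
      rw [hkm]; exact hpow k
    push_cast at h3
    linarith
  have : c k = k * c 1 := le_antisymm (hle k) (hge k)
  rw [hc] at this
  simpa using this

theorem stmt_9 {L₁ L₂ : Type*}
    [TopologicalSpace L₁] [LocallyCompactSpace L₁] [T2Space L₁]
    [TopologicalSpace L₂] [LocallyCompactSpace L₂] [T2Space L₂]
    (T : C₀(L₁, ℝ) → C₀(L₂, ℝ))
    (hpos : ∀ f : C₀(L₁, ℝ), (∀ x, 0 ≤ f x) → ∀ y, 0 ≤ T f y)
    (hsurj : ∀ h : C₀(L₂, ℝ), (∀ y, 0 ≤ h y) →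
      ∃ f : C₀(L₁, ℝ), (∀ x, 0 ≤ f x) ∧ T f = h)
    (hnorm : ∀ f g : C₀(L₁, ℝ), (∀ x, 0 ≤ f x) → (∀ x, 0 ≤ g x) →
      ‖T (f + g)‖ = ‖T f + T g‖) :
    ∀ f : C₀(L₁, ℝ), (∀ x, 0 ≤ f x) → ∀ n : ℕ, 2 ≤ n →
      {y : L₂ | T (n • f) y = ‖T (n • f)‖} = {y : L₂ | T f y = ‖T f‖} := by
  intro f hf n hn
  have hA := normA T hnorm f hf
  have hks : ∀ k : ℕ, ∀ x, 0 ≤ (k • f) x := by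
    intro k x
    have : (k • f) x = k • (f x) := rfl
    rw [this]
    exact nsmul_nonneg (hf x) k
  by_cases hu0 : ‖T f‖ = 0
  · have hTf : T f = 0 := norm_eq_zero.mp hu0
    have hTn : T (n • f) = 0 := norm_eq_zero.mp (by rw [hA n, hu0, mul_zero])
    ext y
    simp [hTf, hTn, hu0, hA n]
  have happ : ∀ (w : C₀(L₂, ℝ)) (y : L₂), w y ≤ ‖w‖ := fun w y => apply_le_norm w y
  -- bump-based norm bound
  have hu : 0 < ‖T f‖ := lt_of_le_of_ne (norm_nonneg _) (Ne.symm hu0)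
  obtain ⟨m, hm⟩ : ∃ m : ℕ, n = m + 1 := ⟨n - 1, by omega⟩
  have hmf : (n : ℝ) = (m : ℝ) + 1 := by rw [hm]; push_cast; ring
  -- generic bump bound: for nonneg w and y with w y < ‖w‖, produce h
  have hbump : ∀ (w : C₀(L₂, ℝ)), (∀ z, 0 ≤ w z) → ∀ y : L₂, w y < ‖w‖ →
      ∃ (h : C₀(L₂, ℝ)) (ε : ℝ), 0 < ε ∧ (∀ z, 0 ≤ h z) ∧ ‖h‖ ≤ ε ∧ h y = ε ∧
        ‖w + h‖ ≤ ‖w‖ := by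
    intro w hw y hylt
    set ε := (‖w‖ - w y) / 2 with hεdef
    have hε : 0 < ε := by rw [hεdef]; linarith
    have hUopen : IsOpen {z | w z < ‖w‖ - ε} := isOpen_lt w.continuous continuous_const
    have hyU : y ∈ {z | w z < ‖w‖ - ε} := by
      simp only [Set.mem_setOf_eq, hεdef]; linarith
    obtain ⟨h, hh0, hhε, hhy, hhout⟩ := bump hUopen hyU hε
    refine ⟨h, ε, hε, hh0, ?_, hhy, ?_⟩
    · exact norm_le_of h hε.le fun z => abs_le.mpr ⟨by linarith [hh0 z], hhε z⟩
    · refine norm_le_of _ (norm_nonneg w) fun z => ?_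
      have hz1 : 0 ≤ w z + h z := add_nonneg (hw z) (hh0 z)
      rw [ZeroAtInftyContinuousMap.add_apply, abs_of_nonneg hz1]
      by_cases hzU : z ∈ {z | w z < ‖w‖ - ε}
      · have := hhε z
        simp only [Set.mem_setOf_eq] at hzU
        linarith
      · rw [hhout z hzU]
        simpa using happ w z
  ext y
  simp only [Set.mem_setOf_eq]
  constructor
  · -- M_{T(nf)} ⊆ M_{Tf}
    intro hy
    by_contra hne
    have hlt : T f y < ‖T f‖ := lt_of_le_of_ne (happ _ y) hne
    obtain ⟨h, ε, hε, hh0, hhn, hhy, hub⟩ := hbump (T f) (hpos f hf) y hlt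
    obtain ⟨g, hg, hTg⟩ := hsurj h hh0
    have e1 : ‖T (f + g)‖ ≤ ‖T f‖ := by
      rw [hnorm f g hf hg, hTg]; exact hub
    have hdecomp : n • f + g = m • f + (f + g) := by
      rw [hm, succ_nsmul]; abel
    have e2 : ‖T (n • f + g)‖ ≤ (n : ℝ) * ‖T f‖ := by
      rw [hdecomp, hnorm _ _ (hks m) (fun x => add_nonneg (hf x) (hg x))]
      calc ‖T (m • f) + T (f + g)‖ ≤ ‖T (m • f)‖ + ‖T (f + g)‖ := norm_add_le _ _
        _ ≤ (m : ℝ) * ‖T f‖ + ‖T f‖ := by rw [hA m]; linarith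
        _ = (n : ℝ) * ‖T f‖ := by rw [hmf]; ring
    have e3 : ‖T (n • f + g)‖ = ‖T (n • f) + h‖ := by
      rw [hnorm _ _ (hks n) hg, hTg]
    have e4 : (n : ℝ) * ‖T f‖ + ε ≤ ‖T (n • f) + h‖ := by
      have := happ (T (n • f) + h) y
      rw [ZeroAtInftyContinuousMap.add_apply, hy, hhy, hA n] at this
      linarith
    linarith [e2, e3 ▸ e2]
  · -- M_{Tf} ⊆ M_{T(nf)}
    intro hy
    by_contra hne
    have hlt : T (n • f) y < ‖T (n • f)‖ := lt_of_le_of_ne (happ _ y) hne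
    obtain ⟨h, ε, hε, hh0, hhn, hhy, hub⟩ := hbump (T (n • f)) (hpos _ (hks n)) y hlt
    obtain ⟨g, hg, hTg⟩ := hsurj h hh0
    have hfg : ∀ x, 0 ≤ (f + g) x := fun x => add_nonneg (hf x) (hg x)
    have e1 : ‖T (n • f + g)‖ ≤ (n : ℝ) * ‖T f‖ := by
      rw [hnorm _ _ (hks n) hg, hTg, ← hA n]; exact hub
    have e2 : ‖T f‖ + ε ≤ ‖T (f + g)‖ := by
      have h1 := happ (T f + h) y
      rw [ZeroAtInftyContinuousMap.add_apply, hy, hhy] at h1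
      rw [hnorm f g hf hg, hTg]
      linarith
    have e3 : ‖T (n • (f + g))‖ = (n : ℝ) * ‖T (f + g)‖ := normA T hnorm (f + g) hfg n
    have hdecomp : n • (f + g) = (n • f + g) + m • g := by
      rw [nsmul_add, hm]; simp only [succ_nsmul]; abel
    have hgs : ∀ x, 0 ≤ (m • g) x := by
      intro x
      have : (m • g) x = m • (g x) := rfl
      rw [this]; exact nsmul_nonneg (hg x) m
    have e4 : ‖T (n • (f + g))‖ ≤ ‖T (n • f + g)‖ + (m : ℝ) * ε := by
      rw [hdecomp, hnorm _ _ (fun x => add_nonneg ((hks n) x) (hg x)) hgs]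
      have h5 : ‖T (m • g)‖ = (m : ℝ) * ‖T g‖ := normA T hnorm g hg m
      have h6 : ‖T g‖ ≤ ε := by rw [hTg]; exact hhn
      calc ‖T (n • f + g) + T (m • g)‖ ≤ ‖T (n • f + g)‖ + ‖T (m • g)‖ := norm_add_le _ _
        _ ≤ ‖T (n • f + g)‖ + (m : ℝ) * ε := by
            rw [h5]
            have : (0:ℝ) ≤ (m:ℝ) := Nat.cast_nonneg m
            nlinarith
    have e5 : (n : ℝ) * (‖T f‖ + ε) ≤ (n : ℝ) * ‖T (f + g)‖ :=
      mul_le_mul_of_nonneg_left e2 (Nat.cast_nonneg n)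
    have hn2 : (2 : ℝ) ≤ (n : ℝ) := by exact_mod_cast hn
    nlinarith [e3, e4, e5, e1]
end

section
/- Let L₁ and L₂ be locally compact Hausdorff spaces and let T : C₀⁺(L₁) → C₀⁺(L₂) be a surjective map satisfying ‖T(f+g)‖ = ‖T(f)+T(g)‖ for all f, g ∈ C₀⁺(L₁). Then for every f ∈ C₀⁺(L₁), every natural number n ≥ 2, and every y₀ ∈ M_{T(f)}, one has T(n·f)(y₀) = n·T(f)(y₀). -/
open scoped ZeroAtInfty
open Set Function

section AuxC0

variable {L : Type*} [TopologicalSpace L]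

private lemma c0_norm_le (f : C₀(L, ℝ)) {M : ℝ} (hM : 0 ≤ M) (h : ∀ x, |f x| ≤ M) :
    ‖f‖ ≤ M := by
  rw [← ZeroAtInftyContinuousMap.norm_toBCF_eq_norm]
  exact (BoundedContinuousFunction.norm_le hM).mpr h

private lemma c0_abs_apply_le_norm (f : C₀(L, ℝ)) (x : L) : |f x| ≤ ‖f‖ := by
  have := BoundedContinuousFunction.norm_coe_le_norm f.toBCF x
  rwa [ZeroAtInftyContinuousMap.norm_toBCF_eq_norm] at this

private lemma c0_apply_le_norm (f : C₀(L, ℝ)) (x : L) : f x ≤ ‖f‖ :=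
  (abs_le.mp (c0_abs_apply_le_norm f x)).2

private lemma c0_norm_le_norm_add (F G : C₀(L, ℝ)) (hF : ∀ y, 0 ≤ F y)
    (hG : ∀ y, 0 ≤ G y) : ‖F‖ ≤ ‖F + G‖ := by
  apply c0_norm_le F (norm_nonneg _)
  intro x
  rw [abs_of_nonneg (hF x)]
  calc F x ≤ F x + G x := le_add_of_nonneg_right (hG x)
    _ = (F + G) x := by simp
    _ ≤ ‖F + G‖ := c0_apply_le_norm (F + G) x

end AuxC0

section AuxT

variable {L₁ L₂ : Type*} [TopologicalSpace L₁] [TopologicalSpace L₂]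

private lemma nsmul_apply_nonneg {f : C₀(L₁, ℝ)} (hf : ∀ x, 0 ≤ f x) (k : ℕ) :
    ∀ x, 0 ≤ (k • f) x := by
  intro x
  rw [ZeroAtInftyContinuousMap.smul_apply]
  exact smul_nonneg (Nat.cast_nonneg' k) (hf x)

/-- `‖T (m • f)‖ = m * ‖T f‖` for `m ≥ 1`. -/
private lemma norm_T_nsmul
    (T : C₀(L₁, ℝ) → C₀(L₂, ℝ))
    (hpos : ∀ f : C₀(L₁, ℝ), (∀ x, 0 ≤ f x) → ∀ y, 0 ≤ T f y)
    (hnorm : ∀ f g : C₀(L₁, ℝ), (∀ x, 0 ≤ f x) → (∀ x, 0 ≤ g x) →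
      ‖T (f + g)‖ = ‖T f + T g‖)
    (f : C₀(L₁, ℝ)) (hf : ∀ x, 0 ≤ f x) :
    ∀ m : ℕ, 1 ≤ m → ‖T (m • f)‖ = m * ‖T f‖ := by
  set a : ℕ → ℝ := fun k => ‖T (k • f)‖ with ha
  have hone : a 1 = ‖T f‖ := by simp [ha]
  have hsub : ∀ k : ℕ, a (k + 1) ≤ a k + ‖T f‖ := by
    intro k
    have h1 : (k + 1) • f = k • f + f := succ_nsmul f k
    calc a (k + 1) = ‖T (k • f + f)‖ := by rw [ha]; simp [h1]
      _ = ‖T (k • f) + T f‖ := hnorm _ _ (nsmul_apply_nonneg hf k) hf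
      _ ≤ a k + ‖T f‖ := norm_add_le _ _
  have hdbl : ∀ k : ℕ, a (2 * k) = 2 * a k := by
    intro k
    have h1 : (2 * k) • f = k • f + k • f := by rw [two_mul, add_nsmul]
    have h2 : T (k • f) + T (k • f) = (2 : ℝ) • T (k • f) := (two_smul ℝ _).symm
    calc a (2 * k) = ‖T (k • f + k • f)‖ := by rw [ha]; simp [h1]
      _ = ‖T (k • f) + T (k • f)‖ :=
          hnorm _ _ (nsmul_apply_nonneg hf k) (nsmul_apply_nonneg hf k)
      _ = ‖(2 : ℝ) • T (k • f)‖ := by rw [h2]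
      _ = 2 * a k := by rw [norm_smul (2:ℝ) (T (k • f))]; simp [ha]
  have hpow : ∀ j : ℕ, a (2 ^ j) = 2 ^ j * ‖T f‖ := by
    intro j
    induction j with
    | zero => simpa using hone
    | succ j ih =>
        have : (2 : ℕ) ^ (j + 1) = 2 * 2 ^ j := by ring
        rw [this, hdbl, ih]
        push_cast
        ring
  have haddle : ∀ k j : ℕ, a (k + j) ≤ a k + j * ‖T f‖ := by
    intro k j
    induction j with
    | zero => simp
    | succ j ih =>
        calc a (k + (j + 1)) = a ((k + j) + 1) := by ring_nf
          _ ≤ a (k + j) + ‖T f‖ := hsub _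
          _ ≤ a k + j * ‖T f‖ + ‖T f‖ := by linarith
          _ = a k + (j + 1 : ℕ) * ‖T f‖ := by push_cast; ring
  have hupper : ∀ m : ℕ, 1 ≤ m → a m ≤ m * ‖T f‖ := by
    intro m hm
    have := haddle 1 (m - 1)
    rw [hone] at this
    have hm1 : 1 + (m - 1) = m := by omega
    rw [hm1] at this
    calc a m ≤ ‖T f‖ + (m - 1 : ℕ) * ‖T f‖ := this
      _ = m * ‖T f‖ := by
          rw [Nat.cast_sub hm]
          push_cast
          ring
  intro m hm
  refine le_antisymm (hupper m hm) ?_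
  have hle : m ≤ 2 ^ m := Nat.le_of_lt (Nat.lt_two_pow_self (n := m))
  have h1 : a (m + (2 ^ m - m)) ≤ a m + (2 ^ m - m : ℕ) * ‖T f‖ := haddle m _
  have h2 : m + (2 ^ m - m) = 2 ^ m := by omega
  rw [h2, hpow m] at h1
  rw [Nat.cast_sub hle] at h1
  push_cast at h1 ⊢
  linarith

end AuxT

theorem stmt_10 {L₁ L₂ : Type*}
    [TopologicalSpace L₁] [LocallyCompactSpace L₁] [T2Space L₁]
    [TopologicalSpace L₂] [LocallyCompactSpace L₂] [T2Space L₂]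
    (T : C₀(L₁, ℝ) → C₀(L₂, ℝ))
    (hpos : ∀ f : C₀(L₁, ℝ), (∀ x, 0 ≤ f x) → ∀ y, 0 ≤ T f y)
    (hsurj : ∀ h : C₀(L₂, ℝ), (∀ y, 0 ≤ h y) →
      ∃ f : C₀(L₁, ℝ), (∀ x, 0 ≤ f x) ∧ T f = h)
    (hnorm : ∀ f g : C₀(L₁, ℝ), (∀ x, 0 ≤ f x) → (∀ x, 0 ≤ g x) →
      ‖T (f + g)‖ = ‖T f + T g‖) :
    ∀ f : C₀(L₁, ℝ), (∀ x, 0 ≤ f x) → ∀ n : ℕ, 2 ≤ n →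
      ∀ y₀ : L₂, T f y₀ = ‖T f‖ → T (n • f) y₀ = n * T f y₀ := by
  intro f hf n hn y₀ hy₀
  have hn1 : 1 ≤ n := le_trans one_le_two hn
  have hfn : ∀ x, 0 ≤ (n • f) x := nsmul_apply_nonneg hf n
  have hNnorm : ‖T (n • f)‖ = n * ‖T f‖ := norm_T_nsmul T hpos hnorm f hf n hn1
  rw [hy₀]
  refine le_antisymm ?_ ?_
  · calc T (n • f) y₀ ≤ ‖T (n • f)‖ := c0_apply_le_norm _ y₀
      _ = n * ‖T f‖ := hNnorm
  · -- lower bound: n * ‖T f‖ ≤ T (n • f) y₀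
    refine le_of_forall_pos_le_add ?_
    intro ε hε
    set c := T (n • f) y₀ with hc
    -- the open set where T (n • f) < c + ε
    set U : Set L₂ := {y | T (n • f) y < c + ε} with hU
    have hUopen : IsOpen U := isOpen_lt (map_continuous (T (n • f))) continuous_const
    have hy₀U : y₀ ∈ U := by
      simp only [hU, mem_setOf_eq]
      linarith
    -- bump function at y₀ supported in U
    obtain ⟨φ, hφ1, hφ0, hφc, hφ01⟩ :=
      exists_continuous_one_zero_of_isCompact (isCompact_singleton (x := y₀))
        hUopen.isClosed_compl
        (by
          rw [disjoint_compl_right_iff_subset]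
          exact singleton_subset_iff.mpr hy₀U)
    set h : C₀(L₂, ℝ) := ⟨φ, hφc.is_zero_at_infty⟩ with hh
    have hhapp : ∀ y, h y = φ y := fun y => rfl
    have hh0 : ∀ y, 0 ≤ h y := fun y => (hφ01 y).1
    have hh1 : ∀ y, h y ≤ 1 := fun y => (hφ01 y).2
    have hhy₀ : h y₀ = 1 := hφ1 rfl
    have hhout : ∀ y ∉ U, h y = 0 := fun y hy => hφ0 hy
    -- pull back h
    obtain ⟨g, hg, hTg⟩ := hsurj h hh0
    -- (i) ‖T (f + g)‖ = ‖T f‖ + 1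
    have hfg : ‖T (f + g)‖ = ‖T f‖ + 1 := by
      rw [hnorm f g hf hg, hTg]
      refine le_antisymm ?_ ?_
      · refine c0_norm_le _ (by positivity) ?_
        intro y
        simp only [ZeroAtInftyContinuousMap.add_apply]
        rw [abs_of_nonneg (add_nonneg (hpos f hf y) (hh0 y))]
        exact add_le_add (c0_apply_le_norm _ y) (hh1 y)
      · calc ‖T f‖ + 1 = T f y₀ + h y₀ := by rw [hy₀, hhy₀]
          _ = (T f + h) y₀ := by simp
          _ ≤ ‖T f + h‖ := c0_apply_le_norm _ y₀
    -- nonnegativity of f + g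
    have hfg0 : ∀ x, 0 ≤ (f + g) x := by
      intro x
      simp only [ZeroAtInftyContinuousMap.add_apply]
      exact add_nonneg (hf x) (hg x)
    -- (ii) ‖T (n • (f + g))‖ = n * (‖T f‖ + 1)
    have hA : ‖T (n • f + n • g)‖ = n * (‖T f‖ + 1) := by
      have : n • f + n • g = n • (f + g) := (smul_add n f g).symm
      rw [this, norm_T_nsmul T hpos hnorm (f + g) hfg0 n hn1, hfg]
    -- (v) pointwise bound on T (n • f) + h
    have hmaxnn : (0 : ℝ) ≤ max (c + ε + 1) (n * ‖T f‖) := by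
      have : (0 : ℝ) ≤ n * ‖T f‖ := by positivity
      exact le_max_of_le_right this
    have hmax : ‖T (n • f) + h‖ ≤ max (c + ε + 1) (n * ‖T f‖) := by
      refine c0_norm_le _ hmaxnn ?_
      intro y
      simp only [ZeroAtInftyContinuousMap.add_apply]
      rw [abs_of_nonneg (add_nonneg (hpos _ hfn y) (hh0 y))]
      by_cases hyU : y ∈ U
      · refine le_max_of_le_left ?_
        have h1 : T (n • f) y < c + ε := hyU
        have h2 : h y ≤ 1 := hh1 y
        linarith
      · refine le_max_of_le_right ?_
        rw [hhout y hyU, add_zero]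
        calc T (n • f) y ≤ ‖T (n • f)‖ := c0_apply_le_norm _ y
          _ = n * ‖T f‖ := hNnorm
    -- (iii) peeling off copies of g
    have hknn : ∀ k : ℕ, ∀ x, 0 ≤ (n • f + k • g) x := by
      intro k x
      simp only [ZeroAtInftyContinuousMap.add_apply]
      exact add_nonneg (hfn x) (nsmul_apply_nonneg hg k x)
    have hhnorm1 : ‖h‖ ≤ 1 := by
      refine c0_norm_le _ zero_le_one ?_
      intro y
      rw [abs_of_nonneg (hh0 y)]
      exact hh1 y
    have hpeel : ∀ k : ℕ, ‖T (n • f + (k + 1) • g)‖ ≤ ‖T (n • f) + h‖ + k := by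
      intro k
      induction k with
      | zero =>
          have h1 : (0 + 1) • g = g := by simp
          rw [h1, hnorm _ _ hfn hg, hTg]
          simp
      | succ k ih =>
          have h1 : n • f + (k + 1 + 1) • g = (n • f + (k + 1) • g) + g := by
            rw [succ_nsmul g (k + 1), add_assoc]
          calc ‖T (n • f + (k + 1 + 1) • g)‖
              = ‖T (n • f + (k + 1) • g) + T g‖ := by
                rw [h1]; exact hnorm _ _ (hknn (k + 1)) hg
            _ ≤ ‖T (n • f + (k + 1) • g)‖ + ‖T g‖ := norm_add_le _ _
            _ ≤ (‖T (n • f) + h‖ + k) + 1 := by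
                rw [hTg]; exact add_le_add ih hhnorm1
            _ = ‖T (n • f) + h‖ + (k + 1 : ℕ) := by push_cast; ring
    -- combine
    have hfinal : (n : ℝ) * (‖T f‖ + 1) ≤ ‖T (n • f) + h‖ + ((n : ℝ) - 1) := by
      have h1 := hpeel (n - 1)
      have h2 : n - 1 + 1 = n := by omega
      rw [h2] at h1
      rw [← hA]
      calc ‖T (n • f + n • g)‖ ≤ ‖T (n • f) + h‖ + ((n - 1 : ℕ) : ℝ) := h1
        _ = ‖T (n • f) + h‖ + ((n : ℝ) - 1) := by rw [Nat.cast_sub hn1]; norm_num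
    have hn2 : (2 : ℝ) ≤ (n : ℝ) := by exact_mod_cast hn
    rcases max_cases (c + ε + 1) (n * ‖T f‖) with ⟨heq, _⟩ | ⟨heq, _⟩ <;>
      rw [heq] at hmax <;> linarith
end

section
/- Let L be a locally compact Hausdorff space, u ∈ C₀⁺(L), and y₀ ∈ L. If u(y₀) < ‖u‖, then there exists v ∈ C₀⁺(L) with v(y₀) = ‖v‖ and ‖v‖ > 0 such that (u+v)(y₀) = ‖u+v‖ and ‖u+v‖ = ‖u‖. -/
open scoped ZeroAtInfty

open Set

lemma norm_eq_of_forall_le {L : Type*} [TopologicalSpace L]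
    (f : C₀(L, ℝ)) (y : L) (hy : 0 ≤ f y) (h : ∀ x, |f x| ≤ f y) : ‖f‖ = f y := by
  rw [← ZeroAtInftyContinuousMap.norm_toBCF_eq_norm]
  apply le_antisymm
  · exact (BoundedContinuousFunction.norm_le hy).2 h
  · calc f y ≤ |f y| := le_abs_self _
      _ = ‖f.toBCF y‖ := rfl
      _ ≤ ‖f.toBCF‖ := BoundedContinuousFunction.norm_coe_le_norm _ _

theorem stmt_12 {L : Type*}
    [TopologicalSpace L] [LocallyCompactSpace L] [T2Space L]
    (u : C₀(L, ℝ)) (hu : ∀ x, 0 ≤ u x) (y₀ : L) (hy₀ : u y₀ < ‖u‖) :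
    ∃ v : C₀(L, ℝ), (∀ x, 0 ≤ v x) ∧ v y₀ = ‖v‖ ∧ 0 < ‖v‖ ∧
      (u + v) y₀ = ‖u + v‖ ∧ ‖u + v‖ = ‖u‖ := by
  obtain ⟨f, hf1, -, hfc, hf01⟩ :=
    exists_continuous_one_zero_of_isCompact (isCompact_singleton (x := y₀))
      isClosed_empty (disjoint_empty _)
  set c : ℝ := ‖u‖ - u y₀ with hc
  have hcpos : 0 < c := by simp [hc]; linarith
  have hule : ∀ x, |u x| ≤ ‖u‖ := fun x => by
    calc |u x| = ‖u.toBCF x‖ := rfl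
      _ ≤ ‖u.toBCF‖ := BoundedContinuousFunction.norm_coe_le_norm _ _
      _ = ‖u‖ := ZeroAtInftyContinuousMap.norm_toBCF_eq_norm
  have hule' : ∀ x, u x ≤ ‖u‖ := fun x => (le_abs_self _).trans (hule x)
  have hcont : Continuous fun x => min c (‖u‖ - u x) * f x := by
    apply Continuous.mul
    · exact continuous_const.min (continuous_const.sub (map_continuous u))
    · exact map_continuous f
  have hsupp : HasCompactSupport fun x => min c (‖u‖ - u x) * f x :=
    HasCompactSupport.mul_left hfc
  set v : C₀(L, ℝ) :=
    ⟨⟨fun x => min c (‖u‖ - u x) * f x, hcont⟩, hsupp.is_zero_at_infty⟩ with hv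
  have hvdef : ∀ x, v x = min c (‖u‖ - u x) * f x := fun x => rfl
  have hf0 : ∀ x, 0 ≤ f x := fun x => (hf01 x).1
  have hfle : ∀ x, f x ≤ 1 := fun x => (hf01 x).2
  have hvnonneg : ∀ x, 0 ≤ v x := by
    intro x
    rw [hvdef]
    apply mul_nonneg _ (hf0 x)
    exact le_min hcpos.le (by linarith [hule' x])
  have hvy : v y₀ = c := by
    rw [hvdef]
    simp [hf1 (mem_singleton y₀), hc]
  have hvle : ∀ x, v x ≤ c := by
    intro x
    rw [hvdef]
    calc min c (‖u‖ - u x) * f x ≤ min c (‖u‖ - u x) * 1 := by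
          apply mul_le_mul_of_nonneg_left (hfle x)
          exact le_min hcpos.le (by linarith [hule' x])
      _ ≤ c := by rw [mul_one]; exact min_le_left _ _
  have hnv : ‖v‖ = c := by
    rw [← hvy]
    exact norm_eq_of_forall_le v y₀ (hvnonneg y₀)
      (fun x => by rw [abs_of_nonneg (hvnonneg x), hvy]; exact hvle x)
  have huv : ∀ x, (u + v) x = u x + v x := fun x => rfl
  have huvle : ∀ x, (u + v) x ≤ ‖u‖ := by
    intro x
    rw [huv, hvdef]
    rcases le_or_gt c (‖u‖ - u x) with h | h
    · have : min c (‖u‖ - u x) * f x ≤ ‖u‖ - u x := by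
        calc min c (‖u‖ - u x) * f x ≤ min c (‖u‖ - u x) * 1 :=
              mul_le_mul_of_nonneg_left (hfle x) (le_min hcpos.le (by linarith [hule' x]))
          _ = min c (‖u‖ - u x) := mul_one _
          _ ≤ ‖u‖ - u x := min_le_right _ _
      linarith
    · have : min c (‖u‖ - u x) * f x ≤ ‖u‖ - u x := by
        calc min c (‖u‖ - u x) * f x ≤ min c (‖u‖ - u x) * 1 :=
              mul_le_mul_of_nonneg_left (hfle x) (le_min hcpos.le (by linarith [hule' x]))
          _ = min c (‖u‖ - u x) := mul_one _
          _ ≤ ‖u‖ - u x := min_le_right _ _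
      linarith
  have huvy : (u + v) y₀ = ‖u‖ := by
    rw [huv, hvy, hc]; ring
  have hnuv : ‖u + v‖ = ‖u‖ := by
    rw [← huvy]
    apply norm_eq_of_forall_le
    · rw [huvy]; exact norm_nonneg u
    · intro x
      rw [abs_of_nonneg (by rw [huv]; exact add_nonneg (hu x) (hvnonneg x)), huvy]
      exact huvle x
  exact ⟨v, hvnonneg, by rw [hvy, hnv], by rw [hnv]; exact hcpos, by rw [huvy, hnuv], hnuv⟩
end

section
/- Let L be a locally compact Hausdorff space, u, v ∈ C₀⁺(L), and y₀ ∈ L. Then there exists h ∈ C₀⁺(L) with h(y₀) = ‖h‖ such that (u+h)(y₀) = ‖u+h‖ and (v+h)(y₀) = ‖v+h‖. -/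
open scoped ZeroAtInfty

/-- If a nonnegative function in `C₀` attains its pointwise supremum at `y₀`,
then its value there is the norm. -/
lemma norm_eq_of_max {L : Type*} [TopologicalSpace L] (f : C₀(L, ℝ)) (y₀ : L)
    (h0 : ∀ x, 0 ≤ f x) (hle : ∀ x, f x ≤ f y₀) : f y₀ = ‖f‖ := by
  rw [← ZeroAtInftyContinuousMap.norm_toBCF_eq_norm]
  refine le_antisymm ?_ ?_
  · calc f y₀ ≤ ‖f y₀‖ := le_abs_self _
    _ ≤ ‖f.toBCF‖ := BoundedContinuousFunction.norm_coe_le_norm f.toBCF y₀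
  · refine (BoundedContinuousFunction.norm_le (h0 y₀)).2 fun x => ?_
    show |f x| ≤ f y₀
    rw [abs_of_nonneg (h0 x)]
    exact hle x

theorem stmt_13 {L : Type*}
    [TopologicalSpace L] [LocallyCompactSpace L] [T2Space L]
    (u v : C₀(L, ℝ)) (hu : ∀ x, 0 ≤ u x) (hv : ∀ x, 0 ≤ v x) (y₀ : L) :
    ∃ h : C₀(L, ℝ), (∀ x, 0 ≤ h x) ∧ h y₀ = ‖h‖ ∧
      (u + h) y₀ = ‖u + h‖ ∧ (v + h) y₀ = ‖v + h‖ := by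
  obtain ⟨g, hg1, -, hgsupp, hg01⟩ :=
    exists_continuous_one_zero_of_isCompact (isCompact_singleton (x := y₀))
      isClosed_empty (Set.disjoint_empty _)
  have hgy₀ : g y₀ = 1 := hg1 rfl
  -- the "obstruction" function
  set m : L → ℝ := fun x => max 0 (max (u x - u y₀) (v x - v y₀)) with hm
  have hmcont : Continuous m := by fun_prop
  have hm0 : ∀ x, 0 ≤ m x := fun x => le_max_left _ _
  set a : ℝ := ‖u‖ + ‖v‖ + 1 with ha
  have hua : ∀ x, u x ≤ ‖u‖ := fun x => by
    rw [← ZeroAtInftyContinuousMap.norm_toBCF_eq_norm]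
    calc u x ≤ |u x| := le_abs_self _
    _ ≤ ‖u.toBCF‖ := BoundedContinuousFunction.norm_coe_le_norm u.toBCF x
  have hva : ∀ x, v x ≤ ‖v‖ := fun x => by
    rw [← ZeroAtInftyContinuousMap.norm_toBCF_eq_norm]
    calc v x ≤ |v x| := le_abs_self _
    _ ≤ ‖v.toBCF‖ := BoundedContinuousFunction.norm_coe_le_norm v.toBCF x
  have hma : ∀ x, m x ≤ a := by
    intro x
    have h1 : u x - u y₀ ≤ ‖u‖ := by
      have := hu y₀; have := hua x; linarith
    have h2 : v x - v y₀ ≤ ‖v‖ := by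
      have := hv y₀; have := hva x; linarith
    have hn : (0:ℝ) ≤ ‖u‖ := norm_nonneg _
    have hn' : (0:ℝ) ≤ ‖v‖ := norm_nonneg _
    simp only [hm, max_le_iff, ha]
    refine ⟨by linarith, by linarith, by linarith⟩
  have hmy₀ : m y₀ = 0 := by simp [hm]
  -- the function h
  have hcont : Continuous fun x => (a - m x) * g x :=
    (continuous_const.sub hmcont).mul g.continuous
  have hsupp : HasCompactSupport fun x => (a - m x) * g x :=
    HasCompactSupport.mul_left hgsupp
  let h : C₀(L, ℝ) := ⟨⟨fun x => (a - m x) * g x, hcont⟩, hsupp.is_zero_at_infty⟩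
  have hh : ∀ x, h x = (a - m x) * g x := fun x => rfl
  have ham : ∀ x, 0 ≤ a - m x := fun x => sub_nonneg.2 (hma x)
  have hh0 : ∀ x, 0 ≤ h x := fun x =>
    mul_nonneg (ham x) (hg01 x).1
  have hhy₀ : h y₀ = a := by simp [hh, hmy₀, hgy₀]
  have hhle : ∀ x, h x ≤ a - m x := by
    intro x
    rw [hh]
    calc (a - m x) * g x ≤ (a - m x) * 1 := by
          exact mul_le_mul_of_nonneg_left (hg01 x).2 (ham x)
    _ = a - m x := mul_one _
  refine ⟨h, hh0, ?_, ?_, ?_⟩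
  · refine norm_eq_of_max h y₀ hh0 fun x => ?_
    calc h x ≤ a - m x := hhle x
    _ ≤ a := by have := hm0 x; linarith
    _ = h y₀ := hhy₀.symm
  · refine norm_eq_of_max (u + h) y₀ (fun x => add_nonneg (hu x) (hh0 x)) fun x => ?_
    have hmu : u x - u y₀ ≤ m x := le_max_of_le_right (le_max_left _ _)
    have := hhle x
    simp only [ZeroAtInftyContinuousMap.add_apply, hhy₀]
    linarith
  · refine norm_eq_of_max (v + h) y₀ (fun x => add_nonneg (hv x) (hh0 x)) fun x => ?_
    have hmv : v x - v y₀ ≤ m x := le_max_of_le_right (le_max_right _ _)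
    have := hhle x
    simp only [ZeroAtInftyContinuousMap.add_apply, hhy₀]
    linarith
end

section
/- Let L₁ and L₂ be locally compact Hausdorff spaces and let T : C₀⁺(L₁) → C₀⁺(L₂) be a surjective map satisfying ‖T(f+g)‖ = ‖T(f)+T(g)‖ for all f, g ∈ C₀⁺(L₁). Let f, g ∈ C₀⁺(L₁) and y₀ ∈ L₂. If T(f)(y₀) = ‖T(f)‖ and T(g)(y₀) = ‖T(g)‖, then T(f+g)(y₀) = ‖T(f+g)‖ and T(f+g)(y₀) = T(f)(y₀) + T(g)(y₀). -/
open scoped ZeroAtInfty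

lemma czero_apply_le_norm {α : Type*} [TopologicalSpace α] (u : C₀(α, ℝ)) (y : α) :
    u y ≤ ‖u‖ := by
  have h := BoundedContinuousFunction.norm_coe_le_norm u.toBCF y
  rw [ZeroAtInftyContinuousMap.norm_toBCF_eq_norm] at h
  calc u y ≤ |u y| := le_abs_self _
    _ ≤ ‖u‖ := by simpa [Real.norm_eq_abs] using h

lemma czero_norm_le {α : Type*} [TopologicalSpace α] (u : C₀(α, ℝ)) {C : ℝ} (hC : 0 ≤ C)
    (h : ∀ y, |u y| ≤ C) : ‖u‖ ≤ C := by
  rw [← ZeroAtInftyContinuousMap.norm_toBCF_eq_norm]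
  exact (BoundedContinuousFunction.norm_le hC).2 fun y => by simpa [Real.norm_eq_abs] using h y

theorem stmt_14 {L₁ L₂ : Type*}
    [TopologicalSpace L₁] [LocallyCompactSpace L₁] [T2Space L₁]
    [TopologicalSpace L₂] [LocallyCompactSpace L₂] [T2Space L₂]
    (T : C₀(L₁, ℝ) → C₀(L₂, ℝ))
    (hpos : ∀ f : C₀(L₁, ℝ), (∀ x, 0 ≤ f x) → ∀ y, 0 ≤ T f y)
    (hsurj : ∀ h : C₀(L₂, ℝ), (∀ y, 0 ≤ h y) →
      ∃ f : C₀(L₁, ℝ), (∀ x, 0 ≤ f x) ∧ T f = h)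
    (hnorm : ∀ f g : C₀(L₁, ℝ), (∀ x, 0 ≤ f x) → (∀ x, 0 ≤ g x) →
      ‖T (f + g)‖ = ‖T f + T g‖)
    (f g : C₀(L₁, ℝ)) (hf : ∀ x, 0 ≤ f x) (hg : ∀ x, 0 ≤ g x)
    (y₀ : L₂) (hfy : T f y₀ = ‖T f‖) (hgy : T g y₀ = ‖T g‖) :
    T (f + g) y₀ = ‖T (f + g)‖ ∧ T (f + g) y₀ = T f y₀ + T g y₀ := by
  set a := ‖T f‖ with ha
  set b := ‖T g‖ with hb
  have ha0 : 0 ≤ a := norm_nonneg _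
  have hb0 : 0 ≤ b := norm_nonneg _
  have hfg : ∀ x, 0 ≤ (f + g) x := fun x => by
    simp only [ZeroAtInftyContinuousMap.coe_add, Pi.add_apply]
    exact add_nonneg (hf x) (hg x)
  -- Step 1 : ‖T (f+g)‖ = a + b
  have hM : ‖T (f + g)‖ = a + b := by
    rw [hnorm f g hf hg]
    refine le_antisymm (norm_add_le _ _) ?_
    have h := czero_apply_le_norm (T f + T g) y₀
    simp only [ZeroAtInftyContinuousMap.coe_add, Pi.add_apply] at h
    rw [hfy, hgy] at h
    exact h
  -- Step 2 : the key estimate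
  have key : ∀ δ : ℝ, 0 < δ → a + b - 3 * δ ≤ T (f + g) y₀ := by
    intro δ hδ
    set c : ℝ := a + b + 3 * δ + 1 with hc
    have hc0 : 0 < c := by positivity
    -- the neighbourhood U of y₀
    set U : Set L₂ := {y | T (f + g) y < T (f + g) y₀ + δ} ∩ {y | a - δ < T f y} with hU
    have hUopen : IsOpen U :=
      ((isOpen_lt (map_continuous (T (f + g))) continuous_const).inter
        (isOpen_lt continuous_const (map_continuous (T f))))
    have hy₀U : y₀ ∈ U := by
      constructor
      · exact lt_add_of_pos_right _ hδ
      · simp only [Set.mem_setOf_eq, hfy, ← ha]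
        linarith
    obtain ⟨K, hKcomp, hyK, hKU⟩ := exists_compact_subset hUopen hy₀U
    -- the bump function φ at y₀ supported in K
    obtain ⟨φ, hφ1, hφ0, hφc, hφ01⟩ := exists_continuous_one_zero_of_isCompact
      (isCompact_singleton (x := y₀)) (isOpen_interior (s := K)).isClosed_compl
      (by simp [Set.disjoint_left, hyK])
    have hφy₀ : φ y₀ = 1 := hφ1 rfl
    have hφsupp : tsupport φ ⊆ K :=
      closure_minimal (fun y hy => by
        by_contra hyK'
        exact hy (hφ0 (by simpa using fun h => hyK' (interior_subset h)))) hKcomp.isClosed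
    have hφsupp' : Function.support φ ⊆ tsupport φ := subset_closure
    let φ₀ : C₀(L₂, ℝ) := ⟨φ, hφc.is_zero_at_infty⟩
    have hφ₀app : ∀ y, (c • φ₀) y = c * φ y := fun y => rfl
    obtain ⟨k, hk, hTk⟩ := hsurj (c • φ₀)
      (fun y => by rw [hφ₀app]; exact mul_nonneg hc0.le (hφ01 y).1)
    have hTky : ∀ y, T k y = c * φ y := fun y => by rw [hTk]; rfl
    have hgk : ∀ x, 0 ≤ (g + k) x := fun x => by
      simp only [ZeroAtInftyContinuousMap.coe_add, Pi.add_apply]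
      exact add_nonneg (hg x) (hk x)
    have hgkpos : ∀ y, 0 ≤ T (g + k) y := hpos _ hgk
    -- ‖T (g + k)‖ = b + c
    have hgk_norm : ‖T (g + k)‖ = b + c := by
      rw [hnorm g k hg hk]
      refine le_antisymm ?_ ?_
      · refine czero_norm_le _ (by linarith) fun y => ?_
        simp only [ZeroAtInftyContinuousMap.coe_add, Pi.add_apply]
        rw [hTky, abs_of_nonneg (add_nonneg (hpos g hg y) (mul_nonneg hc0.le (hφ01 y).1))]
        have h1 : T g y ≤ b := czero_apply_le_norm (T g) y
        have h2 : c * φ y ≤ c * 1 := mul_le_mul_of_nonneg_left (hφ01 y).2 hc0.le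
        linarith
      · have h := czero_apply_le_norm (T g + T k) y₀
        simp only [ZeroAtInftyContinuousMap.coe_add, Pi.add_apply] at h
        rw [hgy, hTky, hφy₀, mul_one] at h
        exact h
    -- outside the support of φ, T (g+k) is small
    have hout : ∀ y₂, y₂ ∉ tsupport φ → T (g + k) y₂ < b + c - (a + δ) := by
      intro y₂ hy₂
      by_contra hge
      push_neg at hge
      obtain ⟨ψ, hψ1, hψ0, hψc, hψ01⟩ := exists_continuous_one_zero_of_isCompact
        (isCompact_singleton (x := y₂)) (isClosed_tsupport φ)
        (by simpa [Set.disjoint_left] using hy₂)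
      let ψ₀ : C₀(L₂, ℝ) := ⟨ψ, hψc.is_zero_at_infty⟩
      obtain ⟨w, hw, hTw⟩ := hsurj (c • ψ₀)
        (fun y => mul_nonneg hc0.le (hψ01 y).1)
      have hTwy : ∀ y, T w y = c * ψ y := fun y => by rw [hTw]; rfl
      have hkw : ∀ x, 0 ≤ (k + w) x := fun x => by
        simp only [ZeroAtInftyContinuousMap.coe_add, Pi.add_apply]
        exact add_nonneg (hk x) (hw x)
      have hA : b + c - (a + δ) + c ≤ ‖T (g + k + w)‖ := by
        rw [hnorm (g + k) w hgk hw]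
        have h := czero_apply_le_norm (T (g + k) + T w) y₂
        simp only [ZeroAtInftyContinuousMap.coe_add, Pi.add_apply] at h
        have hψy₂ : ψ y₂ = 1 := hψ1 rfl
        rw [hTwy, hψy₂, mul_one] at h
        linarith
      have hB : ‖T (g + k + w)‖ ≤ b + c := by
        have hassoc : g + k + w = g + (k + w) := add_assoc _ _ _
        rw [hassoc, hnorm g (k + w) hg hkw]
        refine le_trans (norm_add_le _ _) ?_
        have hkw_norm : ‖T (k + w)‖ ≤ c := by
          rw [hnorm k w hk hw]
          refine czero_norm_le _ hc0.le fun y => ?_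
          simp only [ZeroAtInftyContinuousMap.coe_add, Pi.add_apply]
          rw [hTky, hTwy]
          by_cases hmem : y ∈ tsupport φ
          · have hψy : ψ y = 0 := hψ0 hmem
            rw [hψy, mul_zero, add_zero,
              abs_of_nonneg (mul_nonneg hc0.le (hφ01 y).1)]
            calc c * φ y ≤ c * 1 := mul_le_mul_of_nonneg_left (hφ01 y).2 hc0.le
              _ = c := mul_one c
          · have hφy : φ y = 0 := image_eq_zero_of_notMem_tsupport hmem
            rw [hφy, mul_zero, zero_add,
              abs_of_nonneg (mul_nonneg hc0.le (hψ01 y).1)]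
            calc c * ψ y ≤ c * 1 := mul_le_mul_of_nonneg_left (hψ01 y).2 hc0.le
              _ = c := mul_one c
        linarith
      linarith
    -- a near-maximum point of T (g + k)
    have hy₃ex : ∃ y₃, b + c - δ < T (g + k) y₃ := by
      by_contra h
      push_neg at h
      have := czero_norm_le (T (g + k)) (C := b + c - δ) (by linarith)
        (fun y => by rw [abs_of_nonneg (hgkpos y)]; exact h y)
      rw [hgk_norm] at this
      linarith
    obtain ⟨y₃, hy₃⟩ := hy₃ex
    have hy₃K : y₃ ∈ tsupport φ := by
      by_contra h
      have := hout y₃ h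
      linarith
    have hy₃U : y₃ ∈ U := hKU (hφsupp hy₃K)
    -- lower bound for ‖T (f + g + k)‖
    have hlow : (a - δ) + (b + c - δ) ≤ ‖T (f + g + k)‖ := by
      have hassoc : f + g + k = f + (g + k) := add_assoc _ _ _
      rw [hassoc, hnorm f (g + k) hf hgk]
      have h := czero_apply_le_norm (T f + T (g + k)) y₃
      simp only [ZeroAtInftyContinuousMap.coe_add, Pi.add_apply] at h
      have h1 : a - δ < T f y₃ := hy₃U.2
      linarith
    -- upper bound for ‖T (f + g + k)‖
    have hup : ‖T (f + g + k)‖ ≤ max (a + b) (T (f + g) y₀ + δ + c) := by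
      rw [hnorm (f + g) k hfg hk]
      refine czero_norm_le _ (le_max_of_le_left (by linarith)) fun y => ?_
      simp only [ZeroAtInftyContinuousMap.coe_add, Pi.add_apply]
      rw [hTky, abs_of_nonneg (add_nonneg (hpos _ hfg y) (mul_nonneg hc0.le (hφ01 y).1))]
      by_cases hmem : φ y = 0
      · rw [hmem, mul_zero, add_zero]
        refine le_max_of_le_left ?_
        rw [← hM]
        exact czero_apply_le_norm _ y
      · have hyU : y ∈ U := hKU (hφsupp (hφsupp' hmem))
        refine le_max_of_le_right ?_
        have h1 : T (f + g) y < T (f + g) y₀ + δ := hyU.1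
        have h2 : c * φ y ≤ c * 1 := mul_le_mul_of_nonneg_left (hφ01 y).2 hc0.le
        linarith
    -- combine
    have hcomb : (a - δ) + (b + c - δ) ≤ max (a + b) (T (f + g) y₀ + δ + c) :=
      le_trans hlow hup
    rcases le_max_iff.mp hcomb with h | h
    · linarith
    · linarith
  -- conclusion
  have hge : a + b ≤ T (f + g) y₀ := by
    refine le_of_forall_pos_le_add fun ε hε => ?_
    have := key (ε / 3) (by linarith)
    linarith
  have hle : T (f + g) y₀ ≤ a + b := hM ▸ czero_apply_le_norm (T (f + g)) y₀
  have heq : T (f + g) y₀ = a + b := le_antisymm hle hge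
  exact ⟨by rw [heq, hM], by rw [heq, hfy, hgy]⟩
end

section
/- Let K₁ and K₂ be compact Hausdorff spaces and let T : C⁺(K₁) → C⁺(K₂) be a bijective map satisfying ‖T(f+g)‖ = ‖T(f)+T(g)‖ for all f, g ∈ C⁺(K₁). Then T is an order isomorphism: for all f, g ∈ C⁺(K₁), f ≤ g if and only if T(f) ≤ T(g). -/
namespace Stmt16Aux

variable {Y : Type*} [TopologicalSpace Y] [CompactSpace Y] [T2Space Y]

lemma norm_eval_le (h : C(Y, ℝ)) (ξ : Y) : h ξ ≤ ‖h‖ :=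
  (le_abs_self _).trans (by simpa [Real.norm_eq_abs] using h.norm_coe_le_norm ξ)

lemma norm_le_of_le (h : C(Y, ℝ)) (C : ℝ) (hC : 0 ≤ C) (hpos : ∀ ζ, 0 ≤ h ζ)
    (hb : ∀ ζ, h ζ ≤ C) : ‖h‖ ≤ C := by
  refine (ContinuousMap.norm_le _ hC).mpr fun ζ => ?_
  rw [Real.norm_eq_abs, abs_of_nonneg (hpos ζ)]
  exact hb ζ

lemma exists_peak (h : C(Y, ℝ)) (hpos : ∀ ζ, 0 ≤ h ζ) (ξ₀ : Y) :
    ∃ η, ‖h‖ = h η ∧ ∀ ζ, h ζ ≤ h η := by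
  obtain ⟨η, -, hη'⟩ := isCompact_univ.exists_isMaxOn ⟨ξ₀, Set.mem_univ ξ₀⟩
    h.continuous.continuousOn
  have hη : ∀ ζ, h ζ ≤ h η := fun ζ => hη' (Set.mem_univ ζ)
  exact ⟨η, le_antisymm (norm_le_of_le h (h η) (hpos η) hpos hη) (norm_eval_le h η), hη⟩

lemma bump (ξ₀ : Y) (V : Set Y) (hV : IsOpen V) (hξ : ξ₀ ∈ V) :
    ∃ κ : C(Y, ℝ), (∀ ζ, 0 ≤ κ ζ) ∧ (∀ ζ, κ ζ ≤ 1) ∧ κ ξ₀ = 1 ∧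
      ∀ ζ, ζ ∉ V → κ ζ = 0 := by
  obtain ⟨f, hf0, hf1, hf01⟩ := exists_continuous_zero_one_of_isClosed
    hV.isClosed_compl (isClosed_singleton (x := ξ₀))
    (Set.disjoint_singleton_right.mpr (by simpa using hξ))
  refine ⟨f, fun ζ => (hf01 ζ).1, fun ζ => (hf01 ζ).2, ?_, fun ζ hζ => ?_⟩
  · simpa using hf1 (Set.mem_singleton ξ₀)
  · simpa using hf0 hζ

lemma testLe (p q : C(Y, ℝ)) (hp : ∀ ζ, 0 ≤ p ζ) (hq : ∀ ζ, 0 ≤ q ζ) (δ : ℝ)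
    (h : ∀ k : C(Y, ℝ), (∀ ζ, 0 ≤ k ζ) → ‖p + k‖ ≤ ‖q + k‖ + δ) :
    ∀ ξ, p ξ ≤ q ξ + δ := by
  intro ξ₀
  have key : ∀ ε : ℝ, 0 < ε → p ξ₀ ≤ q ξ₀ + δ + ε := by
    intro ε hε
    have hVopen : IsOpen {ζ | q ζ < q ξ₀ + ε} :=
      isOpen_lt q.continuous continuous_const
    have hξV : ξ₀ ∈ {ζ | q ζ < q ξ₀ + ε} := by
      simp only [Set.mem_setOf_eq]; linarith
    obtain ⟨κ, hκ0, hκ1, hκξ, hκV⟩ := bump ξ₀ _ hVopen hξV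
    set M : ℝ := ‖p‖ + ‖q‖ + 1 with hM
    have hM0 : 0 < M := by positivity
    have hκpos : ∀ ζ, 0 ≤ (M • κ) ζ := by
      intro ζ
      simp only [ContinuousMap.smul_apply, smul_eq_mul]
      exact mul_nonneg hM0.le (hκ0 ζ)
    have h1 : p ξ₀ + M ≤ ‖p + M • κ‖ := by
      have := norm_eval_le (p + M • κ) ξ₀
      simpa [hκξ] using this
    have h2 : ‖q + M • κ‖ ≤ q ξ₀ + ε + M := by
      refine norm_le_of_le _ _ (by linarith [hq ξ₀]) (fun ζ => add_nonneg (hq ζ) (hκpos ζ)) ?_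
      intro ζ
      by_cases hζ : ζ ∈ {ζ | q ζ < q ξ₀ + ε}
      · simp only [Set.mem_setOf_eq] at hζ
        have : M * κ ζ ≤ M * 1 := by
          exact mul_le_mul_of_nonneg_left (hκ1 ζ) hM0.le
        simp only [ContinuousMap.add_apply, ContinuousMap.smul_apply, smul_eq_mul]
        linarith
      · have hz : κ ζ = 0 := hκV ζ hζ
        have : q ζ ≤ ‖q‖ := norm_eval_le q ζ
        simp only [ContinuousMap.add_apply, ContinuousMap.smul_apply, smul_eq_mul, hz,
          mul_zero, add_zero]
        have h0 : 0 ≤ q ξ₀ := hq ξ₀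
        have hp0 : (0:ℝ) ≤ ‖p‖ := norm_nonneg _
        linarith
    have h3 := h (M • κ) hκpos
    linarith
  by_contra hcon
  push_neg at hcon
  have := key ((p ξ₀ - (q ξ₀ + δ)) / 2) (by linarith)
  linarith

variable {X : Type*} [TopologicalSpace X] [CompactSpace X] [T2Space X]

/-- The key lemma: T is additive on the positive cone. -/
lemma Tadd (T : C(X, ℝ) → C(Y, ℝ))
    (hpos : ∀ f : C(X, ℝ), (∀ a, 0 ≤ f a) → ∀ ξ, 0 ≤ T f ξ)
    (hsurj : ∀ h : C(Y, ℝ), (∀ ξ, 0 ≤ h ξ) →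
      ∃ f : C(X, ℝ), (∀ a, 0 ≤ f a) ∧ T f = h)
    (hnorm : ∀ f g : C(X, ℝ), (∀ a, 0 ≤ f a) → (∀ a, 0 ≤ g a) →
      ‖T (f + g)‖ = ‖T f + T g‖)
    (x y : C(X, ℝ)) (hx : ∀ a, 0 ≤ x a) (hy : ∀ a, 0 ≤ y a) (ξ₀ : Y) :
    T (x + y) ξ₀ = T x ξ₀ + T y ξ₀ := by
  -- pointwise nonnegativity of sums
  have padd : ∀ (u v : C(X, ℝ)), (∀ a, 0 ≤ u a) → (∀ a, 0 ≤ v a) →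
      ∀ a, 0 ≤ (u + v) a := by
    intro u v hu hv a
    simp only [ContinuousMap.add_apply]
    exact add_nonneg (hu a) (hv a)
  -- L4 : T (z + e) ≤ T z + ‖T e‖ pointwise
  have hL4 : ∀ z e : C(X, ℝ), (∀ a, 0 ≤ z a) → (∀ a, 0 ≤ e a) →
      ∀ ξ, T (z + e) ξ ≤ T z ξ + ‖T e‖ := by
    intro z e hz he
    refine testLe (T (z + e)) (T z) (hpos _ (padd z e hz he)) (hpos z hz) ‖T e‖ ?_
    intro k hk
    obtain ⟨w, hw, hwT⟩ := hsurj k hk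
    rw [← hwT]
    have e1 : ‖T (z + e) + T w‖ = ‖T ((z + e) + w)‖ :=
      (hnorm (z + e) w (padd z e hz he) hw).symm
    have e2 : (z + e) + w = e + (z + w) := by ring
    have e3 : ‖T (e + (z + w))‖ = ‖T e + T (z + w)‖ :=
      hnorm e (z + w) he (padd z w hz hw)
    have e4 : ‖T e + T (z + w)‖ ≤ ‖T e‖ + ‖T (z + w)‖ := norm_add_le _ _
    have e5 : ‖T (z + w)‖ = ‖T z + T w‖ := hnorm z w hz hw
    rw [e1, e2, e3]
    linarith [e4, e5.le, e5.ge]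
  -- constants
  set A : ℝ := ‖T x‖ with hA
  set B : ℝ := ‖T y‖ with hB
  set Cc : ℝ := ‖T (x + y)‖ with hCc
  have hA0 : 0 ≤ A := norm_nonneg _
  have hB0 : 0 ≤ B := norm_nonneg _
  have hC0 : 0 ≤ Cc := norm_nonneg _
  set M : ℝ := A + B + Cc + 1 with hM
  have hM0 : 0 < M := by positivity
  have key : ∀ ε : ℝ, 0 < ε →
      T x ξ₀ + T y ξ₀ - 2 * ε ≤ T (x + y) ξ₀ ∧
      T (x + y) ξ₀ ≤ T x ξ₀ + T y ξ₀ + 2 * ε := by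
    intro ε hε
    -- the open neighborhood V of ξ₀
    set V : Set Y := {ζ | T x ξ₀ - ε < T x ζ ∧ T x ζ < T x ξ₀ + ε ∧
      T y ζ < T y ξ₀ + ε ∧ T (x + y) ζ < T (x + y) ξ₀ + ε} with hVdef
    have hVopen : IsOpen V := by
      have o1 : IsOpen {ζ | T x ξ₀ - ε < T x ζ} :=
        isOpen_lt continuous_const (T x).continuous
      have o2 : IsOpen {ζ | T x ζ < T x ξ₀ + ε} :=
        isOpen_lt (T x).continuous continuous_const
      have o3 : IsOpen {ζ | T y ζ < T y ξ₀ + ε} :=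
        isOpen_lt (T y).continuous continuous_const
      have o4 : IsOpen {ζ | T (x + y) ζ < T (x + y) ξ₀ + ε} :=
        isOpen_lt (T (x + y)).continuous continuous_const
      have : V = {ζ | T x ξ₀ - ε < T x ζ} ∩ ({ζ | T x ζ < T x ξ₀ + ε} ∩
          ({ζ | T y ζ < T y ξ₀ + ε} ∩ {ζ | T (x + y) ζ < T (x + y) ξ₀ + ε})) := by
        ext ζ
        simp only [hVdef, Set.mem_setOf_eq, Set.mem_inter_iff]
      rw [this]
      exact o1.inter (o2.inter (o3.inter o4))
    have hξV : ξ₀ ∈ V := by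
      simp only [hVdef, Set.mem_setOf_eq]
      refine ⟨by linarith, by linarith, by linarith, by linarith⟩
    obtain ⟨κ, hκ0, hκ1, hκξ, hκV⟩ := bump ξ₀ V hVopen hξV
    have hκsmul : ∀ ζ, 0 ≤ (M • κ) ζ := by
      intro ζ
      simp only [ContinuousMap.smul_apply, smul_eq_mul]
      exact mul_nonneg hM0.le (hκ0 ζ)
    obtain ⟨m, hm0, hmT⟩ := hsurj (M • κ) hκsmul
    have hym : ∀ a, 0 ≤ (y + m) a := padd y m hy hm0
    -- G = T (y + m); its norm
    have hGnorm : ‖T (y + m)‖ = ‖T y + M • κ‖ := by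
      rw [hnorm y m hy hm0, hmT]
    -- lower bound for ‖G‖
    have lowG : M + T y ξ₀ ≤ ‖T (y + m)‖ := by
      rw [hGnorm]
      have := norm_eval_le (T y + M • κ) ξ₀
      simp only [ContinuousMap.add_apply, ContinuousMap.smul_apply, smul_eq_mul, hκξ,
        mul_one] at this
      linarith
    -- upper bound for ‖G‖
    have upG : ‖T (y + m)‖ ≤ M + T y ξ₀ + ε := by
      rw [hGnorm]
      refine norm_le_of_le _ _ (by have := hpos y hy ξ₀; linarith)
        (fun ζ => add_nonneg (hpos y hy ζ) (hκsmul ζ)) ?_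
      intro ζ
      by_cases hζ : ζ ∈ V
      · simp only [hVdef, Set.mem_setOf_eq] at hζ
        have hk1 : M * κ ζ ≤ M * 1 := mul_le_mul_of_nonneg_left (hκ1 ζ) hM0.le
        simp only [ContinuousMap.add_apply, ContinuousMap.smul_apply, smul_eq_mul]
        linarith [hζ.2.2.1]
      · have hz : κ ζ = 0 := hκV ζ hζ
        have hb : T y ζ ≤ B := norm_eval_le (T y) ζ
        have h0 : 0 ≤ T y ξ₀ := hpos y hy ξ₀
        simp only [ContinuousMap.add_apply, ContinuousMap.smul_apply, smul_eq_mul, hz,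
          mul_zero, add_zero]
        simp only [hM]
        linarith
    -- the two expressions for ‖T (x + y + m)‖
    have hxyG : ‖T x + T (y + m)‖ = ‖T (x + y) + M • κ‖ := by
      have e1 : ‖T (x + (y + m))‖ = ‖T x + T (y + m)‖ :=
        hnorm x (y + m) hx hym
      have e2 : ‖T ((x + y) + m)‖ = ‖T (x + y) + M • κ‖ := by
        rw [hnorm (x + y) m (padd x y hx hy) hm0, hmT]
      have e3 : x + (y + m) = (x + y) + m := by ring
      rw [← e1, e3, e2]
    -- bounds for ‖T(x+y) + Mκ‖
    have lowPk : M + T (x + y) ξ₀ ≤ ‖T (x + y) + M • κ‖ := by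
      have := norm_eval_le (T (x + y) + M • κ) ξ₀
      simp only [ContinuousMap.add_apply, ContinuousMap.smul_apply, smul_eq_mul, hκξ,
        mul_one] at this
      linarith
    have upPk : ‖T (x + y) + M • κ‖ ≤ M + T (x + y) ξ₀ + ε := by
      refine norm_le_of_le _ _ (by have := hpos (x + y) (padd x y hx hy) ξ₀; linarith)
        (fun ζ => add_nonneg (hpos (x + y) (padd x y hx hy) ζ) (hκsmul ζ)) ?_
      intro ζ
      by_cases hζ : ζ ∈ V
      · simp only [hVdef, Set.mem_setOf_eq] at hζ
        have hk1 : M * κ ζ ≤ M * 1 := mul_le_mul_of_nonneg_left (hκ1 ζ) hM0.le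
        simp only [ContinuousMap.add_apply, ContinuousMap.smul_apply, smul_eq_mul]
        linarith [hζ.2.2.2]
      · have hz : κ ζ = 0 := hκV ζ hζ
        have hb : T (x + y) ζ ≤ Cc := norm_eval_le (T (x + y)) ζ
        have h0 : 0 ≤ T (x + y) ξ₀ := hpos (x + y) (padd x y hx hy) ξ₀
        simp only [ContinuousMap.add_apply, ContinuousMap.smul_apply, smul_eq_mul, hz,
          mul_zero, add_zero]
        simp only [hM]
        linarith
    -- pointwise upper bound of G by the bump (L4)
    have hGbump : ∀ ζ, T (y + m) ζ ≤ M * κ ζ + B := by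
      intro ζ
      have := hL4 m y hm0 hy ζ
      have hc : m + y = y + m := by ring
      rw [hc, hmT] at this
      simpa only [ContinuousMap.smul_apply, smul_eq_mul] using this
    constructor
    · -- SUPERADDITIVITY : T x ξ₀ + T y ξ₀ - 2ε ≤ T (x+y) ξ₀
      obtain ⟨η, hηnorm, hηmax⟩ := exists_peak (T (y + m)) (hpos _ hym) ξ₀
      -- locate the peak η inside V
      have hGη : M + T y ξ₀ ≤ T (y + m) η := by rw [← hηnorm]; exact lowG
      have hκη : 0 < κ η := by
        have h1 := hGbump η
        by_contra hcon
        push_neg at hcon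
        have : κ η = 0 := le_antisymm hcon (hκ0 η)
        rw [this, mul_zero, zero_add] at h1
        have h0 : 0 ≤ T y ξ₀ := hpos y hy ξ₀
        simp only [hM] at hGη h1
        linarith
      have hηV : η ∈ V := by
        by_contra hcon
        have := hκV η hcon
        rw [this] at hκη
        exact lt_irrefl 0 hκη
      simp only [hVdef, Set.mem_setOf_eq] at hηV
      -- combine
      have hlow : (T x ξ₀ - ε) + (M + T y ξ₀) ≤ ‖T x + T (y + m)‖ := by
        have := norm_eval_le (T x + T (y + m)) η
        simp only [ContinuousMap.add_apply] at this
        linarith [hηV.1]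
      rw [hxyG] at hlow
      linarith [upPk]
    · -- SUBADDITIVITY : T (x+y) ξ₀ ≤ T x ξ₀ + T y ξ₀ + 2ε
      obtain ⟨η', hη'norm, _⟩ := exists_peak (T x + T (y + m))
        (fun ζ => add_nonneg (hpos x hx ζ) (hpos _ hym ζ)) ξ₀
      have hval : M + T (x + y) ξ₀ ≤ T x η' + T (y + m) η' := by
        have := lowPk
        rw [← hxyG, hη'norm] at this
        simpa only [ContinuousMap.add_apply] using this
      have hxb : T x η' ≤ A := norm_eval_le (T x) η'
      have hGη' : M - A ≤ T (y + m) η' := by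
        have h0 : 0 ≤ T (x + y) ξ₀ := hpos (x + y) (padd x y hx hy) ξ₀
        linarith
      have hκη' : 0 < κ η' := by
        have h1 := hGbump η'
        by_contra hcon
        push_neg at hcon
        have : κ η' = 0 := le_antisymm hcon (hκ0 η')
        rw [this, mul_zero, zero_add] at h1
        simp only [hM] at hGη' h1
        linarith
      have hη'V : η' ∈ V := by
        by_contra hcon
        have := hκV η' hcon
        rw [this] at hκη'
        exact lt_irrefl 0 hκη'
      simp only [hVdef, Set.mem_setOf_eq] at hη'V
      have hGle : T (y + m) η' ≤ M + T y ξ₀ + ε := by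
        have := norm_eval_le (T (y + m)) η'
        linarith [upG]
      linarith [hη'V.2.1, hval]
  -- conclude from the ε-estimates
  have hle1 : T (x + y) ξ₀ ≤ T x ξ₀ + T y ξ₀ := by
    by_contra hcon
    push_neg at hcon
    have := (key ((T (x + y) ξ₀ - (T x ξ₀ + T y ξ₀)) / 4) (by linarith)).2
    linarith
  have hle2 : T x ξ₀ + T y ξ₀ ≤ T (x + y) ξ₀ := by
    by_contra hcon
    push_neg at hcon
    have := (key (((T x ξ₀ + T y ξ₀) - T (x + y) ξ₀) / 4) (by linarith)).1
    linarith
  linarith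

end Stmt16Aux

theorem stmt_16 {K₁ K₂ : Type*}
    [TopologicalSpace K₁] [CompactSpace K₁] [T2Space K₁]
    [TopologicalSpace K₂] [CompactSpace K₂] [T2Space K₂]
    (T : C(K₁, ℝ) → C(K₂, ℝ))
    (hpos : ∀ f : C(K₁, ℝ), (∀ x, 0 ≤ f x) → ∀ ξ, 0 ≤ T f ξ)
    (hinj : ∀ f g : C(K₁, ℝ), (∀ x, 0 ≤ f x) → (∀ x, 0 ≤ g x) →
      T f = T g → f = g)
    (hsurj : ∀ h : C(K₂, ℝ), (∀ ξ, 0 ≤ h ξ) →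
      ∃ f : C(K₁, ℝ), (∀ x, 0 ≤ f x) ∧ T f = h)
    (hnorm : ∀ f g : C(K₁, ℝ), (∀ x, 0 ≤ f x) → (∀ x, 0 ≤ g x) →
      ‖T (f + g)‖ = ‖T f + T g‖) :
    ∀ f g : C(K₁, ℝ), (∀ x, 0 ≤ f x) → (∀ x, 0 ≤ g x) →
      ((∀ x, f x ≤ g x) ↔ (∀ ξ, T f ξ ≤ T g ξ)) := by
  intro f g hf hg
  constructor
  · -- forward : f ≤ g → T f ≤ T g
    intro hle ξ
    have hd : ∀ a, 0 ≤ (g - f) a := by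
      intro a
      simp only [ContinuousMap.sub_apply]
      linarith [hle a]
    have hfg : f + (g - f) = g := by ring
    have hTadd := Stmt16Aux.Tadd T hpos hsurj hnorm f (g - f) hf hd ξ
    rw [hfg] at hTadd
    have hdp := hpos (g - f) hd ξ
    linarith
  · -- reverse : T f ≤ T g → f ≤ g
    intro hT
    have hk : ∀ ξ, 0 ≤ (T g - T f) ξ := by
      intro ξ
      simp only [ContinuousMap.sub_apply]
      linarith [hT ξ]
    obtain ⟨e, he, heT⟩ := hsurj (T g - T f) hk
    have hfe : T (f + e) = T g := by
      ext ξ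
      have h1 := Stmt16Aux.Tadd T hpos hsurj hnorm f e hf he ξ
      rw [h1, heT]
      simp only [ContinuousMap.sub_apply]
      ring
    have heq := hinj (f + e) g
      (fun a => by simp only [ContinuousMap.add_apply]; exact add_nonneg (hf a) (he a))
      hg hfe
    intro a
    rw [← heq]
    simp only [ContinuousMap.add_apply]
    linarith [he a]
end

section
/- Let K₁ and K₂ be compact Hausdorff spaces and let T : C⁺(K₁) → C⁺(K₂) be a bijective map satisfying ‖T(f+g)‖ = ‖T(f)+T(g)‖ for all f, g ∈ C⁺(K₁). Then T maps the set of strictly positive functions in C⁺(K₁) onto the set of strictly positive functions in C⁺(K₂); that is, T(f) is everywhere strictly positive on K₂ if and only if f is everywhere strictly positive on K₁. -/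
open ContinuousMap Set

namespace Stmt17Helpers

variable {K : Type*} [TopologicalSpace K] [CompactSpace K]

lemma eval_le_norm' (f : C(K, ℝ)) (x : K) : f x ≤ ‖f‖ :=
  (le_abs_self _).trans (by simpa [Real.norm_eq_abs] using f.norm_coe_le_norm x)

lemma norm_le_of_le' {f g : C(K, ℝ)} (hf : ∀ x, 0 ≤ f x) (hfg : ∀ x, f x ≤ g x) :
    ‖f‖ ≤ ‖g‖ := by
  refine (f.norm_le (norm_nonneg g)).2 fun x => ?_
  rw [Real.norm_eq_abs, abs_of_nonneg (hf x)]
  exact (hfg x).trans (eval_le_norm' g x)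

lemma exists_max' [Nonempty K] (f : C(K, ℝ)) : ∃ x, ∀ y, f y ≤ f x := by
  obtain ⟨x, -, hx⟩ := isCompact_univ.exists_isMaxOn univ_nonempty f.continuous.continuousOn
  exact ⟨x, fun y => hx (mem_univ y)⟩

lemma exists_min' [Nonempty K] (f : C(K, ℝ)) : ∃ x, ∀ y, f x ≤ f y := by
  obtain ⟨x, -, hx⟩ := isCompact_univ.exists_isMinOn univ_nonempty f.continuous.continuousOn
  exact ⟨x, fun y => hx (mem_univ y)⟩

lemma norm_eq_of_max' {f : C(K,ℝ)} (hf : ∀ x, 0 ≤ f x) {x : K} (hx : ∀ y, f y ≤ f x) :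
    ‖f‖ = f x := by
  refine le_antisymm ?_ (eval_le_norm' f x)
  refine (f.norm_le (hf x)).2 fun y => ?_
  rw [Real.norm_eq_abs, abs_of_nonneg (hf y)]
  exact hx y

lemma norm_const_add' [Nonempty K] {c : ℝ} (hc : 0 ≤ c) {Y : C(K,ℝ)} (hY : ∀ x, 0 ≤ Y x) :
    ‖ContinuousMap.const K c + Y‖ = c + ‖Y‖ := by
  obtain ⟨x, hx⟩ := exists_max' Y
  have h1 : ‖Y‖ = Y x := norm_eq_of_max' hY hx
  refine le_antisymm ?_ ?_
  · refine ((ContinuousMap.const K c + Y).norm_le (by positivity)).2 fun y => ?_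
    have h2 : Y y ≤ ‖Y‖ := eval_le_norm' Y y
    have h3 : 0 ≤ Y y := hY y
    rw [Real.norm_eq_abs]
    simp only [ContinuousMap.add_apply, ContinuousMap.const_apply]
    rw [abs_of_nonneg (by linarith)]
    linarith
  · have h4 := eval_le_norm' (ContinuousMap.const K c + Y) x
    simp only [ContinuousMap.add_apply, ContinuousMap.const_apply] at h4
    rw [h1]
    linarith

lemma exists_dyadic_btwn' {a b : ℝ} (ha : 0 ≤ a) (hab : a < b) :
    ∃ (m k : ℕ), a < (m:ℝ) / 2^k ∧ (m:ℝ)/2^k < b := by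
  obtain ⟨k, hk⟩ := pow_unbounded_of_one_lt ((b - a)⁻¹) (one_lt_two (α := ℝ))
  have h2k : (0:ℝ) < 2^k := by positivity
  have hba : (0:ℝ) < b - a := by linarith
  have hgap : 1 < 2^k * (b - a) := by
    have h1 : (b - a)⁻¹ * (b - a) = 1 := inv_mul_cancel₀ (ne_of_gt hba)
    nlinarith [hk]
  refine ⟨⌊(2:ℝ)^k * a⌋₊ + 1, k, ?_, ?_⟩
  · rw [lt_div_iff₀ h2k]
    have h2 := Nat.lt_floor_add_one ((2:ℝ)^k * a)
    push_cast
    nlinarith [h2]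
  · rw [div_lt_iff₀ h2k]
    have hfl : (⌊(2:ℝ)^k * a⌋₊ : ℝ) ≤ 2^k * a := Nat.floor_le (by positivity)
    push_cast
    nlinarith [hfl, hgap]

end Stmt17Helpers

open Stmt17Helpers

theorem stmt_17 {K₁ K₂ : Type*}
    [TopologicalSpace K₁] [CompactSpace K₁] [T2Space K₁]
    [TopologicalSpace K₂] [CompactSpace K₂] [T2Space K₂]
    (T : C(K₁, ℝ) → C(K₂, ℝ))
    (hpos : ∀ f : C(K₁, ℝ), (∀ x, 0 ≤ f x) → ∀ ξ, 0 ≤ T f ξ)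
    (hinj : ∀ f g : C(K₁, ℝ), (∀ x, 0 ≤ f x) → (∀ x, 0 ≤ g x) →
      T f = T g → f = g)
    (hsurj : ∀ h : C(K₂, ℝ), (∀ ξ, 0 ≤ h ξ) →
      ∃ f : C(K₁, ℝ), (∀ x, 0 ≤ f x) ∧ T f = h)
    (hnorm : ∀ f g : C(K₁, ℝ), (∀ x, 0 ≤ f x) → (∀ x, 0 ≤ g x) →
      ‖T (f + g)‖ = ‖T f + T g‖) :
    ∀ f : C(K₁, ℝ), (∀ x, 0 ≤ f x) →
      ((∀ ξ, 0 < T f ξ) ↔ (∀ x, 0 < f x)) := by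
  -- `T 0 = 0`
  have hT0 : T 0 = 0 := by
    have h := hnorm 0 0 (fun x => le_refl 0) (fun x => le_refl 0)
    rw [add_zero] at h
    have h2 : ‖T 0 + T 0‖ = 2 * ‖T 0‖ := by
      rw [← two_smul ℝ (T 0), norm_smul]
      simp
    have h3 : ‖T 0‖ = 0 := by linarith [h, h2]
    exact norm_eq_zero.mp h3
  intro f hf
  by_cases hK2 : Nonempty K₂
  swap
  · -- K₂ is empty, hence K₁ is empty
    have hT10 : T 1 = T 0 := by
      ext ξ
      exact absurd ⟨ξ⟩ hK2
    have h10 : (1 : C(K₁,ℝ)) = 0 :=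
      hinj 1 0 (fun x => by simp) (fun x => le_refl 0) hT10
    constructor
    · intro _ x
      have := ContinuousMap.congr_fun h10 x
      simp at this
    · intro _ ξ
      exact absurd ⟨ξ⟩ hK2
  haveI := hK2
  -- K₁ is nonempty
  have hK1 : Nonempty K₁ := by
    by_contra hK1
    obtain ⟨f₀, hf₀, hTf₀⟩ := hsurj 1 (fun ξ => by simp)
    have hf00 : f₀ = 0 := by
      ext x
      exact absurd ⟨x⟩ hK1
    rw [hf00, hT0] at hTf₀
    obtain ⟨ξ⟩ := hK2
    have := ContinuousMap.congr_fun hTf₀ ξ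
    simp at this
  haveI := hK1
  -- pointwise comparison characterization via bumps on K₂
  have char : ∀ A B : C(K₂,ℝ), (∀ ξ, 0 ≤ B ξ) →
      (∀ v : C(K₁,ℝ), (∀ x, 0 ≤ v x) → ‖A + T v‖ ≤ ‖B + T v‖) → ∀ ξ, A ξ ≤ B ξ := by
    intro A B hB H ξ₁
    by_contra hlt
    push_neg at hlt
    set ε := (A ξ₁ - B ξ₁)/2 with hε
    have hεpos : 0 < ε := by simp [hε]; linarith
    set V := {ξ | B ξ < B ξ₁ + ε} with hV
    have hVopen : IsOpen V := isOpen_lt B.continuous continuous_const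
    have hx₁V : ξ₁ ∈ V := by simp [hV]; linarith
    obtain ⟨γ, hγ0, hγ1, hγ01⟩ := exists_continuous_zero_one_of_isClosed
      hVopen.isClosed_compl isClosed_singleton
      (Set.disjoint_singleton_right.2 (by simpa using hx₁V))
    set M := ‖B‖ + 1 with hM
    have hMpos : 0 < M := by positivity
    obtain ⟨v, hv, hTv⟩ := hsurj (M • γ) (fun ξ => by
      have := (hγ01 ξ).1
      simp only [ContinuousMap.smul_apply, smul_eq_mul]
      positivity)
    have hγξ₁ : γ ξ₁ = 1 := hγ1 (mem_singleton ξ₁)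
    have h1 : A ξ₁ + M ≤ ‖A + T v‖ := by
      rw [hTv]
      have := eval_le_norm' (A + M • γ) ξ₁
      simpa [hγξ₁] using this
    have h2 : ‖B + T v‖ ≤ B ξ₁ + ε + M := by
      rw [hTv]
      refine ((B + M • γ).norm_le (by have := hB ξ₁; linarith)).2 fun ξ => ?_
      have hγnn := (hγ01 ξ).1
      have hγle := (hγ01 ξ).2
      rw [Real.norm_eq_abs]
      simp only [ContinuousMap.add_apply, ContinuousMap.smul_apply, smul_eq_mul]
      rw [abs_of_nonneg (by have := hB ξ; positivity)]
      by_cases hmem : ξ ∈ V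
      · have hBξ : B ξ < B ξ₁ + ε := hmem
        nlinarith
      · have hγ0' : γ ξ = 0 := hγ0 hmem
        have hBn : B ξ ≤ ‖B‖ := eval_le_norm' B ξ
        have hB1 : 0 ≤ B ξ₁ := hB ξ₁
        rw [hγ0']
        simp only [mul_zero, add_zero]
        simp only [hM]
        linarith
    have h3 := H v hv
    simp only [hε] at hεpos h1 h2
    linarith
  -- monotonicity of T
  have mono : ∀ g h : C(K₁,ℝ), (∀ x, 0 ≤ g x) → (∀ x, 0 ≤ h x) → (∀ x, g x ≤ h x) →
      ∀ ξ, T g ξ ≤ T h ξ := by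
    intro g h hg hh hgh
    refine char (T g) (T h) (hpos h hh) ?_
    intro v hv
    rw [← hnorm g v hg hv, ← hnorm h v hh hv]
    have hd : ∀ x, 0 ≤ (h - g) x := fun x => by
      simp only [ContinuousMap.sub_apply]; linarith [hgh x]
    have hgv : ∀ x, 0 ≤ (g + v) x := fun x => by
      simp only [ContinuousMap.add_apply]; have := hg x; have := hv x; linarith
    have e4 : (g + v) + (h - g) = h + v := by ring
    calc ‖T (g + v)‖ ≤ ‖T (g + v) + T (h - g)‖ := by
          refine norm_le_of_le' (hpos _ hgv) fun ξ => ?_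
          simp only [ContinuousMap.add_apply]
          have := hpos _ hd ξ
          linarith
      _ = ‖T ((g + v) + (h - g))‖ := (hnorm _ _ hgv hd).symm
      _ = ‖T (h + v)‖ := by rw [e4]
  -- u-rule : adding a preimage of a constant adds that constant
  have urule : ∀ (c : ℝ), 0 ≤ c → ∀ (w : C(K₁,ℝ)), (∀ x, 0 ≤ w x) →
      T w = ContinuousMap.const K₂ c →
      ∀ X : C(K₁,ℝ), (∀ x, 0 ≤ X x) → T (X + w) = T X + ContinuousMap.const K₂ c := by
    intro c hc w hw hTw X hX
    have hXw : ∀ x, 0 ≤ (X + w) x := fun x => by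
      simp only [ContinuousMap.add_apply]; have := hX x; have := hw x; linarith
    have key : ∀ v : C(K₁,ℝ), (∀ x, 0 ≤ v x) →
        ‖T (X + w) + T v‖ = ‖(T X + ContinuousMap.const K₂ c) + T v‖ := by
      intro v hv
      have hXv : ∀ x, 0 ≤ (X + v) x := fun x => by
        simp only [ContinuousMap.add_apply]; have := hX x; have := hv x; linarith
      have e0 : (X + w) + v = w + (X + v) := by ring
      have e1 : ‖T (X + w) + T v‖ = ‖T w + T (X + v)‖ := by
        rw [← hnorm (X + w) v hXw hv, ← hnorm w (X + v) hw hXv, e0]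
      rw [e1, hTw]
      have e2 : T X + ContinuousMap.const K₂ c + T v
          = ContinuousMap.const K₂ c + (T X + T v) := by ring
      have hTXv : ∀ ξ, 0 ≤ (T X + T v) ξ := fun ξ => by
        simp only [ContinuousMap.add_apply]
        have := hpos X hX ξ; have := hpos v hv ξ; linarith
      rw [e2, norm_const_add' hc (hpos _ hXv), norm_const_add' hc hTXv,
        hnorm X v hX hv]
    have hBnn : ∀ ξ, 0 ≤ (T X + ContinuousMap.const K₂ c) ξ := fun ξ => by
      simp only [ContinuousMap.add_apply, ContinuousMap.const_apply]
      have := hpos X hX ξ; linarith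
    have le1 := char (T (X + w)) (T X + ContinuousMap.const K₂ c) hBnn
      (fun v hv => le_of_eq (key v hv))
    have le2 := char (T X + ContinuousMap.const K₂ c) (T (X + w)) (hpos _ hXw)
      (fun v hv => le_of_eq (key v hv).symm)
    ext ξ
    exact le_antisymm (le1 ξ) (le2 ξ)
  -- iterated u-rule for natural multiples
  have natrule : ∀ (c : ℝ), 0 ≤ c → ∀ (w : C(K₁,ℝ)), (∀ x, 0 ≤ w x) →
      T w = ContinuousMap.const K₂ c → ∀ (n : ℕ) (X : C(K₁,ℝ)), (∀ x, 0 ≤ X x) →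
      T (X + (n:ℝ) • w) = T X + ContinuousMap.const K₂ ((n:ℝ) * c) := by
    intro c hc w hw hTw n
    induction n with
    | zero =>
      intro X hX
      have e : ContinuousMap.const K₂ (((0:ℕ):ℝ) * c) = 0 := by
        ext ξ; simp
      rw [e]
      simp
    | succ n ih =>
      intro X hX
      have hXw : ∀ x, 0 ≤ (X + w) x := fun x => by
        simp only [ContinuousMap.add_apply]; have := hX x; have := hw x; linarith
      have e1 : X + ((n+1:ℕ):ℝ) • w = (X + w) + (n:ℝ) • w := by
        push_cast
        module
      rw [e1, ih (X + w) hXw, urule c hc w hw hTw X hX]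
      have e2 : ContinuousMap.const K₂ c + ContinuousMap.const K₂ ((n:ℝ) * c)
          = ContinuousMap.const K₂ (((n+1:ℕ):ℝ) * c) := by
        ext ξ
        simp only [ContinuousMap.add_apply, ContinuousMap.const_apply]
        push_cast
        ring
      rw [add_assoc, e2]
  -- peel off a constant from below
  have peel : ∀ (c : ℝ), 0 ≤ c → ∀ (w : C(K₁,ℝ)), (∀ x, 0 ≤ w x) →
      T w = ContinuousMap.const K₂ c → ∀ (g : C(K₁,ℝ)), (∀ x, 0 ≤ g x) →
      (∀ ξ, c ≤ T g ξ) → ∀ x, w x ≤ g x := by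
    intro c hc w hw hTw g hg hcg
    obtain ⟨g', hg', hTg'⟩ := hsurj (T g - ContinuousMap.const K₂ c) (fun ξ => by
      simp only [ContinuousMap.sub_apply, ContinuousMap.const_apply]
      linarith [hcg ξ])
    have hgw : T (g' + w) = T g := by
      rw [urule c hc w hw hTw g' hg', hTg']
      ring
    have hg'w : ∀ x, 0 ≤ (g' + w) x := fun x => by
      simp only [ContinuousMap.add_apply]; have := hg' x; have := hw x; linarith
    have heq := hinj (g' + w) g hg'w hg hgw
    intro x
    have := ContinuousMap.congr_fun heq x
    simp only [ContinuousMap.add_apply] at this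
    have := hg' x
    linarith
  -- fix u₁, a preimage of the constant 1
  obtain ⟨u₁, hu₁pos, hTu₁⟩ := hsurj (ContinuousMap.const K₂ 1) (fun ξ => by simp)
  -- preimages of dyadic constants are dyadic multiples of u₁
  have uscale : ∀ (m k : ℕ), T (((m:ℝ)/2^k) • u₁) = ContinuousMap.const K₂ ((m:ℝ)/2^k) := by
    intro m k
    have hq : (0:ℝ) ≤ (m:ℝ)/2^k := by positivity
    obtain ⟨w, hwpos, hTw⟩ := hsurj (ContinuousMap.const K₂ ((m:ℝ)/2^k)) (fun ξ => by
      simpa using hq)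
    have h2k : ((2:ℝ)^k) ≠ 0 := by positivity
    have hzero : ∀ x, (0:ℝ) ≤ (0 : C(K₁,ℝ)) x := fun x => le_refl 0
    have h1 : T ((0:C(K₁,ℝ)) + ((2^k : ℕ):ℝ) • w)
        = T 0 + ContinuousMap.const K₂ (((2^k:ℕ):ℝ) * ((m:ℝ)/2^k)) :=
      natrule _ hq w hwpos hTw (2^k) 0 hzero
    have h2 : T ((0:C(K₁,ℝ)) + ((m:ℕ):ℝ) • u₁)
        = T 0 + ContinuousMap.const K₂ (((m:ℕ):ℝ) * 1) :=
      natrule 1 zero_le_one u₁ hu₁pos hTu₁ m 0 hzero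
    have e1 : (((2^k:ℕ):ℝ)) * ((m:ℝ)/2^k) = ((m:ℕ):ℝ) * 1 := by
      field_simp
      push_cast
      ring
    have hsm1 : ∀ x, 0 ≤ ((0:C(K₁,ℝ)) + ((2^k : ℕ):ℝ) • w) x := fun x => by
      simp only [ContinuousMap.add_apply, ContinuousMap.smul_apply, smul_eq_mul,
        ContinuousMap.zero_apply, zero_add]
      exact mul_nonneg (by positivity) (hwpos x)
    have hsm2 : ∀ x, 0 ≤ ((0:C(K₁,ℝ)) + ((m : ℕ):ℝ) • u₁) x := fun x => by
      simp only [ContinuousMap.add_apply, ContinuousMap.smul_apply, smul_eq_mul,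
        ContinuousMap.zero_apply, zero_add]
      exact mul_nonneg (by positivity) (hu₁pos x)
    have heq : (0:C(K₁,ℝ)) + ((2^k : ℕ):ℝ) • w = (0:C(K₁,ℝ)) + ((m:ℕ):ℝ) • u₁ := by
      refine hinj _ _ hsm1 hsm2 ?_
      rw [h1, h2, e1]
    have heq2 : ((2:ℝ)^k) • w = ((m:ℕ):ℝ) • u₁ := by
      have := heq
      simp only [zero_add] at this
      convert this using 2
      push_cast
      ring
    have hw_eq : w = ((m:ℝ)/2^k) • u₁ := by
      calc w = ((2:ℝ)^k)⁻¹ • (((2:ℝ)^k) • w) := by rw [inv_smul_smul₀ h2k]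
        _ = ((2:ℝ)^k)⁻¹ • (((m:ℕ):ℝ) • u₁) := by rw [heq2]
        _ = ((m:ℝ)/2^k) • u₁ := by
            rw [smul_smul]
            congr 1
            field_simp
    rw [← hw_eq]
    exact hTw
  have hsmulpos : ∀ (q : ℝ), 0 ≤ q → ∀ x, 0 ≤ (q • u₁) x := fun q hq x => by
    simp only [ContinuousMap.smul_apply, smul_eq_mul]
    exact mul_nonneg hq (hu₁pos x)
  -- the constant-one function on K₁ and a natural number bound
  set onef : C(K₁,ℝ) := ContinuousMap.const K₁ 1 with honef
  have honepos : ∀ x, 0 ≤ onef x := fun x => by simp [honef]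
  obtain ⟨L, hL⟩ := exists_nat_gt ‖T onef‖
  have hLpos : (0:ℝ) < L := lt_of_le_of_lt (norm_nonneg _) hL
  have hTuL : T ((L:ℝ) • u₁) = ContinuousMap.const K₂ (L:ℝ) := by
    have := uscale L 0
    simpa using this
  set δ₀ : ℝ := 1/(2*(L:ℝ)) with hδ₀
  have hδ₀pos : 0 < δ₀ := by rw [hδ₀]; positivity
  -- wherever u₁ is positive it is at least δ₀
  have key8 : ∀ x₁, 0 < u₁ x₁ → δ₀ ≤ u₁ x₁ := by
    intro x₁ hx₁
    by_contra hcon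
    push_neg at hcon
    have hB : (L:ℝ) < 1/(2 * u₁ x₁) := by
      rw [lt_div_iff₀ (by positivity)]
      rw [hδ₀] at hcon
      rw [lt_div_iff₀ (by positivity)] at hcon
      linarith
    obtain ⟨m, k, hqL, hqB⟩ := exists_dyadic_btwn' (Nat.cast_nonneg L) hB
    set q : ℝ := (m:ℝ)/2^k with hq
    have hq0 : 0 < q := lt_of_le_of_lt (Nat.cast_nonneg L) hqL
    have hTuq : T (q • u₁) = ContinuousMap.const K₂ q := uscale m k
    set V := {x | u₁ x < 2 * u₁ x₁} with hV
    have hVo : IsOpen V := isOpen_lt u₁.continuous (continuous_const.mul continuous_const)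
    have hx₁V : x₁ ∈ V := by simp [hV]; linarith
    obtain ⟨γ, hγ0, hγ1, hγ01⟩ := exists_continuous_zero_one_of_isClosed
      hVo.isClosed_compl isClosed_singleton
      (Set.disjoint_singleton_right.2 (by simpa using hx₁V))
    set R : ℝ := q * ‖u₁‖ with hR
    have hRpos : 0 ≤ R := by
      rw [hR]; exact mul_nonneg hq0.le (norm_nonneg _)
    set w : C(K₁,ℝ) := R • (onef - γ) with hw
    have hwpos : ∀ x, 0 ≤ w x := fun x => by
      simp only [hw, ContinuousMap.smul_apply, ContinuousMap.sub_apply, smul_eq_mul, honef,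
        ContinuousMap.const_apply]
      have := (hγ01 x).2
      have h0 : 0 ≤ 1 - γ x := by linarith
      exact mul_nonneg hRpos h0
    have hγx₁ : γ x₁ = 1 := hγ1 (mem_singleton x₁)
    have hwx₁ : w x₁ = 0 := by
      simp [hw, honef, hγx₁]
    -- claim 1 : q • u₁ ≤ onef + w
    have hclaim1 : ∀ x, (q • u₁) x ≤ (onef + w) x := by
      intro x
      simp only [ContinuousMap.smul_apply, ContinuousMap.add_apply, smul_eq_mul]
      by_cases hxV : x ∈ V
      · have h1 : u₁ x < 2 * u₁ x₁ := hxV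
        have h2 : q * u₁ x ≤ q * (2 * u₁ x₁) :=
          mul_le_mul_of_nonneg_left h1.le hq0.le
        have h3 : q * (2 * u₁ x₁) < 1 := by
          have hq2 : q < 1/(2 * u₁ x₁) := hqB
          have := (lt_div_iff₀ (show (0:ℝ) < 2 * u₁ x₁ by positivity)).mp hq2
          linarith
        have := hwpos x
        simp only [honef, ContinuousMap.const_apply]
        linarith
      · have hγx : γ x = 0 := hγ0 hxV
        have h1 : u₁ x ≤ ‖u₁‖ := eval_le_norm' u₁ x
        have h2 : q * u₁ x ≤ R := by
          rw [hR]; exact mul_le_mul_of_nonneg_left h1 hq0.le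
        simp only [hw, honef, ContinuousMap.smul_apply, ContinuousMap.sub_apply,
          ContinuousMap.const_apply, smul_eq_mul, hγx]
        linarith
    have honew : ∀ x, 0 ≤ (onef + w) x := fun x => by
      simp only [ContinuousMap.add_apply]
      have := honepos x; have := hwpos x; linarith
    -- claim 2 : const q ≤ T (onef + w)
    have hclaim2 : ∀ ξ, q ≤ T (onef + w) ξ := by
      intro ξ
      have := mono (q • u₁) (onef + w) (hsmulpos q hq0.le) honew hclaim1 ξ
      rw [hTuq] at this
      simpa using this
    -- claim 3 : T (onef + w) ≤ T ((L:ℝ)•u₁ + w)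
    have hLw : ∀ x, 0 ≤ ((L:ℝ) • u₁ + w) x := fun x => by
      simp only [ContinuousMap.add_apply]
      have := hsmulpos (L:ℝ) hLpos.le x; have := hwpos x; linarith
    have hclaim3 : ∀ ξ, T (onef + w) ξ ≤ T ((L:ℝ) • u₁ + w) ξ := by
      refine char _ _ (hpos _ hLw) ?_
      intro v hv
      have hwv : ∀ x, 0 ≤ (w + v) x := fun x => by
        simp only [ContinuousMap.add_apply]
        have := hwpos x; have := hv x; linarith
      have e1 : (onef + w) + v = onef + (w + v) := by ring
      have e2 : ((L:ℝ) • u₁ + w) + v = (L:ℝ) • u₁ + (w + v) := by ring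
      rw [← hnorm (onef + w) v honew hv, ← hnorm ((L:ℝ)•u₁ + w) v hLw hv, e1, e2,
        hnorm onef (w + v) honepos hwv, hnorm ((L:ℝ)•u₁) (w + v) (hsmulpos _ hLpos.le) hwv]
      refine norm_le_of_le' (fun ξ => by
        simp only [ContinuousMap.add_apply]
        have := hpos onef honepos ξ; have := hpos (w+v) hwv ξ; linarith) fun ξ => ?_
      simp only [ContinuousMap.add_apply]
      have h1 : T onef ξ ≤ (L:ℝ) := le_trans (eval_le_norm' _ ξ) hL.le
      have h2 : T ((L:ℝ)•u₁) ξ = (L:ℝ) := by rw [hTuL]; simp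
      linarith
    -- peel and contradiction
    have hpe := peel q hq0.le (q • u₁) (hsmulpos q hq0.le) hTuq ((L:ℝ) • u₁ + w) hLw
      (fun ξ => le_trans (hclaim2 ξ) (hclaim3 ξ))
    have := hpe x₁
    simp only [ContinuousMap.smul_apply, ContinuousMap.add_apply, smul_eq_mul, hwx₁] at this
    have hqgtL : (L:ℝ) < q := hqL
    nlinarith [hx₁]
  -- the zero set of u₁ is empty
  have upos : ∀ x, δ₀ ≤ u₁ x := by
    by_contra hcon
    push_neg at hcon
    obtain ⟨x₀, hx₀⟩ := hcon
    have hx₀0 : u₁ x₀ = 0 := by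
      rcases (hu₁pos x₀).eq_or_lt with h | h
      · exact h.symm
      · exact absurd (key8 x₀ h) (not_le.mpr hx₀)
    -- Urysohn separating {δ₀ ≤ u₁} from {u₁ ≤ 0}
    have hSclosed : IsClosed {x | δ₀ ≤ u₁ x} := isClosed_le continuous_const u₁.continuous
    have hZclosed : IsClosed {x | u₁ x ≤ 0} := isClosed_le u₁.continuous continuous_const
    have hdisj : Disjoint {x | δ₀ ≤ u₁ x} {x | u₁ x ≤ 0} := by
      rw [Set.disjoint_left]
      intro a ha ha'
      simp only [mem_setOf_eq] at ha ha'
      linarith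
    obtain ⟨e, he0, he1, hemem⟩ := exists_continuous_zero_one_of_isClosed
      hSclosed hZclosed hdisj
    have hepos : ∀ x, 0 ≤ e x := fun x => (hemem x).1
    have hene : e ≠ 0 := by
      intro h
      have h1 : e x₀ = 1 := he1 (by simp [hx₀0])
      rw [h] at h1
      simp at h1
    have hTene : T e ≠ 0 := by
      intro h
      exact hene (hinj e 0 hepos (fun x => le_refl 0) (h.trans hT0.symm))
    set ε₀ : ℝ := ‖T e‖ with hε₀
    have hε₀pos : 0 < ε₀ := norm_pos_iff.2 hTene
    obtain ⟨ξ', hξ'⟩ := exists_max' (T e)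
    have hTeξ' : T e ξ' = ε₀ := (norm_eq_of_max' (hpos e hepos) hξ').symm
    obtain ⟨g', hg'pos, hTg'⟩ := hsurj (ContinuousMap.const K₂ ε₀ - T e) (fun ξ => by
      simp only [ContinuousMap.sub_apply, ContinuousMap.const_apply]
      linarith [eval_le_norm' (T e) ξ])
    have hg'e : ∀ x, 0 ≤ (g' + e) x := fun x => by
      simp only [ContinuousMap.add_apply]
      have := hg'pos x; have := hepos x; linarith
    -- T (g' + e) is bounded below by ε₀/2
    have hG : ∀ ξ, ε₀/2 ≤ T (g' + e) ξ := by
      intro ξ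
      have h1 := mono g' (g' + e) hg'pos hg'e (fun x => by
        simp only [ContinuousMap.add_apply]; have := hepos x; linarith) ξ
      have h2 := mono e (g' + e) hepos hg'e (fun x => by
        simp only [ContinuousMap.add_apply]; have := hg'pos x; linarith) ξ
      rw [hTg'] at h1
      simp only [ContinuousMap.sub_apply, ContinuousMap.const_apply] at h1
      rcases le_or_gt (T e ξ) (ε₀/2) with h | h
      · linarith
      · linarith
    obtain ⟨m, k, hq0, hqh⟩ := exists_dyadic_btwn' (le_refl (0:ℝ)) (by positivity : (0:ℝ) < ε₀/2)
    set q : ℝ := (m:ℝ)/2^k with hq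
    have hTuq : T (q • u₁) = ContinuousMap.const K₂ q := uscale m k
    have hple := peel q hq0.le (q • u₁) (hsmulpos q hq0.le) hTuq (g' + e) hg'e
      (fun ξ => le_trans hqh.le (hG ξ))
    have hgq : ∀ x, (q • u₁) x ≤ g' x := by
      intro x
      rcases le_or_gt δ₀ (u₁ x) with hx | hx
      · have hex : e x = 0 := he0 hx
        have := hple x
        simp only [ContinuousMap.add_apply, hex, add_zero] at this
        exact this
      · have hu0 : u₁ x = 0 := by
          rcases (hu₁pos x).eq_or_lt with h | h
          · exact h.symm
          · exact absurd (key8 x h) (not_le.mpr hx)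
        simp only [ContinuousMap.smul_apply, smul_eq_mul, hu0, mul_zero]
        exact hg'pos x
    have hfin : ∀ ξ, q ≤ T g' ξ := by
      intro ξ
      have := mono (q • u₁) g' (hsmulpos q hq0.le) hg'pos hgq ξ
      rw [hTuq] at this
      simpa using this
    have h0 := hfin ξ'
    rw [hTg'] at h0
    simp only [ContinuousMap.sub_apply, ContinuousMap.const_apply, hTeξ'] at h0
    linarith
  -- final assembly
  constructor
  · -- T f strictly positive → f strictly positive
    intro hTf x
    obtain ⟨ξ₀, hξ₀⟩ := exists_min' (T f)
    have hc : 0 < T f ξ₀ := hTf ξ₀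
    obtain ⟨m, k, hq0, hqc⟩ := exists_dyadic_btwn' (le_refl (0:ℝ)) hc
    set q : ℝ := (m:ℝ)/2^k with hq
    have hTuq : T (q • u₁) = ContinuousMap.const K₂ q := uscale m k
    have hple := peel q hq0.le (q • u₁) (hsmulpos q hq0.le) hTuq f hf
      (fun ξ => le_trans hqc.le (hξ₀ ξ))
    have h1 := hple x
    simp only [ContinuousMap.smul_apply, smul_eq_mul] at h1
    have h2 := upos x
    nlinarith [hδ₀pos, hq0]
  · -- f strictly positive → T f strictly positive
    intro hf' ξ
    obtain ⟨x₀, hx₀⟩ := exists_min' f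
    have hc₁ : 0 < f x₀ := hf' x₀
    have hnu : 0 < ‖u₁‖ := by
      obtain ⟨x⟩ := hK1
      have := upos x
      have := eval_le_norm' u₁ x
      linarith
    obtain ⟨m, k, hq0, hqb⟩ := exists_dyadic_btwn' (le_refl (0:ℝ))
      (div_pos hc₁ hnu)
    set q : ℝ := (m:ℝ)/2^k with hq
    have hTuq : T (q • u₁) = ContinuousMap.const K₂ q := uscale m k
    have hle : ∀ x, (q • u₁) x ≤ f x := by
      intro x
      simp only [ContinuousMap.smul_apply, smul_eq_mul]
      have h1 : u₁ x ≤ ‖u₁‖ := eval_le_norm' u₁ x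
      have h2 : q * u₁ x ≤ q * ‖u₁‖ := mul_le_mul_of_nonneg_left h1 hq0.le
      have h3 : q * ‖u₁‖ < f x₀ := by
        have := (lt_div_iff₀ hnu).mp hqb
        linarith
      have := hx₀ x
      linarith
    have := mono (q • u₁) f (hsmulpos q hq0.le) hf hle ξ
    rw [hTuq] at this
    simp only [ContinuousMap.const_apply] at this
    linarith
end
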